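/- arXiv:1910.10873 — 8 statements merged into one kernel-verified Lean document; each statement's English description precedes it below -/
import Mathlib

section
/- For every dimension n ≥ 2 and all integers T ≥ K ≥ 1, the minimax regret of switching-constrained online linear optimization over the Euclidean unit ball satisfies R_n(T,K) ≥ T/√K. -/
open scoped Classical

/-- The increment in the number of switches when the player, whose previous action is
`last` (`none` at the first round), plays `x`. -/
noncomputable def switchIncE {n : ℕ} (last : Option (EuclideanSpace ℝ (Fin n)))
    (x : EuclideanSpace ℝ (Fin n)) : ℕ :=
  match last with
  | none => 0
  | some y => if x = y then 0 else 1

/-- Backward-recursive value of the switching-constrained online linear optimization game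
over the Euclidean unit ball of `ℝⁿ`: `gameValE n K t last s W` is the value of the game
with `t` rounds remaining, previous player action `last`, `s` switches used so far, and
accumulated adversary sum `W`.  The player's infimum ranges only over actions in the
closed Euclidean unit ball keeping the total number of switches strictly below `K`
(equivalently, the payoff is `+∞` as soon as `K` switches are reached), the adversary's
supremum ranges over the closed Euclidean unit ball, and at the end the comparator term
`‖∑ wᵢ‖₂` is added. -/
noncomputable def gameValE (n K : ℕ) :
    ℕ → Option (EuclideanSpace ℝ (Fin n)) → ℕ → EuclideanSpace ℝ (Fin n) → ℝ
  | 0, _, _, W => ‖W‖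
  | t + 1, last, s, W =>
      sInf ((fun x : EuclideanSpace ℝ (Fin n) =>
        sSup ((fun w : EuclideanSpace ℝ (Fin n) =>
          (inner ℝ w x : ℝ) + gameValE n K t (some x) (s + switchIncE last x) (W + w)) ''
          {w : EuclideanSpace ℝ (Fin n) | ‖w‖ ≤ 1})) ''
        {x : EuclideanSpace ℝ (Fin n) | ‖x‖ ≤ 1 ∧ s + switchIncE last x < K})

/-- `R_n(T,K)`: the minimax regret of `T`-round switching-constrained online linear
optimization over the Euclidean unit ball of `ℝⁿ` with fewer than `K` switches. -/
noncomputable def RE (n T K : ℕ) : ℝ := gameValE n K T none 0 0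

/-! ### Auxiliary development for the lower bound -/

/-- The adversary's potential function. -/
noncomputable def Fv (t : ℕ) (a : ℝ) (m : ℕ) : ℝ :=
  if m ≤ 1 then 2*a*t + (t:ℝ)^2
  else (Finset.range (t+1)).inf' ⟨0, Finset.mem_range.2 (Nat.succ_pos t)⟩
    (fun ℓ => 2*a*ℓ + (ℓ:ℝ)^2 + ((t:ℝ) - ℓ)^2 / ((m:ℝ) - 1))

lemma cs_ineq (p q c : ℝ) (hc : 2 ≤ c) (hp : 0 ≤ p) (hq : 0 ≤ q) :
    (p + q)^2 / c ≤ p^2 + q^2 / (c - 1) := by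
  have h1 : (0:ℝ) < c - 1 := by linarith
  have h2 : (0:ℝ) < c := by linarith
  rw [div_le_iff₀ h2]
  have hr : q^2 = q^2/(c-1) * (c-1) := (div_mul_cancel₀ _ h1.ne').symm
  have hr0 : 0 ≤ q^2/(c-1) := div_nonneg (sq_nonneg q) h1.le
  nlinarith [sq_nonneg ((c-1)*p - q), hr, hr0, hp, hq, h1]

lemma Fv_zero (a : ℝ) (m : ℕ) : Fv 0 a m = 0 := by
  unfold Fv; split <;> simp

lemma Fv_ge_sq (t : ℕ) (a : ℝ) (m : ℕ) (ha : 0 ≤ a) (hm : 1 ≤ m) :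
    (t:ℝ)^2 / m ≤ Fv t a m := by
  unfold Fv
  split
  · have : m = 1 := by omega
    subst this
    have ht : (0:ℝ) ≤ t := Nat.cast_nonneg t
    simp only [Nat.cast_one, div_one]
    nlinarith
  · rename_i h
    have hm2 : 2 ≤ m := by omega
    apply Finset.le_inf'
    intro ℓ hℓ
    have hℓt : ℓ ≤ t := by simpa [Nat.lt_succ_iff] using Finset.mem_range.1 hℓ
    have hℓt' : (ℓ:ℝ) ≤ t := Nat.cast_le.2 hℓt
    have h1 : (2:ℝ) ≤ m := by exact_mod_cast hm2
    have := cs_ineq (ℓ:ℝ) ((t:ℝ) - ℓ) (m:ℝ) h1 (Nat.cast_nonneg ℓ) (by linarith)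
    have hl : (ℓ:ℝ) + ((t:ℝ) - ℓ) = t := by ring
    rw [hl] at this
    nlinarith [mul_nonneg ha (Nat.cast_nonneg ℓ : (0:ℝ) ≤ ℓ)]

lemma Fv_ge_shift (t : ℕ) (a : ℝ) (m : ℕ) (ha : 0 ≤ a) (hm : 1 ≤ m) :
    (a + t)^2 / m ≤ a^2 + Fv t a m := by
  unfold Fv
  split
  · have : m = 1 := by omega
    subst this
    simp only [Nat.cast_one, div_one]
    nlinarith
  · rename_i h
    have hm2 : 2 ≤ m := by omega
    obtain ⟨ℓ, hℓ, heq⟩ := Finset.exists_mem_eq_inf' (⟨0, Finset.mem_range.2 (Nat.succ_pos t)⟩ :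
      (Finset.range (t+1)).Nonempty) (fun ℓ => 2*a*ℓ + (ℓ:ℝ)^2 + ((t:ℝ) - ℓ)^2 / ((m:ℝ) - 1))
    rw [heq]
    have hℓt : ℓ ≤ t := by simpa [Nat.lt_succ_iff] using Finset.mem_range.1 hℓ
    have hℓt' : (ℓ:ℝ) ≤ t := Nat.cast_le.2 hℓt
    have h1 : (2:ℝ) ≤ m := by exact_mod_cast hm2
    have := cs_ineq (a + ℓ) ((t:ℝ) - ℓ) (m:ℝ) h1
      (by positivity) (by linarith)
    have hl : (a + ℓ) + ((t:ℝ) - ℓ) = a + t := by ring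
    rw [hl] at this
    nlinarith

lemma Fv_step (t : ℕ) (a : ℝ) (m : ℕ) :
    Fv (t+1) a m ≤ 2*a + 1 + Fv t (a+1) m := by
  unfold Fv
  split
  · push_cast; ring_nf; rfl
  · rename_i h
    obtain ⟨ℓ, hℓ, heq⟩ := Finset.exists_mem_eq_inf' (⟨0, Finset.mem_range.2 (Nat.succ_pos t)⟩ :
      (Finset.range (t+1)).Nonempty) (fun ℓ => 2*(a+1)*ℓ + (ℓ:ℝ)^2 + ((t:ℝ) - ℓ)^2 / ((m:ℝ) - 1))
    rw [heq]
    have hℓt : ℓ ≤ t := by simpa [Nat.lt_succ_iff] using Finset.mem_range.1 hℓ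
    have hmem : ℓ + 1 ∈ Finset.range (t+1+1) := Finset.mem_range.2 (by omega)
    have := Finset.inf'_le
      (fun ℓ : ℕ => 2*a*(ℓ:ℝ) + (ℓ:ℝ)^2 + (((t:ℝ)+1) - ℓ)^2 / ((m:ℝ) - 1)) hmem
    calc (Finset.range (t+1+1)).inf' _ (fun ℓ => 2*a*ℓ + (ℓ:ℝ)^2 + (((t+1:ℕ):ℝ) - ℓ)^2 / ((m:ℝ) - 1))
        ≤ 2*a*((ℓ+1:ℕ):ℝ) + ((ℓ+1:ℕ):ℝ)^2 + (((t+1:ℕ):ℝ) - ((ℓ+1:ℕ):ℝ))^2 / ((m:ℝ) - 1) := by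
          convert this using 3 <;> push_cast <;> rfl
      _ = 2*a + 1 + (2*(a+1)*ℓ + (ℓ:ℝ)^2 + ((t:ℝ) - ℓ)^2 / ((m:ℝ) - 1)) := by
          push_cast; ring

lemma Fv_switch (t : ℕ) (a a' : ℝ) (m : ℕ) (hm : 2 ≤ m) (ha' : 0 ≤ a') :
    Fv (t+1) a m ≤ 2*a' + 1 + Fv t (a'+1) (m-1) := by
  have hstep1 : Fv (t+1) a m ≤ ((t:ℝ)+1)^2 / ((m:ℝ)-1) := by
    unfold Fv
    rw [if_neg (by omega)]
    have h0 : (0:ℕ) ∈ Finset.range (t+1+1) := Finset.mem_range.2 (Nat.succ_pos _)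
    have := Finset.inf'_le
      (fun ℓ : ℕ => 2*a*(ℓ:ℝ) + (ℓ:ℝ)^2 + (((t+1:ℕ):ℝ) - ℓ)^2 / ((m:ℝ) - 1)) h0
    calc (Finset.range (t+1+1)).inf' _ _ ≤ 2*a*((0:ℕ):ℝ) + ((0:ℕ):ℝ)^2 + (((t+1:ℕ):ℝ) - ((0:ℕ):ℝ))^2 / ((m:ℝ) - 1) := this
      _ = ((t:ℝ)+1)^2 / ((m:ℝ)-1) := by push_cast; ring
  refine hstep1.trans ?_
  rcases Nat.lt_or_ge m 3 with hm3 | hm3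
  · have : m = 2 := by omega
    subst this
    have : Fv t (a'+1) 1 = 2*(a'+1)*t + (t:ℝ)^2 := by unfold Fv; rw [if_pos (by norm_num)]
    rw [this]
    have ht : (0:ℝ) ≤ t := Nat.cast_nonneg t
    push_cast
    nlinarith
  · have hcast : ((m-1:ℕ):ℝ) = (m:ℝ) - 1 := by
      push_cast [Nat.cast_sub (by omega : 1 ≤ m)]; ring
    have hFv : Fv t (a'+1) (m-1) = (Finset.range (t+1)).inf' ⟨0, Finset.mem_range.2 (Nat.succ_pos t)⟩
        (fun ℓ => 2*(a'+1)*ℓ + (ℓ:ℝ)^2 + ((t:ℝ) - ℓ)^2 / (((m-1:ℕ):ℝ) - 1)) := by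
      unfold Fv; rw [if_neg (by omega)]
    rw [hFv]
    obtain ⟨ℓ, hℓ, heq⟩ := Finset.exists_mem_eq_inf' (⟨0, Finset.mem_range.2 (Nat.succ_pos t)⟩ :
      (Finset.range (t+1)).Nonempty) (fun ℓ => 2*(a'+1)*ℓ + (ℓ:ℝ)^2 + ((t:ℝ) - ℓ)^2 / (((m-1:ℕ):ℝ) - 1))
    rw [heq]
    have hℓt : ℓ ≤ t := by simpa [Nat.lt_succ_iff] using Finset.mem_range.1 hℓ
    have hℓt' : (ℓ:ℝ) ≤ t := Nat.cast_le.2 hℓt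
    have h1 : (2:ℝ) ≤ (m:ℝ) - 1 := by
      have : (3:ℝ) ≤ m := by exact_mod_cast hm3
      linarith
    have hcs := cs_ineq ((ℓ:ℝ)+1) ((t:ℝ) - ℓ) ((m:ℝ)-1) h1 (by positivity) (by linarith)
    have hl : ((ℓ:ℝ)+1) + ((t:ℝ) - ℓ) = (t:ℝ)+1 := by ring
    rw [hl] at hcs
    rw [hcast]
    nlinarith [mul_nonneg ha' (by positivity : (0:ℝ) ≤ (ℓ:ℝ)+1)]

lemma exists_orth (n : ℕ) (hn : 2 ≤ n) (x W : EuclideanSpace ℝ (Fin n)) :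
    ∃ u : EuclideanSpace ℝ (Fin n), ‖u‖ = 1 ∧ (inner ℝ u x : ℝ) = 0 ∧ 0 ≤ (inner ℝ u W : ℝ) := by
  have hdim : Module.finrank ℝ (EuclideanSpace ℝ (Fin n)) = n := finrank_euclideanSpace_fin
  set S : Submodule ℝ (EuclideanSpace ℝ (Fin n)) := ℝ ∙ x with hS
  have h1 : Module.finrank ℝ S + Module.finrank ℝ Sᗮ =
      Module.finrank ℝ (EuclideanSpace ℝ (Fin n)) :=
    Submodule.finrank_add_finrank_orthogonal S
  have h2 : Module.finrank ℝ S ≤ 1 := by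
    rw [hS]
    exact finrank_span_le_card {x} |>.trans (by simp)
  have h3 : 0 < Module.finrank ℝ Sᗮ := by omega
  have : Nontrivial Sᗮ := Module.finrank_pos_iff.mp h3
  obtain ⟨⟨v, hvS⟩, hv0⟩ := exists_ne (0 : Sᗮ)
  have hvne : v ≠ 0 := by
    intro h; apply hv0; exact Subtype.ext h
  have hvx : (inner ℝ v x : ℝ) = 0 := by
    have := (Submodule.mem_orthogonal S v).mp hvS x (Submodule.mem_span_singleton_self x)
    rwa [real_inner_comm] at this
  set u₀ : EuclideanSpace ℝ (Fin n) := ‖v‖⁻¹ • v with hu₀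
  have hnu : ‖u₀‖ = 1 := by
    rw [hu₀, norm_smul, norm_inv, norm_norm, inv_mul_cancel₀ (norm_ne_zero_iff.2 hvne)]
  have hux : (inner ℝ u₀ x : ℝ) = 0 := by
    rw [hu₀, real_inner_smul_left, hvx]; ring
  rcases le_or_gt 0 (inner ℝ u₀ W : ℝ) with h | h
  · exact ⟨u₀, hnu, hux, h⟩
  · refine ⟨-u₀, by rwa [norm_neg], by rw [inner_neg_left, hux]; ring, ?_⟩
    rw [inner_neg_left]; linarith

lemma gameValE_bounds (n K : ℕ) :
    ∀ t (last : Option (EuclideanSpace ℝ (Fin n))) s (W : EuclideanSpace ℝ (Fin n)),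
      0 ≤ gameValE n K t last s W ∧ gameValE n K t last s W ≤ ‖W‖ + 2*t := by
  intro t
  induction t with
  | zero => intro last s W; simp [gameValE, norm_nonneg]
  | succ t ih =>
    intro last s W
    rw [show gameValE n K (t+1) last s W =
      sInf ((fun x : EuclideanSpace ℝ (Fin n) =>
        sSup ((fun w : EuclideanSpace ℝ (Fin n) =>
          (inner ℝ w x : ℝ) + gameValE n K t (some x) (s + switchIncE last x) (W + w)) ''
          {w : EuclideanSpace ℝ (Fin n) | ‖w‖ ≤ 1})) ''
        {x : EuclideanSpace ℝ (Fin n) | ‖x‖ ≤ 1 ∧ s + switchIncE last x < K}) from rfl]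
    set C : Set (EuclideanSpace ℝ (Fin n)) :=
      {x : EuclideanSpace ℝ (Fin n) | ‖x‖ ≤ 1 ∧ s + switchIncE last x < K} with hC
    have key : ∀ x ∈ C,
        0 ≤ sSup ((fun w : EuclideanSpace ℝ (Fin n) =>
          (inner ℝ w x : ℝ) + gameValE n K t (some x) (s + switchIncE last x) (W + w)) ''
          {w : EuclideanSpace ℝ (Fin n) | ‖w‖ ≤ 1}) ∧
        sSup ((fun w : EuclideanSpace ℝ (Fin n) =>
          (inner ℝ w x : ℝ) + gameValE n K t (some x) (s + switchIncE last x) (W + w)) ''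
          {w : EuclideanSpace ℝ (Fin n) | ‖w‖ ≤ 1}) ≤ ‖W‖ + 2*(t+1) := by
      intro x hx
      obtain ⟨hx1, _⟩ := hx
      have hub : ∀ y ∈ ((fun w : EuclideanSpace ℝ (Fin n) =>
          (inner ℝ w x : ℝ) + gameValE n K t (some x) (s + switchIncE last x) (W + w)) ''
          {w : EuclideanSpace ℝ (Fin n) | ‖w‖ ≤ 1}), y ≤ ‖W‖ + 2*(t+1) := by
        rintro y ⟨w, hw, rfl⟩
        have hw' : ‖w‖ ≤ 1 := hw
        have h1 : (inner ℝ w x : ℝ) ≤ 1 := by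
          calc (inner ℝ w x : ℝ) ≤ ‖w‖ * ‖x‖ := real_inner_le_norm w x
            _ ≤ 1 * 1 := mul_le_mul hw' hx1 (norm_nonneg x) zero_le_one
            _ = 1 := by ring
        have h2 := (ih (some x) (s + switchIncE last x) (W + w)).2
        have h3 : ‖W + w‖ ≤ ‖W‖ + 1 := by
          calc ‖W + w‖ ≤ ‖W‖ + ‖w‖ := norm_add_le W w
            _ ≤ ‖W‖ + 1 := by linarith
        push_cast
        push_cast at h2
        linarith
      have hbdd : BddAbove ((fun w : EuclideanSpace ℝ (Fin n) =>
          (inner ℝ w x : ℝ) + gameValE n K t (some x) (s + switchIncE last x) (W + w)) ''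
          {w : EuclideanSpace ℝ (Fin n) | ‖w‖ ≤ 1}) := ⟨_, hub⟩
      have hmem0 : (inner ℝ (0:EuclideanSpace ℝ (Fin n)) x : ℝ) +
          gameValE n K t (some x) (s + switchIncE last x) (W + 0) ∈
          ((fun w : EuclideanSpace ℝ (Fin n) =>
          (inner ℝ w x : ℝ) + gameValE n K t (some x) (s + switchIncE last x) (W + w)) ''
          {w : EuclideanSpace ℝ (Fin n) | ‖w‖ ≤ 1}) :=
        ⟨0, by simp, rfl⟩
      constructor
      · refine le_trans ?_ (le_csSup hbdd hmem0)
        have := (ih (some x) (s + switchIncE last x) (W + 0)).1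
        simp only [inner_zero_left]
        linarith
      · exact csSup_le ⟨_, hmem0⟩ hub
    by_cases hne : C.Nonempty
    · obtain ⟨x₀, hx₀⟩ := hne
      have hSne : ((fun x : EuclideanSpace ℝ (Fin n) =>
        sSup ((fun w : EuclideanSpace ℝ (Fin n) =>
          (inner ℝ w x : ℝ) + gameValE n K t (some x) (s + switchIncE last x) (W + w)) ''
          {w : EuclideanSpace ℝ (Fin n) | ‖w‖ ≤ 1})) '' C).Nonempty :=
        ⟨_, ⟨x₀, hx₀, rfl⟩⟩
      constructor
      · apply le_csInf hSne
        rintro y ⟨x, hx, rfl⟩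
        exact (key x hx).1
      · have hbb : BddBelow ((fun x : EuclideanSpace ℝ (Fin n) =>
          sSup ((fun w : EuclideanSpace ℝ (Fin n) =>
            (inner ℝ w x : ℝ) + gameValE n K t (some x) (s + switchIncE last x) (W + w)) ''
            {w : EuclideanSpace ℝ (Fin n) | ‖w‖ ≤ 1})) '' C) := by
          refine ⟨0, ?_⟩
          rintro y ⟨x, hx, rfl⟩
          exact (key x hx).1
        have h2 := (key x₀ hx₀).2
        refine le_trans (csInf_le hbb ⟨x₀, hx₀, rfl⟩) ?_
        push_cast
        push_cast at h2
        exact h2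
    · rw [Set.not_nonempty_iff_eq_empty] at hne
      rw [hne, Set.image_empty, Real.sInf_empty]
      constructor
      · exact le_refl 0
      · positivity

lemma bddAbove_adv (n K t s' : ℕ) (x W : EuclideanSpace ℝ (Fin n)) (hx : ‖x‖ ≤ 1) :
    BddAbove ((fun w : EuclideanSpace ℝ (Fin n) =>
      (inner ℝ w x : ℝ) + gameValE n K t (some x) s' (W + w)) ''
      {w : EuclideanSpace ℝ (Fin n) | ‖w‖ ≤ 1}) := by
  refine ⟨‖W‖ + 1 + (1 + 2*t), ?_⟩
  rintro y ⟨w, hw, rfl⟩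
  have hw' : ‖w‖ ≤ 1 := hw
  have h1 : (inner ℝ w x : ℝ) ≤ 1 := by
    calc (inner ℝ w x : ℝ) ≤ ‖w‖ * ‖x‖ := real_inner_le_norm w x
      _ ≤ 1 * 1 := mul_le_mul hw' hx (norm_nonneg x) zero_le_one
      _ = 1 := by ring
  have h2 := (gameValE_bounds n K t (some x) s' (W + w)).2
  have h3 : ‖W + w‖ ≤ ‖W‖ + 1 := by
    calc ‖W + w‖ ≤ ‖W‖ + ‖w‖ := norm_add_le W w
      _ ≤ ‖W‖ + 1 := by linarith
  simp only
  linarith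

lemma gameValE_lower (n K : ℕ) (hn : 2 ≤ n) :
    ∀ t s (W x₀ u : EuclideanSpace ℝ (Fin n)), s < K → ‖x₀‖ ≤ 1 → ‖u‖ = 1 →
      (inner ℝ u x₀ : ℝ) = 0 → 0 ≤ (inner ℝ u W : ℝ) →
      Real.sqrt (‖W‖^2 + Fv t (inner ℝ u W) (K - s)) ≤ gameValE n K t (some x₀) s W := by
  intro t
  induction t with
  | zero =>
    intro s W x₀ u hs hx₀ hu hux huW
    rw [Fv_zero, add_zero, Real.sqrt_sq (norm_nonneg W)]
    exact le_refl _
  | succ t ih =>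
    intro s W x₀ u hs hx₀ hu hux huW
    rw [show gameValE n K (t+1) (some x₀) s W =
      sInf ((fun x : EuclideanSpace ℝ (Fin n) =>
        sSup ((fun w : EuclideanSpace ℝ (Fin n) =>
          (inner ℝ w x : ℝ) + gameValE n K t (some x) (s + switchIncE (some x₀) x) (W + w)) ''
          {w : EuclideanSpace ℝ (Fin n) | ‖w‖ ≤ 1})) ''
        {x : EuclideanSpace ℝ (Fin n) | ‖x‖ ≤ 1 ∧ s + switchIncE (some x₀) x < K}) from rfl]
    have hx₀mem : x₀ ∈ {x : EuclideanSpace ℝ (Fin n) | ‖x‖ ≤ 1 ∧ s + switchIncE (some x₀) x < K} := by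
      refine ⟨hx₀, ?_⟩
      have hsw0 : switchIncE (some x₀) x₀ = 0 := by simp [switchIncE]
      omega
    refine le_csInf ⟨_, ⟨x₀, hx₀mem, rfl⟩⟩ ?_
    rintro y ⟨x, ⟨hxnorm, hxsw⟩, rfl⟩
    simp only
    by_cases hxx : x = x₀
    · subst hxx
      have hsw : switchIncE (some x) x = 0 := by simp [switchIncE]
      rw [hsw]
      have humem : u ∈ {w : EuclideanSpace ℝ (Fin n) | ‖w‖ ≤ 1} := le_of_eq hu
      have hval : Real.sqrt (‖W‖^2 + Fv (t+1) (inner ℝ u W : ℝ) (K - s)) ≤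
          (inner ℝ u x : ℝ) + gameValE n K t (some x) (s + 0) (W + u) := by
        rw [hux, zero_add, Nat.add_zero]
        have hIH := ih s (W + u) x u hs hxnorm hu hux (by
          rw [inner_add_right, real_inner_self_eq_norm_sq, hu]
          nlinarith)
        have hval2 : (inner ℝ u (W + u) : ℝ) = (inner ℝ u W : ℝ) + 1 := by
          rw [inner_add_right, real_inner_self_eq_norm_sq, hu]; norm_num
        rw [hval2] at hIH
        refine le_trans (Real.sqrt_le_sqrt ?_) hIH
        have hnorm : ‖W + u‖^2 = ‖W‖^2 + 2*(inner ℝ u W : ℝ) + 1 := by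
          rw [norm_add_sq_real, hu, real_inner_comm]; norm_num
        have := Fv_step t (inner ℝ u W : ℝ) (K - s)
        rw [hnorm]
        linarith
      refine le_trans hval (le_csSup (bddAbove_adv n K t (s+0) x W hxnorm) ⟨u, humem, rfl⟩)
    · have hsw : switchIncE (some x₀) x = 1 := by simp [switchIncE, hxx]
      rw [hsw] at hxsw ⊢
      have hs1 : s + 1 < K := hxsw
      obtain ⟨u', hu'n, hu'x, hu'W⟩ := exists_orth n hn x W
      have hu'mem : u' ∈ {w : EuclideanSpace ℝ (Fin n) | ‖w‖ ≤ 1} := le_of_eq hu'n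
      have hval : Real.sqrt (‖W‖^2 + Fv (t+1) (inner ℝ u W : ℝ) (K - s)) ≤
          (inner ℝ u' x : ℝ) + gameValE n K t (some x) (s + 1) (W + u') := by
        rw [hu'x, zero_add]
        have hIH := ih (s+1) (W + u') x u' hs1 hxnorm hu'n hu'x (by
          rw [inner_add_right, real_inner_self_eq_norm_sq, hu'n]
          nlinarith)
        have hval2 : (inner ℝ u' (W + u') : ℝ) = (inner ℝ u' W : ℝ) + 1 := by
          rw [inner_add_right, real_inner_self_eq_norm_sq, hu'n]; norm_num
        rw [hval2] at hIH
        have hKs : K - (s + 1) = (K - s) - 1 := by omega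
        rw [hKs] at hIH
        refine le_trans (Real.sqrt_le_sqrt ?_) hIH
        have hnorm : ‖W + u'‖^2 = ‖W‖^2 + 2*(inner ℝ u' W : ℝ) + 1 := by
          rw [norm_add_sq_real, hu'n, real_inner_comm]; norm_num
        have := Fv_switch t (inner ℝ u W : ℝ) (inner ℝ u' W : ℝ) (K - s) (by omega) hu'W
        rw [hnorm]
        linarith
      exact le_trans hval (le_csSup (bddAbove_adv n K t (s+1) x W hxnorm) ⟨u', hu'mem, rfl⟩)

/-- For every dimension `n ≥ 2` and all integers `T ≥ K ≥ 1`, the minimax regret of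
switching-constrained online linear optimization over the Euclidean unit ball satisfies
`R_n(T,K) ≥ T/√K`. -/
theorem stmt1 (n T K : ℕ) (hn : 2 ≤ n) (hK : 1 ≤ K) (hTK : K ≤ T) :
    (T : ℝ) / Real.sqrt K ≤ RE n T K := by
  obtain ⟨t, rfl⟩ : ∃ t, T = t + 1 := ⟨T - 1, by omega⟩
  have hgoal : (((t+1:ℕ)):ℝ) / Real.sqrt K = Real.sqrt (((t+1:ℕ):ℝ)^2 / K) := by
    rw [Real.sqrt_div (by positivity), Real.sqrt_sq (by positivity)]
  rw [hgoal]
  rw [RE, show gameValE n K (t+1) none 0 0 =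
      sInf ((fun x : EuclideanSpace ℝ (Fin n) =>
        sSup ((fun w : EuclideanSpace ℝ (Fin n) =>
          (inner ℝ w x : ℝ) + gameValE n K t (some x) (0 + switchIncE none x) ((0:EuclideanSpace ℝ (Fin n)) + w)) ''
          {w : EuclideanSpace ℝ (Fin n) | ‖w‖ ≤ 1})) ''
        {x : EuclideanSpace ℝ (Fin n) | ‖x‖ ≤ 1 ∧ 0 + switchIncE none x < K}) from rfl]
  have h0mem : (0:EuclideanSpace ℝ (Fin n)) ∈
      {x : EuclideanSpace ℝ (Fin n) | ‖x‖ ≤ 1 ∧ 0 + switchIncE none x < K} := by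
    constructor
    · simp
    · simp only [switchIncE]; omega
  refine le_csInf ⟨_, ⟨0, h0mem, rfl⟩⟩ ?_
  rintro y ⟨x, ⟨hxnorm, hxsw⟩, rfl⟩
  simp only
  obtain ⟨u, hun, hux, -⟩ := exists_orth n hn x 0
  have humem : u ∈ {w : EuclideanSpace ℝ (Fin n) | ‖w‖ ≤ 1} := le_of_eq hun
  have hsw : switchIncE (none : Option (EuclideanSpace ℝ (Fin n))) x = 0 := rfl
  rw [hsw]
  have hval : Real.sqrt (((t+1:ℕ):ℝ)^2 / K) ≤
      (inner ℝ u x : ℝ) + gameValE n K t (some x) (0 + 0) ((0:EuclideanSpace ℝ (Fin n)) + u) := by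
    rw [hux]
    simp only [zero_add]
    have hIH := gameValE_lower n K hn t 0 u x u (by omega) hxnorm hun hux (by
      rw [real_inner_self_eq_norm_sq, hun]; norm_num)
    have huu : (inner ℝ u u : ℝ) = 1 := by
      rw [real_inner_self_eq_norm_sq, hun]; norm_num
    rw [huu] at hIH
    have hK0 : K - 0 = K := by omega
    rw [hK0] at hIH
    refine le_trans (Real.sqrt_le_sqrt ?_) hIH
    have hshift := Fv_ge_shift t 1 K zero_le_one hK
    have hun2 : ‖u‖^2 = 1 := by rw [hun]; norm_num
    rw [hun2]
    push_cast
    push_cast at hshift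
    have h12 : ((t:ℝ)+1)^2 = (1+(t:ℝ))^2 := by ring
    rw [h12]
    nlinarith [hshift]
  exact le_trans hval (le_csSup (bddAbove_adv n K t (0+0) x 0 hxnorm) ⟨u, humem, rfl⟩)
end

section
/- For all integers T ≥ K ≥ 2, the minimax regret of one-dimensional switching-constrained online linear optimization satisfies R₁(T,K) ≤ (√3/2) · ⌈T/K⌉ · √K. -/
open Finset

/-! ## Auxiliary: the mini-batching potential function -/

noncomputable def fpot : ℕ → ℝ → ℝ
  | 0, x => |x|
  | n+1, x => (fpot n (x+1) + fpot n (x-1))/2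

lemma fpot_nonneg (n : ℕ) (x : ℝ) : 0 ≤ fpot n x := by
  induction n generalizing x with
  | zero => exact abs_nonneg x
  | succ n ih => show 0 ≤ (fpot n (x+1) + fpot n (x-1))/2; linarith [ih (x+1), ih (x-1)]

lemma fpot_even (n : ℕ) (x : ℝ) : fpot n (-x) = fpot n x := by
  induction n generalizing x with
  | zero => exact abs_neg x
  | succ n ih =>
    show (fpot n (-x+1) + fpot n (-x-1))/2 = (fpot n (x+1) + fpot n (x-1))/2
    have h1 : -x + 1 = -(x - 1) := by ring
    have h2 : -x - 1 = -(x + 1) := by ring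
    rw [h1, h2, ih, ih]; ring

lemma fpot_lipschitz (n : ℕ) (x y : ℝ) : |fpot n x - fpot n y| ≤ |x - y| := by
  induction n generalizing x y with
  | zero => exact abs_abs_sub_abs_le_abs_sub x y
  | succ n ih =>
    show |(fpot n (x+1) + fpot n (x-1))/2 - (fpot n (y+1) + fpot n (y-1))/2| ≤ |x - y|
    have h1 := ih (x+1) (y+1)
    have h2 := ih (x-1) (y-1)
    have e1 : x + 1 - (y + 1) = x - y := by ring
    have e2 : x - 1 - (y - 1) = x - y := by ring
    rw [e1] at h1; rw [e2] at h2
    calc |(fpot n (x+1) + fpot n (x-1))/2 - (fpot n (y+1) + fpot n (y-1))/2|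
        = |((fpot n (x+1) - fpot n (y+1)) + (fpot n (x-1) - fpot n (y-1)))/2| := by ring_nf
      _ ≤ (|fpot n (x+1) - fpot n (y+1)| + |fpot n (x-1) - fpot n (y-1)|)/2 := by
          rw [abs_div]
          simp only [abs_two]
          gcongr
          exact abs_add_le _ _
      _ ≤ |x - y| := by linarith

lemma fpot_convex (n : ℕ) (a b θ : ℝ) (h0 : 0 ≤ θ) (h1 : θ ≤ 1) :
    fpot n (θ*a + (1-θ)*b) ≤ θ * fpot n a + (1-θ) * fpot n b := by
  induction n generalizing a b with
  | zero =>
    show |θ*a + (1-θ)*b| ≤ θ * |a| + (1-θ) * |b|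
    calc |θ*a + (1-θ)*b| ≤ |θ*a| + |(1-θ)*b| := abs_add_le _ _
      _ = θ * |a| + (1-θ) * |b| := by
          rw [abs_mul, abs_mul, abs_of_nonneg h0,
            abs_of_nonneg (show (0:ℝ) ≤ 1-θ by linarith)]
  | succ n ih =>
    show (fpot n (θ*a + (1-θ)*b + 1) + fpot n (θ*a + (1-θ)*b - 1))/2 ≤ _
    have e1 : θ*a + (1-θ)*b + 1 = θ*(a+1) + (1-θ)*(b+1) := by ring
    have e2 : θ*a + (1-θ)*b - 1 = θ*(a-1) + (1-θ)*(b-1) := by ring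
    rw [e1, e2]
    have := ih (a+1) (b+1)
    have := ih (a-1) (b-1)
    show _ ≤ θ * ((fpot n (a+1) + fpot n (a-1))/2) + (1-θ) * ((fpot n (b+1) + fpot n (b-1))/2)
    linarith

lemma fpot_formula (n : ℕ) (x : ℝ) :
    fpot n x = (2^n : ℝ)⁻¹ * ∑ i ∈ range (n+1), (n.choose i : ℝ) * |x + n - 2*i| := by
  induction n generalizing x with
  | zero => simp [fpot]
  | succ n ih =>
    have key : ∑ i ∈ range (n+2), ((n+1).choose i : ℝ) * |x + (n+1) - 2*i|
        = (∑ i ∈ range (n+1), (n.choose i : ℝ) * |x + 1 + n - 2*i|)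
        + ∑ i ∈ range (n+1), (n.choose i : ℝ) * |x - 1 + n - 2*i| := by
      have e2 : ∑ i ∈ range (n+1), (n.choose i : ℝ) * |x - 1 + n - 2*i|
          = ∑ i ∈ range (n+1), (n.choose i : ℝ) * |x + (n+1) - 2*(i+1)| := by
        apply Finset.sum_congr rfl; intro i _
        congr 2; push_cast; ring
      have e1 : ∑ i ∈ range (n+1), (n.choose i : ℝ) * |x + 1 + n - 2*i|
          = |x + (n+1)| + ∑ i ∈ range (n+1), (n.choose (i+1) : ℝ) * |x + (n+1) - 2*(i+1)| := by
        rw [Finset.sum_range_succ' (fun i => (n.choose i : ℝ) * |x + 1 + n - 2*i|) n]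
        rw [Finset.sum_range_succ (fun i => (n.choose (i+1) : ℝ) * |x + (n+1) - 2*(i+1)|) n]
        rw [Nat.choose_succ_self]
        push_cast
        have : ∀ i ∈ range n, (n.choose (i+1) : ℝ) * |x + 1 + n - 2*(i+1)|
            = (n.choose (i+1) : ℝ) * |x + (n+1) - 2*(i+1)| := by
          intro i _; congr 2; push_cast; ring
        rw [Finset.sum_congr rfl this]
        rw [show x + 1 + (n:ℝ) - 2*0 = x + ((n:ℝ)+1) by ring]
        simp
        ring
      rw [e1, e2]
      rw [Finset.sum_range_succ' (fun i => (((n+1):ℕ).choose i : ℝ) * |x + (n+1) - 2*i|) (n+1)]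
      push_cast
      have : ∀ i ∈ range (n+1), (((n+1):ℕ).choose (i+1) : ℝ) * |x + (n+1) - 2*((i:ℕ)+1)|
          = (n.choose i : ℝ) * |x + (n+1) - 2*(i+1)| + (n.choose (i+1) : ℝ) * |x + (n+1) - 2*(i+1)| := by
        intro i _
        rw [Nat.choose_succ_succ]
        push_cast; ring
      rw [Finset.sum_congr rfl this, Finset.sum_add_distrib]
      rw [show x + ((n:ℝ)+1) - 2*0 = x + ((n:ℝ)+1) by ring]
      simp
      ring
    show (fpot n (x+1) + fpot n (x-1))/2 = _
    rw [ih (x+1), ih (x-1)]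
    have h2 : ((2:ℝ)^(n+1))⁻¹ = (2^n : ℝ)⁻¹ / 2 := by
      rw [pow_succ]; field_simp
    rw [h2]
    push_cast at key ⊢
    rw [key]
    ring

lemma diff_sum (n : ℕ) :
    ∑ i ∈ range (n+1), (n.choose i : ℝ) * |1 + (n:ℝ) - 2*i|
      = (∑ i ∈ range (n+1), (n.choose i : ℝ) * |0 + (n:ℝ) - 2*i|)
        + (if Even n then (n.choose (n/2) : ℝ) else 0) := by
  have term : ∀ i ∈ range (n+1), (n.choose i : ℝ) * |1 + (n:ℝ) - 2*i|
      = (n.choose i : ℝ) * |0 + (n:ℝ) - 2*i|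
        + (n.choose i : ℝ) * (if 2*i ≤ n then (1:ℝ) else -1) := by
    intro i hi
    have hi' : i ≤ n := by simpa using Nat.lt_succ_iff.mp (mem_range.mp hi)
    by_cases h : 2*i ≤ n
    · have h2 : (2:ℝ)*i ≤ n := by exact_mod_cast h
      rw [if_pos h, abs_of_nonneg (by linarith), abs_of_nonneg (by linarith)]
      ring
    · have h2 : (n:ℝ) ≤ 2*i - 1 := by
        have : n + 1 ≤ 2*i := by omega
        have := (Nat.cast_le (α := ℝ)).mpr this
        push_cast at this; linarith
      rw [if_neg h, abs_of_nonpos (by linarith), abs_of_nonpos (by linarith)]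
      ring
  rw [Finset.sum_congr rfl term, Finset.sum_add_distrib]
  congr 1
  -- D := ∑ C(n,i) * (if 2i ≤ n then 1 else -1) equals the ite
  set D := ∑ i ∈ range (n+1), (n.choose i : ℝ) * (if 2*i ≤ n then (1:ℝ) else -1) with hD
  have refl : D = ∑ i ∈ range (n+1), (n.choose i : ℝ) * (if n ≤ 2*i then (1:ℝ) else -1) := by
    rw [hD, ← Finset.sum_range_reflect (fun i => (n.choose i : ℝ) * (if 2*i ≤ n then (1:ℝ) else -1)) (n+1)]
    apply Finset.sum_congr rfl
    intro i hi
    have hi' : i ≤ n := by simpa using Nat.lt_succ_iff.mp (mem_range.mp hi)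
    have e0 : n + 1 - 1 - i = n - i := by omega
    rw [e0, Nat.choose_symm hi']
    congr 1
    exact if_congr (by constructor <;> intro <;> omega) rfl rfl
  have double : D + D = ∑ i ∈ range (n+1), (n.choose i : ℝ) *
      ((if 2*i ≤ n then (1:ℝ) else -1) + (if n ≤ 2*i then (1:ℝ) else -1)) := by
    nth_rewrite 2 [refl]
    nth_rewrite 1 [hD]
    rw [← Finset.sum_add_distrib]
    apply Finset.sum_congr rfl; intro i _
    ring
  have combined : ∀ i ∈ range (n+1),
      (n.choose i : ℝ) * ((if 2*i ≤ n then (1:ℝ) else -1) + (if n ≤ 2*i then (1:ℝ) else -1))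
      = (n.choose i : ℝ) * (if 2*i = n then (2:ℝ) else 0) := by
    intro i _
    by_cases h : 2*i = n
    · rw [if_pos h, if_pos (by omega), if_pos (by omega)]; norm_num
    · rw [if_neg h]
      rcases Nat.lt_or_ge (2*i) n with h1 | h1
      · rw [if_pos (by omega), if_neg (by omega)]; norm_num
      · rw [if_neg (by omega), if_pos (by omega)]; norm_num
  rw [Finset.sum_congr rfl combined] at double
  have final : ∑ i ∈ range (n+1), (n.choose i : ℝ) * (if 2*i = n then (2:ℝ) else 0)
      = if Even n then 2*(n.choose (n/2) : ℝ) else 0 := by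
    by_cases h : Even n
    · obtain ⟨m, rfl⟩ := h
      have cond : ∀ i ∈ range (m+m+1), ((m+m).choose i : ℝ) * (if 2*i = m+m then (2:ℝ) else 0)
          = if i = m then 2*((m+m).choose i : ℝ) else 0 := by
        intro i _
        by_cases h2 : i = m
        · rw [if_pos (by omega), if_pos h2]; ring
        · rw [if_neg (by omega), if_neg h2]; ring
      rw [Finset.sum_congr rfl cond, Finset.sum_ite_eq' (range (m+m+1)) m
        (fun i => 2*((m+m).choose i : ℝ))]
      rw [if_pos (by simp), if_pos ⟨m, rfl⟩]
      have hmm : (m+m)/2 = m := by omega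
      rw [hmm]
    · rw [if_neg h]
      apply Finset.sum_eq_zero
      intro i _
      rw [if_neg (by rintro h2; exact h ⟨i, by omega⟩)]
      ring
  rw [final] at double
  by_cases h : Even n
  · rw [if_pos h] at double ⊢; linarith
  · rw [if_neg h] at double ⊢; linarith

noncomputable def pc (m : ℕ) : ℝ := (Nat.centralBinom m : ℝ) / 4^m

lemma pc_nonneg (m : ℕ) : 0 ≤ pc m := by unfold pc; positivity

lemma pc_succ (m : ℕ) : pc (m+1) = pc m * (2*m+1) / (2*m+2) := by
  have h := Nat.succ_mul_centralBinom_succ m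
  have h' : ((m:ℝ)+1) * (Nat.centralBinom (m+1) : ℝ) = 2*(2*m+1) * (Nat.centralBinom m : ℝ) := by
    exact_mod_cast h
  unfold pc
  have h4 : (4:ℝ)^m ≠ 0 := by positivity
  have hm2 : (2*(m:ℝ)+2) ≠ 0 := by positivity
  field_simp
  ring_nf
  ring_nf at h'
  nlinarith [h', pow_pos (show (0:ℝ) < 4 by norm_num) m]

lemma pc_sq (m : ℕ) : pc m ^ 2 * (3*m+1) ≤ 1 := by
  induction m with
  | zero => norm_num [pc, Nat.centralBinom]
  | succ m ih =>
    rw [pc_succ]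
    push_cast
    have hm : (0:ℝ) ≤ m := Nat.cast_nonneg m
    have hp := pc_nonneg m
    have key : ((2*(m:ℝ)+1)/(2*m+2))^2 * (3*((m:ℝ)+1)+1) ≤ 3*m+1 := by
      rw [div_pow]
      rw [div_mul_eq_mul_div, div_le_iff₀ (by positivity)]
      nlinarith
    calc (pc m * (2*(m:ℝ)+1) / (2*m+2))^2 * (3*((m:ℝ)+1)+1)
        = pc m ^2 * (((2*(m:ℝ)+1)/(2*m+2))^2 * (3*((m:ℝ)+1)+1)) := by ring
      _ ≤ pc m ^2 * (3*m+1) := by nlinarith [sq_nonneg (pc m), key]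
      _ ≤ 1 := ih

lemma pc_bound (m : ℕ) : pc m ≤ 1 / Real.sqrt (3*m+1) := by
  have h1 : (0:ℝ) < 3*m+1 := by positivity
  have h2 : pc m ^ 2 ≤ 1/(3*m+1) := by
    have := pc_sq m
    rw [div_eq_inv_mul, le_inv_mul_iff₀ h1]
    linarith
  calc pc m = Real.sqrt (pc m ^2) := (Real.sqrt_sq (pc_nonneg m)).symm
    _ ≤ Real.sqrt (1/(3*m+1)) := Real.sqrt_le_sqrt h2
    _ = 1 / Real.sqrt (3*m+1) := by
        rw [one_div, one_div, Real.sqrt_inv]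

lemma fpot_succ_zero (n : ℕ) : fpot (n+1) 0 = fpot n 1 := by
  show (fpot n (0+1) + fpot n (0-1))/2 = fpot n 1
  have e1 : (0:ℝ)+1 = 1 := by ring
  have e2 : (0:ℝ)-1 = -1 := by ring
  rw [e1, e2, show (-1:ℝ) = -(1:ℝ) from rfl, fpot_even]
  ring

lemma E_step (n : ℕ) : fpot (n+1) 0 = fpot n 0 + (if Even n then pc (n/2) else 0) := by
  rw [fpot_succ_zero, fpot_formula n 1, fpot_formula n 0, diff_sum]
  have : (2^n : ℝ)⁻¹ * (if Even n then ((n.choose (n/2)) : ℝ) else 0)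
      = if Even n then pc (n/2) else 0 := by
    by_cases h : Even n
    · rw [if_pos h, if_pos h]
      obtain ⟨m, rfl⟩ := h
      have hmm : (m+m)/2 = m := by omega
      rw [hmm]
      unfold pc
      rw [Nat.centralBinom, show 2*m = m + m by ring]
      rw [show (2:ℝ)^(m+m) = 4^m by rw [← two_mul]; rw [pow_mul]; norm_num]
      ring
    · rw [if_neg h, if_neg h]; ring
  rw [← this]
  ring

lemma sqrt_step (m : ℕ) :
    Real.sqrt (6*m+3)/2 + 1/Real.sqrt (3*(m+1)+1) ≤ Real.sqrt (6*(m+1)+3)/2 := by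
  have hm : (0:ℝ) ≤ m := Nat.cast_nonneg m
  set u := Real.sqrt (6*m+3) with hu
  set v := Real.sqrt (3*(m:ℝ)+4) with hv
  set w := Real.sqrt (6*m+9) with hw
  have hv' : (3*((m:ℝ)+1)+1) = 3*(m:ℝ)+4 := by ring
  rw [hv']
  have hw' : (6*((m:ℝ)+1)+3) = 6*(m:ℝ)+9 := by ring
  rw [hw']
  have hu2 : u^2 = 6*m+3 := Real.sq_sqrt (by positivity)
  have hv2 : v^2 = 3*m+4 := Real.sq_sqrt (by positivity)
  have hw2 : w^2 = 6*m+9 := Real.sq_sqrt (by positivity)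
  have hun : 0 ≤ u := Real.sqrt_nonneg _
  have hvn : 0 < v := Real.sqrt_pos.mpr (by positivity)
  have hwn : 0 ≤ w := Real.sqrt_nonneg _
  have huw : 2*(u*w) ≤ 12*m+12 := by nlinarith [sq_nonneg (u-w)]
  have h3v : u + w ≤ 3*v := by nlinarith [sq_nonneg (u+w)]
  have hwu : u ≤ w := by nlinarith
  have key : v*(w-u) ≥ 2 := by nlinarith
  rw [div_add_div _ _ (by norm_num) (ne_of_gt hvn), div_le_div_iff₀ (by positivity) (by norm_num)]
  nlinarith

lemma fpot_odd_bound (m : ℕ) (hm : 1 ≤ m) :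
    fpot (2*m+1) 0 ≤ Real.sqrt (6*m+3)/2 := by
  induction m with
  | zero => omega
  | succ m ih =>
    by_cases h : 1 ≤ m
    · have hstep := ih h
      rw [show 2*(m+1)+1 = (2*m+1+1)+1 by ring, E_step, E_step,
        if_pos (show Even (2*m+1+1) by rw [Nat.even_iff]; omega),
        if_neg (show ¬ Even (2*m+1) by rw [Nat.even_iff]; omega)]
      have hdiv : (2*m+1+1)/2 = m+1 := by omega
      rw [hdiv]
      have h1 := pc_bound (m+1)
      have h2 := sqrt_step m
      push_cast at h1 h2 ⊢
      linarith [hstep]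
    · have hm0 : m = 0 := by omega
      subst hm0
      -- fpot 3 0 = 3/2, sqrt 9 = 3
      have e0 : fpot 0 0 = 0 := by simp [fpot]
      have e1 : fpot 1 0 = 1 := by
        rw [E_step 0, if_pos (by exact ⟨0, rfl⟩), e0]
        norm_num [pc, Nat.centralBinom]
      have e2 : fpot 2 0 = 1 := by
        rw [E_step 1, if_neg (by simp), e1]
        norm_num
      have e3 : fpot 3 0 = 3/2 := by
        rw [show (3:ℕ) = 2+1 from rfl, E_step 2, if_pos ⟨1, rfl⟩, e2]
        norm_num [pc, Nat.centralBinom]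
      rw [show 2*(0+1)+1 = 3 from rfl, e3]
      have h9 : Real.sqrt 9 = 3 := by
        rw [show (9:ℝ) = 3^2 by norm_num]; exact Real.sqrt_sq (by norm_num)
      push_cast
      norm_num [h9]

lemma fpot_zero_bound (n : ℕ) (hn : 2 ≤ n) :
    fpot n 0 ≤ Real.sqrt 3 / 2 * Real.sqrt n := by
  have key : ∀ k : ℕ, 2 ≤ k → fpot k 0 ≤ Real.sqrt (3*k)/2 := by
    intro k hk
    rcases Nat.even_or_odd k with he | ho
    · obtain ⟨m, rfl⟩ := he
      have hm1 : 1 ≤ m := by omega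
      rcases Nat.lt_or_ge m 2 with h2 | h2
      · have : m = 1 := by omega
        subst this
        have e0 : fpot 0 0 = 0 := by simp [fpot]
        have e1 : fpot 1 0 = 1 := by
          rw [E_step 0, if_pos (by exact ⟨0, rfl⟩), e0]
          norm_num [pc, Nat.centralBinom]
        have e2 : fpot 2 0 = 1 := by
          rw [E_step 1, if_neg (by simp), e1]
          norm_num
        rw [show 1+1 = 2 from rfl, e2]
        rw [show (3:ℝ)*(2:ℕ) = 6 by norm_num]
        nlinarith [Real.sq_sqrt (show (0:ℝ) ≤ 6 by norm_num), Real.sqrt_nonneg (6:ℝ)]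
      · obtain ⟨j, rfl⟩ : ∃ j, m = j + 2 := ⟨m - 2, by omega⟩
        rw [show (j+2)+(j+2) = (2*(j+1)+1)+1 by ring, E_step,
          if_neg (show ¬ Even (2*(j+1)+1) by rw [Nat.even_iff]; omega)]
        have hb := fpot_odd_bound (j+1) (by omega)
        have hle : Real.sqrt (6*(((j+1:ℕ)):ℝ)+3) ≤ Real.sqrt (3*(((2*(j+1)+1)+1:ℕ):ℝ)) := by
          apply Real.sqrt_le_sqrt; push_cast; linarith
        push_cast at hb hle ⊢
        linarith
    · obtain ⟨m, rfl⟩ := ho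
      have hm1 : 1 ≤ m := by omega
      have hb := fpot_odd_bound m hm1
      have : Real.sqrt (6*(m:ℝ)+3) = Real.sqrt (3*((2*m+1:ℕ):ℝ)) := by
        congr 1; push_cast; ring
      rw [this] at hb
      linarith
  have h := key n hn
  rw [show (3:ℝ)*(n:ℝ) = 3*n by norm_num] at h
  calc fpot n 0 ≤ Real.sqrt (3*n)/2 := h
    _ = Real.sqrt 3 / 2 * Real.sqrt n := by
        rw [Real.sqrt_mul (by norm_num)]
        ring


/-- The increment in the number of switches when the player, whose previous action is
`last` (`none` at the first round), plays `x`. -/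
noncomputable def switchInc (last : Option ℝ) (x : ℝ) : ℕ :=
  match last with
  | none => 0
  | some y => if x = y then 0 else 1

/-- Backward-recursive value of the one-dimensional switching-constrained online linear
optimization game: `gameVal1 K t last s W` is the value of the game with `t` rounds
remaining, previous player action `last`, `s` switches used so far, and accumulated
adversary sum `W`.  The player's infimum ranges only over actions in `[-1,1]` keeping
the total number of switches strictly below `K` (equivalently, the payoff is `+∞` as soon
as `K` switches are reached), the adversary's supremum ranges over `[-1,1]`, and at the
end the comparator term `|∑ wᵢ|` is added. -/
noncomputable def gameVal1 (K : ℕ) : ℕ → Option ℝ → ℕ → ℝ → ℝ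
  | 0, _, _, W => |W|
  | t + 1, last, s, W =>
      sInf ((fun x : ℝ =>
        sSup ((fun w : ℝ => w * x + gameVal1 K t (some x) (s + switchInc last x) (W + w)) ''
          Set.Icc (-1 : ℝ) 1)) ''
        {x : ℝ | x ∈ Set.Icc (-1 : ℝ) 1 ∧ s + switchInc last x < K})

/-- `R₁(T,K)`: the minimax regret of `T`-round one-dimensional switching-constrained
online linear optimization with fewer than `K` switches. -/
noncomputable def R1 (T K : ℕ) : ℝ := gameVal1 K T none 0 0


/-! ### The block potential -/

noncomputable def Vb (L j : ℕ) (W : ℝ) : ℝ := L * fpot j (W / L)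

variable {L : ℕ}

lemma vb_nonneg (L j : ℕ) (W : ℝ) : 0 ≤ Vb L j W :=
  mul_nonneg (Nat.cast_nonneg L) (fpot_nonneg _ _)

lemma vb_zero (hL : 1 ≤ L) (W : ℝ) : Vb L 0 W = |W| := by
  have hL0 : (0:ℝ) < L := by exact_mod_cast hL
  show (L:ℝ) * |W / L| = |W|
  rw [abs_div, abs_of_pos hL0]
  field_simp

lemma vb_succ (hL : 1 ≤ L) (j : ℕ) (W : ℝ) :
    Vb L (j+1) W = (Vb L j (W + L) + Vb L j (W - L))/2 := by
  have hL0 : (L:ℝ) ≠ 0 := by positivity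
  show (L:ℝ) * ((fpot j (W/L + 1) + fpot j (W/L - 1))/2) = _
  have e1 : (W + L)/L = W/L + 1 := by field_simp
  have e2 : (W - L)/L = W/L - 1 := by field_simp
  unfold Vb
  rw [e1, e2]
  ring

lemma vb_lip (hL : 1 ≤ L) (j : ℕ) (a b : ℝ) : |Vb L j a - Vb L j b| ≤ |a - b| := by
  have hL0 : (0:ℝ) < L := by exact_mod_cast hL
  unfold Vb
  rw [← mul_sub, abs_mul, abs_of_pos hL0]
  have := fpot_lipschitz j (a/L) (b/L)
  have e : a/L - b/L = (a-b)/L := by ring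
  rw [e, abs_div, abs_of_pos hL0] at this
  calc (L:ℝ) * |fpot j (a/L) - fpot j (b/L)| ≤ (L:ℝ) * (|a-b|/L) := by
        exact mul_le_mul_of_nonneg_left this (le_of_lt hL0)
    _ = |a - b| := by field_simp

lemma vb_convex (hL : 1 ≤ L) (j : ℕ) (a b θ : ℝ) (h0 : 0 ≤ θ) (h1 : θ ≤ 1) :
    Vb L j (θ*a + (1-θ)*b) ≤ θ * Vb L j a + (1-θ) * Vb L j b := by
  have hL0 : (L:ℝ) ≠ 0 := by positivity
  unfold Vb
  have e : (θ*a + (1-θ)*b)/L = θ*(a/L) + (1-θ)*(b/L) := by field_simp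
  rw [e]
  have := fpot_convex j (a/L) (b/L) θ h0 h1
  nlinarith [Nat.cast_nonneg (α := ℝ) L]

lemma vb_even (j : ℕ) (W : ℝ) : Vb L j (-W) = Vb L j W := by
  unfold Vb
  rw [neg_div, fpot_even]

lemma vb_mono (hL : 1 ≤ L) (j : ℕ) (a b : ℝ) (ha : 0 ≤ a) (hab : a ≤ b) :
    Vb L j a ≤ Vb L j b := by
  rcases eq_or_lt_of_le (ha.trans hab) with hb | hb
  · have : a = b := by nlinarith
    rw [this]
  · have hθ0 : 0 ≤ (a+b)/(2*b) := by positivity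
    have hθ1 : (a+b)/(2*b) ≤ 1 := by
      rw [div_le_one (by linarith)]; linarith
    have e : a = ((a+b)/(2*b))*b + (1-(a+b)/(2*b))*(-b) := by
      field_simp; ring
    calc Vb L j a = Vb L j (((a+b)/(2*b))*b + (1-(a+b)/(2*b))*(-b)) := by rw [← e]
      _ ≤ ((a+b)/(2*b)) * Vb L j b + (1-(a+b)/(2*b)) * Vb L j (-b) :=
          vb_convex hL j b (-b) _ hθ0 hθ1
      _ = Vb L j b := by rw [vb_even]; ring

lemma vb_seg (hL : 1 ≤ L) (j : ℕ) (x W r δ : ℝ) (hr : 0 < r)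
    (h1 : -r ≤ δ) (h2 : δ ≤ r) :
    x*δ + Vb L j (W+δ) ≤ max (x*r + Vb L j (W+r)) (-(x*r) + Vb L j (W-r)) := by
  set θ := (δ + r)/(2*r) with hθ
  have hθ0 : 0 ≤ θ := div_nonneg (by linarith) (by linarith)
  have hθ1 : θ ≤ 1 := by rw [hθ, div_le_one (by linarith)]; linarith
  have e : W + δ = θ*(W+r) + (1-θ)*(W-r) := by
    rw [hθ]; field_simp; ring
  have eδ : x*δ = θ*(x*r) + (1-θ)*(-(x*r)) := by
    rw [hθ]; field_simp; ring
  have hc := vb_convex hL j (W+r) (W-r) θ hθ0 hθ1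
  rw [← e] at hc
  have hm1 : x*r + Vb L j (W+r) ≤ max (x*r + Vb L j (W+r)) (-(x*r) + Vb L j (W-r)) := le_max_left _ _
  have hm2 : -(x*r) + Vb L j (W-r) ≤ max (x*r + Vb L j (W+r)) (-(x*r) + Vb L j (W-r)) := le_max_right _ _
  nlinarith [hθ0, hθ1]

lemma max_nonneg_of_add (a b : ℝ) (h : 0 ≤ a + b) : 0 ≤ max a b := by
  rcases le_total a b with h' | h'
  · exact le_max_of_le_right (by linarith)
  · exact le_max_of_le_left (by linarith)

/-! ### Basic game value lemmas -/

lemma gameVal1_succ (K t : ℕ) (last : Option ℝ) (s : ℕ) (W : ℝ) :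
    gameVal1 K (t+1) last s W =
      sInf ((fun x : ℝ =>
        sSup ((fun w : ℝ => w * x + gameVal1 K t (some x) (s + switchInc last x) (W + w)) ''
          Set.Icc (-1 : ℝ) 1)) ''
        {x : ℝ | x ∈ Set.Icc (-1 : ℝ) 1 ∧ s + switchInc last x < K}) := by
  rfl

lemma gv_nonneg (K t : ℕ) (last : Option ℝ) (s : ℕ) (W : ℝ) :
    0 ≤ gameVal1 K t last s W := by
  induction t generalizing last s W with
  | zero => exact abs_nonneg W
  | succ t ih =>
    rw [gameVal1_succ]
    apply Real.sInf_nonneg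
    rintro y ⟨x, hx, rfl⟩
    apply Real.sSup_nonneg'
    refine ⟨0 * x + gameVal1 K t (some x) (s + switchInc last x) (W + 0),
      ⟨0, by constructor <;> norm_num, rfl⟩, ?_⟩
    have := ih (some x) (s + switchInc last x) (W + 0)
    linarith

lemma gv_le_of_strategy (K t : ℕ) (last : Option ℝ) (s : ℕ) (W : ℝ) (x : ℝ)
    (hx : x ∈ Set.Icc (-1:ℝ) 1) (hs : s + switchInc last x < K) {c : ℝ} (hc : 0 ≤ c)
    (h : ∀ w : ℝ, w ∈ Set.Icc (-1:ℝ) 1 →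
      w * x + gameVal1 K t (some x) (s + switchInc last x) (W + w) ≤ c) :
    gameVal1 K (t+1) last s W ≤ c := by
  rw [gameVal1_succ]
  have hbb : BddBelow ((fun x : ℝ =>
        sSup ((fun w : ℝ => w * x + gameVal1 K t (some x) (s + switchInc last x) (W + w)) ''
          Set.Icc (-1 : ℝ) 1)) ''
        {x : ℝ | x ∈ Set.Icc (-1 : ℝ) 1 ∧ s + switchInc last x < K}) := by
    refine ⟨0, ?_⟩
    rintro y ⟨x', hx', rfl⟩
    apply Real.sSup_nonneg'
    refine ⟨0 * x' + gameVal1 K t (some x') (s + switchInc last x') (W + 0),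
      ⟨0, by constructor <;> norm_num, rfl⟩, ?_⟩
    have := gv_nonneg K t (some x') (s + switchInc last x') (W + 0)
    linarith
  have hmem : sSup ((fun w : ℝ => w * x + gameVal1 K t (some x) (s + switchInc last x) (W + w)) ''
      Set.Icc (-1 : ℝ) 1) ∈ ((fun x : ℝ =>
        sSup ((fun w : ℝ => w * x + gameVal1 K t (some x) (s + switchInc last x) (W + w)) ''
          Set.Icc (-1 : ℝ) 1)) ''
        {x : ℝ | x ∈ Set.Icc (-1 : ℝ) 1 ∧ s + switchInc last x < K}) :=
    ⟨x, ⟨hx, hs⟩, rfl⟩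
  refine csInf_le_of_le hbb hmem ?_
  apply Real.sSup_le _ hc
  rintro y ⟨w, hw, rfl⟩
  exact h w hw

/-! ### Main induction -/

lemma main_ind (K : ℕ) (hL : 1 ≤ L) :
    ∀ t : ℕ, ∀ jj rr s : ℕ, rr + 1 ≤ L → t = jj*L + (rr+1) →
    (∀ W x : ℝ, x ∈ Set.Icc (-1:ℝ) 1 → s + (jj+1) ≤ K →
      gameVal1 K t (some x) s W ≤
        max (x*((rr:ℝ)+1) + Vb L jj (W+((rr:ℝ)+1))) (-(x*((rr:ℝ)+1)) + Vb L jj (W-((rr:ℝ)+1))))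
    ∧ (∀ (W : ℝ) (last : Option ℝ), s + (jj+1) ≤ K → (last = none ∨ s + (jj+1) < K) →
      gameVal1 K t last s W ≤ (Vb L jj (W+((rr:ℝ)+1)) + Vb L jj (W-((rr:ℝ)+1)))/2) := by
  intro t
  induction t using Nat.strong_induction_on with
  | _ t IH =>
  intro jj rr s hrL ht
  subst ht
  -- the common step bound
  have step : ∀ x₀ : ℝ, x₀ ∈ Set.Icc (-1:ℝ) 1 → ∀ s' : ℕ, s' + (jj+1) ≤ K →
      ∀ W w : ℝ, w ∈ Set.Icc (-1:ℝ) 1 →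
      w*x₀ + gameVal1 K (jj*L + rr) (some x₀) s' (W+w) ≤
        max (x₀*((rr:ℝ)+1) + Vb L jj (W+((rr:ℝ)+1)))
            (-(x₀*((rr:ℝ)+1)) + Vb L jj (W-((rr:ℝ)+1))) := by
    intro x₀ hx₀ s' hs' W w hw
    obtain ⟨hw1, hw2⟩ := hw
    obtain ⟨hx1, hx2⟩ := hx₀
    rcases Nat.eq_zero_or_pos rr with hrr | hrr
    · subst hrr
      have key : gameVal1 K (jj*L + 0) (some x₀) s' (W+w) ≤ Vb L jj (W+w) := by
        rcases Nat.eq_zero_or_pos jj with hjj | hjj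
        · subst hjj
          have hz : 0*L + 0 = 0 := by omega
          rw [hz]
          have : gameVal1 K 0 (some x₀) s' (W+w) = |W+w| := rfl
          rw [this, vb_zero hL]
        · obtain ⟨kk, rfl⟩ : ∃ kk, jj = kk + 1 := ⟨jj - 1, by omega⟩
          have hlt : (kk+1)*L + 0 < (kk+1)*L + (0+1) := Nat.add_lt_add_left (by norm_num) _
          have heq : (kk+1)*L + 0 = kk*L + ((L-1)+1) := by
            have : (L-1)+1 = L := by omega
            rw [this, Nat.succ_mul, Nat.add_zero]
          rw [heq]
          have hIH := (IH (kk*L + ((L-1)+1)) (by rw [← heq]; exact hlt) kk (L-1) s'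
            (by omega) rfl).2 (W+w) (some x₀) (by omega) (Or.inr (by omega))
          refine hIH.trans ?_
          have hcast : ((L-1:ℕ):ℝ)+1 = (L:ℝ) := by
            have h1 : (1:ℕ) ≤ L := hL
            push_cast [h1]
            ring
          rw [hcast, vb_succ hL kk (W+w)]
      have hseg := vb_seg hL jj x₀ W (((0:ℕ):ℝ)+1) w (by norm_num)
        (by norm_num; linarith) (by norm_num; linarith)
      calc w*x₀ + gameVal1 K (jj*L + 0) (some x₀) s' (W+w)
          ≤ w*x₀ + Vb L jj (W+w) := by linarith
        _ = x₀*w + Vb L jj (W+w) := by ring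
        _ ≤ _ := hseg
    · obtain ⟨qq, rfl⟩ : ∃ qq, rr = qq + 1 := ⟨rr - 1, by omega⟩
      have hlt : jj*L + (qq+1) < jj*L + (qq+1+1) := Nat.add_lt_add_left (by omega) _
      have hIH := (IH (jj*L + (qq+1)) hlt jj qq s' (by omega) rfl).1 (W+w) x₀ ⟨hx1, hx2⟩ hs'
      have hq1 : (0:ℝ) < ((qq+1:ℕ):ℝ)+1 := by positivity
      have hcast : ((qq+1:ℕ):ℝ) = (qq:ℝ)+1 := by push_cast; ring
      have hseg1 := vb_seg hL jj x₀ W (((qq+1:ℕ):ℝ)+1) (w + ((qq:ℝ)+1)) hq1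
        (by rw [hcast]; linarith) (by rw [hcast]; linarith)
      have hseg2 := vb_seg hL jj x₀ W (((qq+1:ℕ):ℝ)+1) (w - ((qq:ℝ)+1)) hq1
        (by rw [hcast]; linarith) (by rw [hcast]; linarith)
      have e1 : W + (w + ((qq:ℝ)+1)) = (W+w) + ((qq:ℝ)+1) := by ring
      have e2 : W + (w - ((qq:ℝ)+1)) = (W+w) - ((qq:ℝ)+1) := by ring
      rw [e1] at hseg1
      rw [e2] at hseg2
      have h0 : w*x₀ + gameVal1 K (jj*L + (qq+1)) (some x₀) s' (W+w) ≤
          w*x₀ + max (x₀*((qq:ℝ)+1) + Vb L jj ((W+w)+((qq:ℝ)+1)))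
            (-(x₀*((qq:ℝ)+1)) + Vb L jj ((W+w)-((qq:ℝ)+1))) := by linarith
      refine le_trans h0 ?_
      rcases max_cases (x₀*((qq:ℝ)+1) + Vb L jj ((W+w)+((qq:ℝ)+1)))
        (-(x₀*((qq:ℝ)+1)) + Vb L jj ((W+w)-((qq:ℝ)+1))) with ⟨hm, _⟩ | ⟨hm, _⟩ <;> rw [hm]
      · calc w*x₀ + (x₀*((qq:ℝ)+1) + Vb L jj ((W+w)+((qq:ℝ)+1)))
            = x₀*(w + ((qq:ℝ)+1)) + Vb L jj ((W+w)+((qq:ℝ)+1)) := by ring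
          _ ≤ _ := hseg1
      · calc w*x₀ + (-(x₀*((qq:ℝ)+1)) + Vb L jj ((W+w)-((qq:ℝ)+1)))
            = x₀*(w - ((qq:ℝ)+1)) + Vb L jj ((W+w)-((qq:ℝ)+1)) := by ring
          _ ≤ _ := hseg2
  constructor
  · -- part (a)
    intro W x hx hsK
    have hsw : switchInc (some x) x = 0 := by simp [switchInc]
    have hc : (0:ℝ) ≤ max (x*((rr:ℝ)+1) + Vb L jj (W+((rr:ℝ)+1)))
        (-(x*((rr:ℝ)+1)) + Vb L jj (W-((rr:ℝ)+1))) := by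
      apply max_nonneg_of_add
      have h1 := vb_nonneg L jj (W+((rr:ℝ)+1))
      have h2 := vb_nonneg L jj (W-((rr:ℝ)+1))
      linarith
    refine gv_le_of_strategy K (jj*L + rr) (some x) s W x hx (by rw [hsw]; omega) hc ?_
    intro w hw
    have := step x hx s hsK W w hw
    simpa [hsw] using this
  · -- part (b)
    intro W last hsK hdisj
    set r : ℝ := (rr:ℝ)+1 with hr
    have hrpos : (0:ℝ) < r := by positivity
    set xs : ℝ := (Vb L jj (W-r) - Vb L jj (W+r))/(2*r) with hxs
    have hxsI : xs ∈ Set.Icc (-1:ℝ) 1 := by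
      have hlip : |Vb L jj (W-r) - Vb L jj (W+r)| ≤ 2*r := by
        have h := vb_lip hL jj (W-r) (W+r)
        have e : (W-r) - (W+r) = -(2*r) := by ring
        rw [e, abs_neg] at h
        rwa [abs_of_pos (show (0:ℝ) < 2*r by linarith)] at h
      have habs : |xs| ≤ 1 := by
        rw [hxs, abs_div, abs_of_pos (show (0:ℝ) < 2*r by linarith)]
        rw [div_le_one (by linarith)]
        simpa using hlip
      exact abs_le.mp habs
    have hIcc := hxsI
    have hincK : s + switchInc last xs < K := by
      rcases last with _ | y
      · simp only [switchInc]
        omega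
      · have h1 : switchInc (some y) xs ≤ 1 := by
          simp only [switchInc]
          split <;> omega
        rcases hdisj with h | h
        · exact absurd h (by simp)
        · omega
    have hs' : (s + switchInc last xs) + (jj+1) ≤ K := by
      rcases last with _ | y
      · simp only [switchInc]
        omega
      · have h1 : switchInc (some y) xs ≤ 1 := by
          simp only [switchInc]
          split <;> omega
        rcases hdisj with h | h
        · exact absurd h (by simp)
        · omega
    have hc : (0:ℝ) ≤ (Vb L jj (W+r) + Vb L jj (W-r))/2 := by
      have h1 := vb_nonneg L jj (W+r)
      have h2 := vb_nonneg L jj (W-r)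
      linarith
    refine gv_le_of_strategy K (jj*L + rr) last s W xs hxsI hincK hc ?_
    intro w hw
    have hstep := step xs hxsI (s + switchInc last xs) hs' W w hw
    have hxr : xs * r = (Vb L jj (W-r) - Vb L jj (W+r))/2 := by
      rw [hxs]
      field_simp
    have e1 : xs*r + Vb L jj (W+r) = (Vb L jj (W+r) + Vb L jj (W-r))/2 := by
      rw [hxr]; ring
    have e2 : -(xs*r) + Vb L jj (W-r) = (Vb L jj (W+r) + Vb L jj (W-r))/2 := by
      rw [hxr]; ring
    calc w*xs + gameVal1 K (jj*L + rr) (some xs) (s + switchInc last xs) (W+w)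
        ≤ max (xs*r + Vb L jj (W+r)) (-(xs*r) + Vb L jj (W-r)) := hstep
      _ = (Vb L jj (W+r) + Vb L jj (W-r))/2 := by rw [e1, e2, max_self]

/-- For all integers `T ≥ K ≥ 2`, the minimax regret of one-dimensional
switching-constrained online linear optimization satisfies
`R₁(T,K) ≤ (√3/2) · ⌈T/K⌉ · √K`. -/
theorem stmt4 (T K : ℕ) (hK : 2 ≤ K) (hTK : K ≤ T) :
    R1 T K ≤ Real.sqrt 3 / 2 * (⌈(T : ℝ) / (K : ℝ)⌉ : ℝ) * Real.sqrt K := by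
  have hT2 : 2 ≤ T := le_trans hK hTK
  have hK0 : 0 < K := by omega
  obtain ⟨q, hqdef⟩ : ∃ q, (T-1)/K = q := ⟨_, rfl⟩
  set L := q + 1 with hLdef
  have hL1 : 1 ≤ L := by omega
  have hL0 : 0 < L := hL1
  have hKq : q*K ≤ T-1 := by rw [← hqdef]; exact Nat.div_mul_le_self _ _
  have hKq2 : T-1 < q*K + K := by rw [← hqdef]; exact Nat.lt_div_mul_add hK0
  obtain ⟨q2, hq2def⟩ : ∃ q2, (T-1)/L = q2 := ⟨_, rfl⟩
  set M := q2 + 1 with hM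
  have hLq : q2*L ≤ T-1 := by rw [← hq2def]; exact Nat.div_mul_le_self _ _
  have hLq2 : T-1 < q2*L + L := by rw [← hq2def]; exact Nat.lt_div_mul_add hL0
  have hMK : M ≤ K := by
    have hqk : q2 < K := by
      rw [← hq2def]
      rw [Nat.div_lt_iff_lt_mul hL0]
      calc T - 1 < q*K + K := hKq2
        _ = K*L := by rw [hLdef]; ring
    omega
  have hM2 : 2 ≤ M := by
    have hq21 : 1 ≤ q2 := by
      rw [← hq2def]
      apply (Nat.one_le_div_iff hL0).mpr
      have hdk : (T-1)/K ≤ (T-1)/2 := Nat.div_le_div_left hK (by norm_num)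
      rw [hqdef] at hdk
      omega
    omega
  set r₀ := T - q2*L with hr₀
  have hfacts : 1 ≤ r₀ ∧ r₀ ≤ L ∧ T = q2*L + r₀ := by
    rw [hr₀]
    generalize hG : q2*L = A at hLq hLq2
    omega
  obtain ⟨hr1, hrL, hTeq⟩ := hfacts
  have hmain := (main_ind (L := L) K hL1 T q2 (r₀-1) 0
    (by omega)
    (by have h : (r₀-1)+1 = r₀ := by omega
        rw [h]; exact hTeq)).2 0 none (by omega) (Or.inl rfl)
  have hcast : ((r₀-1:ℕ):ℝ)+1 = (r₀:ℝ) := by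
    have h1 : (1:ℕ) ≤ r₀ := hr1
    push_cast [h1]
    ring
  rw [hcast] at hmain
  have hfin : gameVal1 K T none 0 0 ≤ (L:ℝ) * fpot M 0 := by
    refine hmain.trans ?_
    have e1 : (0:ℝ) + (r₀:ℝ) = (r₀:ℝ) := by ring
    have e2 : (0:ℝ) - (r₀:ℝ) = -(r₀:ℝ) := by ring
    rw [e1, e2, vb_even]
    have hmono : Vb L q2 (r₀:ℝ) ≤ Vb L q2 (L:ℝ) :=
      vb_mono hL1 q2 _ _ (by positivity) (by exact_mod_cast hrL)
    have hVL : Vb L q2 (L:ℝ) = (L:ℝ) * fpot M 0 := by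
      unfold Vb
      rw [div_self (show (L:ℝ) ≠ 0 by positivity)]
      rw [hM, fpot_succ_zero]
    linarith
  have hfM : fpot M 0 ≤ Real.sqrt 3 / 2 * Real.sqrt M := fpot_zero_bound M hM2
  have hMKr : Real.sqrt M ≤ Real.sqrt K := Real.sqrt_le_sqrt (by exact_mod_cast hMK)
  have hceil : (L:ℝ) ≤ (⌈(T:ℝ)/(K:ℝ)⌉ : ℝ) := by
    have h1 : ((q:ℕ):ℝ) < (T:ℝ)/(K:ℝ) := by
      rw [lt_div_iff₀ (show (0:ℝ) < K by exact_mod_cast hK0)]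
      have h2 : q*K < T := by
        generalize hG : q*K = A at hKq ⊢
        omega
      exact_mod_cast h2
    have h3 : (q:ℤ) < ⌈(T:ℝ)/(K:ℝ)⌉ := Int.lt_ceil.mpr (by exact_mod_cast h1)
    have h4 : (q:ℤ) + 1 ≤ ⌈(T:ℝ)/(K:ℝ)⌉ := h3
    calc (L:ℝ) = (q:ℝ) + 1 := by rw [hLdef]; push_cast; ring
      _ ≤ _ := by exact_mod_cast h4
  have hnn : (0:ℝ) ≤ Real.sqrt 3 / 2 * Real.sqrt K := by positivity
  calc R1 T K = gameVal1 K T none 0 0 := rfl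
    _ ≤ (L:ℝ) * fpot M 0 := hfin
    _ ≤ (L:ℝ) * (Real.sqrt 3 / 2 * Real.sqrt M) := by
        apply mul_le_mul_of_nonneg_left hfM (Nat.cast_nonneg L)
    _ ≤ (L:ℝ) * (Real.sqrt 3 / 2 * Real.sqrt K) := by
        apply mul_le_mul_of_nonneg_left _ (Nat.cast_nonneg L)
        apply mul_le_mul_of_nonneg_left hMKr (by positivity)
    _ ≤ (⌈(T:ℝ)/(K:ℝ)⌉ : ℝ) * (Real.sqrt 3 / 2 * Real.sqrt K) :=
        mul_le_mul_of_nonneg_right hceil hnn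
    _ = Real.sqrt 3 / 2 * (⌈(T:ℝ)/(K:ℝ)⌉ : ℝ) * Real.sqrt K := by ring
end

section
/- For every dimension n ≥ 2 and all integers T ≥ K ≥ 1, the minimax regret of switching-constrained online linear optimization over the Euclidean unit ball satisfies R_n(T,K) ≤ ⌈T/K⌉ · √K ≤ 2T/√K. -/
open scoped Classical

namespace SCAux

section

variable {n K : ℕ}

local notation "E" => EuclideanSpace ℝ (Fin n)

lemma inc_same (x : E) : (switchIncE (some x) x = 0) := by
  simp [switchIncE]

lemma inc_le_one (last : Option E) (x : E) : switchIncE last x ≤ 1 := by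
  cases last with
  | none => simp [switchIncE]
  | some y => simp only [switchIncE]; split <;> omega

lemma gv_bounds : ∀ (t : ℕ) (last : Option E) (s : ℕ) (W : E),
    0 ≤ gameValE n K t last s W ∧ gameValE n K t last s W ≤ 2 * t + ‖W‖ := by
  intro t
  induction t with
  | zero =>
    intro last s W
    rw [show gameValE n K 0 last s W = ‖W‖ from by simp [gameValE]]
    exact ⟨norm_nonneg _, by simp⟩
  | succ t ih =>
    intro last s W
    have hF : ∀ x : E, ‖x‖ ≤ 1 →
        0 ≤ sSup ((fun w : E =>
          (inner ℝ w x : ℝ) + gameValE n K t (some x) (s + switchIncE last x) (W + w)) ''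
          {w : E | ‖w‖ ≤ 1}) ∧
        sSup ((fun w : E =>
          (inner ℝ w x : ℝ) + gameValE n K t (some x) (s + switchIncE last x) (W + w)) ''
          {w : E | ‖w‖ ≤ 1}) ≤ 2 * (t + 1 : ℕ) + ‖W‖ := by
      intro x hx
      set f : E → ℝ := fun w =>
        (inner ℝ w x : ℝ) + gameValE n K t (some x) (s + switchIncE last x) (W + w) with hf
      have hub : ∀ a ∈ f '' {w : E | ‖w‖ ≤ 1}, a ≤ 2 * (t + 1 : ℕ) + ‖W‖ := by
        rintro a ⟨w, hw, rfl⟩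
        simp only [Set.mem_setOf_eq] at hw
        have h1 : (inner ℝ w x : ℝ) ≤ 1 := by
          calc (inner ℝ w x : ℝ) ≤ ‖w‖ * ‖x‖ := real_inner_le_norm w x
          _ ≤ 1 := mul_le_one₀ hw (norm_nonneg _) hx
        have h2 := (ih (some x) (s + switchIncE last x) (W + w)).2
        have h3 : ‖W + w‖ ≤ ‖W‖ + 1 := by
          calc ‖W + w‖ ≤ ‖W‖ + ‖w‖ := norm_add_le _ _
          _ ≤ ‖W‖ + 1 := by linarith
        simp only [hf]
        push_cast
        linarith
      have hba : BddAbove (f '' {w : E | ‖w‖ ≤ 1}) :=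
        ⟨2 * (t + 1 : ℕ) + ‖W‖, fun a ha => hub a ha⟩
      have hmem : f 0 ∈ f '' {w : E | ‖w‖ ≤ 1} :=
        Set.mem_image_of_mem f (by simp)
      have h0 : 0 ≤ f 0 := by
        simp only [hf, inner_zero_left, add_zero, zero_add]
        exact (ih (some x) (s + switchIncE last x) W).1
      refine ⟨h0.trans (le_csSup hba hmem), csSup_le ⟨f 0, hmem⟩ hub⟩
    rw [show gameValE n K (t + 1) last s W = sInf ((fun x : E =>
        sSup ((fun w : E =>
          (inner ℝ w x : ℝ) + gameValE n K t (some x) (s + switchIncE last x) (W + w)) ''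
          {w : E | ‖w‖ ≤ 1})) ''
        {x : E | ‖x‖ ≤ 1 ∧ s + switchIncE last x < K}) from by rw [gameValE]]
    constructor
    · apply Real.sInf_nonneg
      rintro a ⟨x, hxm, rfl⟩
      exact (hF x hxm.1).1
    · rcases Set.eq_empty_or_nonempty ((fun x : E =>
        sSup ((fun w : E =>
          (inner ℝ w x : ℝ) + gameValE n K t (some x) (s + switchIncE last x) (W + w)) ''
          {w : E | ‖w‖ ≤ 1})) ''
        {x : E | ‖x‖ ≤ 1 ∧ s + switchIncE last x < K}) with he | hne
      · rw [he, Real.sInf_empty]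
        positivity
      · obtain ⟨a, x, hxm, rfl⟩ := hne
        have hbb : BddBelow ((fun x : E =>
            sSup ((fun w : E =>
              (inner ℝ w x : ℝ) + gameValE n K t (some x) (s + switchIncE last x) (W + w)) ''
              {w : E | ‖w‖ ≤ 1})) ''
            {x : E | ‖x‖ ≤ 1 ∧ s + switchIncE last x < K}) := by
          refine ⟨0, ?_⟩
          rintro b ⟨y, hym, rfl⟩
          exact (hF y hym.1).1
        exact (csInf_le hbb (Set.mem_image_of_mem _ hxm)).trans (hF x hxm.1).2

lemma gv_nonneg (t : ℕ) (last : Option E) (s : ℕ) (W : E) :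
    0 ≤ gameValE n K t last s W := (gv_bounds t last s W).1

lemma gv_le (t : ℕ) (last : Option E) (s : ℕ) (W : E) :
    gameValE n K t last s W ≤ 2 * t + ‖W‖ := (gv_bounds t last s W).2

lemma gv_step (t : ℕ) (last : Option E) (s : ℕ) (W x₀ : E)
    (h₀ : ‖x₀‖ ≤ 1) (hsw : s + switchIncE last x₀ < K) (C : ℝ)
    (hC : ∀ w : E, ‖w‖ ≤ 1 →
      (inner ℝ w x₀ : ℝ) + gameValE n K t (some x₀) (s + switchIncE last x₀) (W + w) ≤ C) :
    gameValE n K (t + 1) last s W ≤ C := by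
  have hF0 : ∀ x : E, ‖x‖ ≤ 1 →
      0 ≤ sSup ((fun w : E =>
        (inner ℝ w x : ℝ) + gameValE n K t (some x) (s + switchIncE last x) (W + w)) ''
        {w : E | ‖w‖ ≤ 1}) := by
    intro x hx
    set f : E → ℝ := fun w =>
      (inner ℝ w x : ℝ) + gameValE n K t (some x) (s + switchIncE last x) (W + w) with hf
    have hba : BddAbove (f '' {w : E | ‖w‖ ≤ 1}) := by
      refine ⟨2 * t + ‖W‖ + 2, ?_⟩
      rintro a ⟨w, hw, rfl⟩
      simp only [Set.mem_setOf_eq] at hw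
      have h1 : (inner ℝ w x : ℝ) ≤ 1 := by
        calc (inner ℝ w x : ℝ) ≤ ‖w‖ * ‖x‖ := real_inner_le_norm w x
        _ ≤ 1 := mul_le_one₀ hw (norm_nonneg _) hx
      have h2 := gv_le (n := n) (K := K) t (some x) (s + switchIncE last x) (W + w)
      have h3 : ‖W + w‖ ≤ ‖W‖ + 1 := by
        calc ‖W + w‖ ≤ ‖W‖ + ‖w‖ := norm_add_le _ _
        _ ≤ ‖W‖ + 1 := by linarith
      simp only [hf]
      linarith
    have hmem : f 0 ∈ f '' {w : E | ‖w‖ ≤ 1} := Set.mem_image_of_mem f (by simp)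
    have h0 : 0 ≤ f 0 := by
      simp only [hf, inner_zero_left, add_zero, zero_add]
      exact gv_nonneg t (some x) (s + switchIncE last x) W
    exact h0.trans (le_csSup hba hmem)
  rw [show gameValE n K (t + 1) last s W = sInf ((fun x : E =>
      sSup ((fun w : E =>
        (inner ℝ w x : ℝ) + gameValE n K t (some x) (s + switchIncE last x) (W + w)) ''
        {w : E | ‖w‖ ≤ 1})) ''
      {x : E | ‖x‖ ≤ 1 ∧ s + switchIncE last x < K}) from by rw [gameValE]]
  have hbb : BddBelow ((fun x : E =>
      sSup ((fun w : E =>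
        (inner ℝ w x : ℝ) + gameValE n K t (some x) (s + switchIncE last x) (W + w)) ''
        {w : E | ‖w‖ ≤ 1})) ''
      {x : E | ‖x‖ ≤ 1 ∧ s + switchIncE last x < K}) := by
    refine ⟨0, ?_⟩
    rintro b ⟨y, hym, rfl⟩
    exact hF0 y hym.1
  refine (csInf_le hbb (Set.mem_image_of_mem _
      (show x₀ ∈ {x : E | ‖x‖ ≤ 1 ∧ s + switchIncE last x < K} from ⟨h₀, hsw⟩))).trans ?_
  apply csSup_le
  · exact ⟨_, Set.mem_image_of_mem _ (by simp : (0:E) ∈ {w : E | ‖w‖ ≤ 1})⟩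
  · rintro a ⟨w, hw, rfl⟩
    exact hC w hw

lemma core (W v : E) (mR c : ℝ) (hm : 1 ≤ mR) (hc : 0 ≤ c) (hv : ‖v‖ ≤ mR) :
    (inner ℝ v (-(Real.sqrt (‖W‖ ^ 2 + mR ^ 2 + c))⁻¹ • W) : ℝ)
      + Real.sqrt (‖W + v‖ ^ 2 + c) ≤ Real.sqrt (‖W‖ ^ 2 + mR ^ 2 + c) := by
  set S : ℝ := Real.sqrt (‖W‖ ^ 2 + mR ^ 2 + c) with hSdef
  have hargpos : (0:ℝ) < ‖W‖ ^ 2 + mR ^ 2 + c := by nlinarith [norm_nonneg W]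
  have hS : 0 < S := Real.sqrt_pos.mpr hargpos
  have hS2 : S ^ 2 = ‖W‖ ^ 2 + mR ^ 2 + c := Real.sq_sqrt hargpos.le
  set a : ℝ := (inner ℝ W v : ℝ) with ha
  have hinner : (inner ℝ v (-(S⁻¹) • W) : ℝ) = -(S⁻¹) * a := by
    rw [real_inner_smul_right]
    congr 1
    exact real_inner_comm W v
  have haW : |a| ≤ mR * ‖W‖ := by
    calc |a| ≤ ‖W‖ * ‖v‖ := abs_real_inner_le_norm W v
    _ ≤ ‖W‖ * mR := mul_le_mul_of_nonneg_left hv (norm_nonneg _)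
    _ = mR * ‖W‖ := mul_comm _ _
  have hnormsq : ‖W + v‖ ^ 2 = ‖W‖ ^ 2 + 2 * a + ‖v‖ ^ 2 := by
    rw [@norm_add_sq_real, ha]
  have hvsq : ‖v‖ ^ 2 ≤ mR ^ 2 := by nlinarith [norm_nonneg v]
  have step1 : Real.sqrt (‖W + v‖ ^ 2 + c) ≤ Real.sqrt (S ^ 2 + 2 * a) := by
    apply Real.sqrt_le_sqrt
    rw [hnormsq, hS2]
    linarith
  have habs := abs_le.mp haW
  have hnum : 0 ≤ S ^ 2 + a := by nlinarith [norm_nonneg W]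
  have hdivnn : 0 ≤ (S ^ 2 + a) / S := div_nonneg hnum hS.le
  have step2 : Real.sqrt (S ^ 2 + 2 * a) ≤ (S ^ 2 + a) / S := by
    have hkey : S ^ 2 + 2 * a ≤ ((S ^ 2 + a) / S) ^ 2 := by
      rw [div_pow, le_div_iff₀ (by positivity)]
      nlinarith [sq_nonneg a]
    calc Real.sqrt (S ^ 2 + 2 * a) ≤ Real.sqrt (((S ^ 2 + a) / S) ^ 2) :=
          Real.sqrt_le_sqrt hkey
    _ = (S ^ 2 + a) / S := Real.sqrt_sq hdivnn
  have hfin : -(S⁻¹) * a + (S ^ 2 + a) / S = S := by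
    field_simp
    ring
  rw [hinner]
  linarith [step1.trans step2]

lemma InB (m b : ℕ) (x : E) (hx : ‖x‖ ≤ 1) (s : ℕ) (hsK : s < K)
    (HB : ∀ W : E, gameValE n K (b * m) (some x) s W ≤
      Real.sqrt (‖W‖ ^ 2 + b * (m : ℝ) ^ 2)) :
    ∀ (r : ℕ) (W : E) (C : ℝ),
      (∀ u : E, ‖u‖ ≤ (r : ℝ) →
        (inner ℝ u x : ℝ) + Real.sqrt (‖W + u‖ ^ 2 + b * (m : ℝ) ^ 2) ≤ C) →
      gameValE n K (r + b * m) (some x) s W ≤ C := by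
  intro r
  induction r with
  | zero =>
    intro W C hC
    have h0 := hC 0 (by simp)
    simp only [inner_zero_left, add_zero, zero_add] at h0
    rw [Nat.zero_add]
    exact (HB W).trans h0
  | succ r ih =>
    intro W C hC
    rw [show r + 1 + b * m = (r + b * m) + 1 from by omega]
    have hsw : s + switchIncE (some x) x < K := by
      rw [inc_same]; omega
    apply gv_step (r + b * m) (some x) s W x hx hsw C
    intro w hw
    have hih := ih (W + w) (C - (inner ℝ w x : ℝ)) ?_
    · rw [inc_same] at *
      have : s + 0 = s := by omega
      rw [this]
      linarith [hih]
    · intro u hu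
      have hwu : ‖w + u‖ ≤ ((r + 1 : ℕ) : ℝ) := by
        push_cast
        calc ‖w + u‖ ≤ ‖w‖ + ‖u‖ := norm_add_le _ _
        _ ≤ 1 + r := by push_cast at hu ⊢; linarith
        _ = r + 1 := by ring
      have h := hC (w + u) hwu
      rw [inner_add_left] at h
      rw [show W + w + u = W + (w + u) from by rw [add_assoc]]
      linarith

lemma Bnd (m : ℕ) (hm : 1 ≤ m) :
    ∀ (b : ℕ) (last : Option E) (s : ℕ) (W : E),
      (s + b < K ∨ (last = none ∧ s + b ≤ K)) →
      gameValE n K (b * m) last s W ≤ Real.sqrt (‖W‖ ^ 2 + b * (m : ℝ) ^ 2) := by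
  intro b
  induction b with
  | zero =>
    intro last s W _
    rw [show (0 : ℕ) * m = 0 from by omega,
      show gameValE n K 0 last s W = ‖W‖ from by simp [gameValE]]
    rw [show ((0:ℕ) : ℝ) * (m : ℝ) ^ 2 = 0 from by push_cast; ring, add_zero,
      Real.sqrt_sq (norm_nonneg _)]
  | succ b ih =>
    intro last s W hs
    have hmR : (1 : ℝ) ≤ (m : ℝ) := by exact_mod_cast hm
    have hc : (0 : ℝ) ≤ b * (m : ℝ) ^ 2 := by positivity
    set c : ℝ := b * (m : ℝ) ^ 2 with hcdef
    set S : ℝ := Real.sqrt (‖W‖ ^ 2 + (m : ℝ) ^ 2 + c) with hSdef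
    have hargpos : (0:ℝ) < ‖W‖ ^ 2 + (m : ℝ) ^ 2 + c := by nlinarith [norm_nonneg W]
    have hSpos : 0 < S := Real.sqrt_pos.mpr hargpos
    have hWS : ‖W‖ ≤ S := by
      rw [hSdef]
      calc ‖W‖ = Real.sqrt (‖W‖ ^ 2) := (Real.sqrt_sq (norm_nonneg _)).symm
      _ ≤ _ := Real.sqrt_le_sqrt (by nlinarith)
    set x : E := -S⁻¹ • W with hxdef
    have hxn : ‖x‖ ≤ 1 := by
      have h1 : ‖x‖ = S⁻¹ * ‖W‖ := by
        rw [hxdef, norm_smul, Real.norm_eq_abs, abs_neg, abs_of_pos (inv_pos.mpr hSpos)]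
      rw [h1]
      calc S⁻¹ * ‖W‖ ≤ S⁻¹ * S := mul_le_mul_of_nonneg_left hWS (by positivity)
      _ = 1 := inv_mul_cancel₀ hSpos.ne' 
    have hinc := inc_le_one (n := n) last x
    have hincnone : last = none → switchIncE last x = 0 := by
      intro h; rw [h]; rfl
    set s' : ℕ := s + switchIncE last x with hs'def
    have hs'b : s' + b < K := by
      rcases hs with h | ⟨hnone, h⟩
      · omega
      · have := hincnone hnone; omega
    have hs'K : s' < K := by omega
    have hHB : ∀ W' : E, gameValE n K (b * m) (some x) s' W' ≤
        Real.sqrt (‖W'‖ ^ 2 + b * (m : ℝ) ^ 2) := fun W' => ih (some x) s' W' (Or.inl hs'b)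
    have hSeq : S = Real.sqrt (‖W‖ ^ 2 + ((b + 1 : ℕ) : ℝ) * (m : ℝ) ^ 2) := by
      rw [hSdef, hcdef]; congr 1; push_cast; ring
    rw [show (b + 1) * m = (m - 1 + b * m) + 1 from by
      have h : (b + 1) * m = b * m + m := by ring
      omega, ← hSeq]
    apply gv_step (m - 1 + b * m) last s W x hxn hs'K S
    intro w hw
    have happ := InB m b x hxn s' hs'K hHB (m - 1) (W + w) (S - (inner ℝ w x : ℝ)) ?_
    · show (inner ℝ w x : ℝ) + gameValE n K (m - 1 + b * m) (some x) s' (W + w) ≤ S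
      linarith [happ]
    · intro u hu
      have hmm1 : ((m - 1 : ℕ) : ℝ) = (m : ℝ) - 1 := by
        push_cast [Nat.cast_sub hm]; ring
      have hv : ‖w + u‖ ≤ (m : ℝ) := by
        calc ‖w + u‖ ≤ ‖w‖ + ‖u‖ := norm_add_le _ _
        _ ≤ 1 + ((m : ℝ) - 1) := by rw [hmm1] at hu; linarith
        _ = (m : ℝ) := by ring
      have hcore := core W (w + u) (m : ℝ) c hmR hc hv
      rw [← hSdef, ← hxdef, inner_add_left] at hcore
      rw [show W + w + u = W + (w + u) from by rw [add_assoc]]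
      linarith

lemma topbound (hK : 1 ≤ K) (m T : ℕ) (hm : 1 ≤ m) (hTm : T ≤ K * m) :
    gameValE n K T none 0 0 ≤ Real.sqrt ((K : ℝ) * (m : ℝ) ^ 2) := by
  set b₀ := T / m with hb₀def
  set r₀ := T % m with hr₀def
  have hT : b₀ * m + r₀ = T := by rw [Nat.mul_comm]; exact Nat.div_add_mod T m
  have hr₀m : r₀ < m := Nat.mod_lt T hm
  by_cases hr : r₀ = 0
  · have hb₀K : b₀ ≤ K := by
      have h1 : b₀ * m ≤ K * m := by omega
      exact Nat.le_of_mul_le_mul_right h1 hm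
    have h := Bnd (n := n) (K := K) m hm b₀ none 0 0 (Or.inr ⟨rfl, by omega⟩)
    rw [show b₀ * m = T from by omega] at h
    refine h.trans (Real.sqrt_le_sqrt ?_)
    have hb₀R : (b₀ : ℝ) ≤ (K : ℝ) := by exact_mod_cast hb₀K
    simp only [norm_zero]
    nlinarith [sq_nonneg (m : ℝ)]
  · have hb₀K : b₀ < K := by
      have h1 : b₀ * m < K * m := by omega
      exact Nat.lt_of_mul_lt_mul_right h1
    have hHB : ∀ W' : E, gameValE n K (b₀ * m) (some 0) 0 W' ≤
        Real.sqrt (‖W'‖ ^ 2 + b₀ * (m : ℝ) ^ 2) :=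
      fun W' => Bnd (n := n) (K := K) m hm b₀ (some 0) 0 W' (Or.inl (by omega))
    rw [show T = (r₀ - 1 + b₀ * m) + 1 from by omega]
    apply gv_step (r₀ - 1 + b₀ * m) none 0 0 0 (by simp)
      (show 0 + switchIncE none (0 : E) < K from by
        simp [switchIncE]; omega)
    intro w hw
    have hzero : (0 : ℕ) + switchIncE (none : Option E) 0 = 0 := rfl
    rw [hzero, inner_zero_right, zero_add]
    apply InB (n := n) (K := K) m b₀ 0 (by simp) 0 (by omega) hHB (r₀ - 1) ((0 : E) + w)
    intro u hu
    rw [inner_zero_right, zero_add]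
    have hr1 : ((r₀ - 1 : ℕ) : ℝ) = (r₀ : ℝ) - 1 := by
      push_cast [Nat.cast_sub (by omega : 1 ≤ r₀)]; ring
    have hwu : ‖(0 : E) + w + u‖ ≤ (m : ℝ) := by
      have hr₀R : (r₀ : ℝ) ≤ (m : ℝ) := by exact_mod_cast hr₀m.le
      calc ‖(0 : E) + w + u‖ = ‖w + u‖ := by rw [zero_add]
      _ ≤ ‖w‖ + ‖u‖ := norm_add_le _ _
      _ ≤ 1 + ((r₀ : ℝ) - 1) := by rw [hr1] at hu; linarith
      _ ≤ (m : ℝ) := by linarith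
    apply Real.sqrt_le_sqrt
    have hbK : (b₀ : ℝ) + 1 ≤ (K : ℝ) := by exact_mod_cast hb₀K
    nlinarith [norm_nonneg ((0 : E) + w + u), sq_nonneg (m : ℝ)]

end

end SCAux


/-- For every dimension `n ≥ 2` and all integers `T ≥ K ≥ 1`, the minimax regret of
switching-constrained online linear optimization over the Euclidean unit ball satisfies
`R_n(T,K) ≤ ⌈T/K⌉ · √K ≤ 2T/√K`. -/
theorem stmt5 (n T K : ℕ) (hn : 2 ≤ n) (hK : 1 ≤ K) (hTK : K ≤ T) :
    RE n T K ≤ (⌈(T : ℝ) / (K : ℝ)⌉ : ℝ) * Real.sqrt K ∧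
    (⌈(T : ℝ) / (K : ℝ)⌉ : ℝ) * Real.sqrt K ≤ 2 * (T : ℝ) / Real.sqrt K := by
  have hK0 : (0 : ℝ) < (K : ℝ) := by exact_mod_cast hK
  have hT0 : (0 : ℝ) < (T : ℝ) := by
    have : 1 ≤ T := le_trans hK hTK
    exact_mod_cast this
  have hdivpos : (0 : ℝ) < (T : ℝ) / (K : ℝ) := div_pos hT0 hK0
  have hceil_pos : 0 < ⌈(T : ℝ) / (K : ℝ)⌉ := Int.ceil_pos.mpr hdivpos
  set m : ℕ := (⌈(T : ℝ) / (K : ℝ)⌉).toNat with hmdef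
  have hmcast : (m : ℝ) = ((⌈(T : ℝ) / (K : ℝ)⌉ : ℤ) : ℝ) := by
    rw [hmdef]
    exact_mod_cast congrArg (Int.cast : ℤ → ℝ) (Int.toNat_of_nonneg hceil_pos.le)
  have hm1 : 1 ≤ m := by omega
  have hTmR : (T : ℝ) ≤ (K : ℝ) * (m : ℝ) := by
    rw [hmcast]
    have h1 := Int.le_ceil ((T : ℝ) / (K : ℝ))
    rw [div_le_iff₀ hK0] at h1
    linarith [h1]
  have hTm : T ≤ K * m := by exact_mod_cast hTmR
  have hbound := SCAux.topbound (n := n) hK m T hm1 hTm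
  have hsqeq : Real.sqrt ((K : ℝ) * (m : ℝ) ^ 2) = (m : ℝ) * Real.sqrt K := by
    rw [Real.sqrt_mul (by positivity), Real.sqrt_sq (by positivity)]
    ring
  constructor
  · show gameValE n K T none 0 0 ≤ _
    rw [← hmcast]
    calc gameValE n K T none 0 0 ≤ Real.sqrt ((K : ℝ) * (m : ℝ) ^ 2) := hbound
    _ = (m : ℝ) * Real.sqrt K := hsqeq
  · have hsK : (0 : ℝ) < Real.sqrt K := Real.sqrt_pos.mpr hK0
    have hKK : (K : ℝ) = Real.sqrt K * Real.sqrt K := (Real.mul_self_sqrt hK0.le).symm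
    have h2 : ((⌈(T : ℝ) / (K : ℝ)⌉ : ℤ) : ℝ) ≤ 2 * (T : ℝ) / (K : ℝ) := by
      have hceil := Int.ceil_lt_add_one ((T : ℝ) / (K : ℝ))
      have hone : (1 : ℝ) ≤ (T : ℝ) / (K : ℝ) := by
        rw [le_div_iff₀ hK0]
        have : (K : ℝ) ≤ (T : ℝ) := by exact_mod_cast hTK
        linarith
      have : (2 : ℝ) * (T : ℝ) / (K : ℝ) = (T : ℝ) / (K : ℝ) + (T : ℝ) / (K : ℝ) := by ring
      rw [this]
      linarith
    calc ((⌈(T : ℝ) / (K : ℝ)⌉ : ℤ) : ℝ) * Real.sqrt K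
        ≤ (2 * (T : ℝ) / (K : ℝ)) * Real.sqrt K :=
          mul_le_mul_of_nonneg_right h2 hsK.le
    _ = 2 * (T : ℝ) / Real.sqrt K := by
          rw [hKK]
          field_simp
          rw [Real.sq_sqrt hK0.le, Real.sq_sqrt hK0.le]
end

section
/- For every dimension n ≥ 1 and all integers T ≥ K ≥ 1, the minimax regret of switching-constrained online linear optimization over the ℓ∞ unit ball satisfies R∞_n(T,K) ≤ 2√(2/π) · nT/√K. -/
/-- The increment in the number of switches when the player, whose previous action is
`last` (`none` at the first round), plays `x` (vector version in `ℝⁿ`). -/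
noncomputable def switchIncP {n : ℕ} (last : Option (Fin n → ℝ)) (x : Fin n → ℝ) : ℕ :=
  match last with
  | none => 0
  | some y => if x = y then 0 else 1

/-- Backward-recursive value of the switching-constrained online linear optimization game
over the `ℓ∞` unit ball of `ℝⁿ`: both the player and the adversary play vectors of
sup-norm at most `1` (the sup norm is the canonical norm on `Fin n → ℝ`), the payoff per
round is `⟨wᵢ, xᵢ⟩ = ∑ⱼ wᵢⱼ xᵢⱼ`, the final comparator term is `‖∑ wᵢ‖₁`, and the
player's infimum ranges only over actions keeping the total number of switches strictly
below `K` (equivalently, the payoff is `+∞` as soon as `K` switches are reached). -/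
noncomputable def gameValInf (n K : ℕ) :
    ℕ → Option (Fin n → ℝ) → ℕ → (Fin n → ℝ) → ℝ
  | 0, _, _, W => ∑ i, |W i|
  | t + 1, last, s, W =>
      sInf ((fun x : Fin n → ℝ =>
        sSup ((fun w : Fin n → ℝ =>
          (∑ i, w i * x i) + gameValInf n K t (some x) (s + switchIncP last x) (W + w)) ''
          {w : Fin n → ℝ | ‖w‖ ≤ 1})) ''
        {x : Fin n → ℝ | ‖x‖ ≤ 1 ∧ s + switchIncP last x < K})

/-- `R∞_n(T,K)`: the minimax regret of `T`-round switching-constrained online linear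
optimization over the `ℓ∞` unit ball of `ℝⁿ` with fewer than `K` switches. -/
noncomputable def RInf (n T K : ℕ) : ℝ := gameValInf n K T none 0 0


lemma abs_coord_le {n : ℕ} {w : Fin n → ℝ} (h : ‖w‖ ≤ 1) (i : Fin n) : |w i| ≤ 1 := by
  have := pi_norm_le_iff_of_nonneg (zero_le_one) (x := w) |>.mp h i
  simpa [Real.norm_eq_abs] using this

lemma sum_mul_le {n : ℕ} {w x : Fin n → ℝ} (hw : ‖w‖ ≤ 1) (hx : ‖x‖ ≤ 1) :
    (∑ i, w i * x i) ≤ n := by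
  calc (∑ i, w i * x i) ≤ ∑ i, |w i * x i| := Finset.sum_le_sum fun i _ => le_abs_self _
    _ ≤ ∑ _i : Fin n, (1:ℝ) := Finset.sum_le_sum (fun i _ => by
        rw [abs_mul]
        exact mul_le_one₀ (abs_coord_le hw i) (abs_nonneg _) (abs_coord_le hx i))
    _ = n := by simp

lemma sum_abs_add_le {n : ℕ} (W : Fin n → ℝ) {w : Fin n → ℝ} (hw : ‖w‖ ≤ 1) :
    (∑ i, |(W + w) i|) ≤ (∑ i, |W i|) + n := by
  calc (∑ i, |(W + w) i|) ≤ ∑ i, (|W i| + 1) := Finset.sum_le_sum (fun i _ => by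
      calc |(W + w) i| ≤ |W i| + |w i| := abs_add_le _ _
        _ ≤ |W i| + 1 := by linarith [abs_coord_le hw i])
    _ = (∑ i, |W i|) + n := by rw [Finset.sum_add_distrib]; simp

lemma gv_bounds (n K : ℕ) : ∀ t (last : Option (Fin n → ℝ)) (s : ℕ) (W : Fin n → ℝ),
    0 ≤ gameValInf n K t last s W ∧ gameValInf n K t last s W ≤ (∑ i, |W i|) + 2*n*t := by
  intro t
  induction t with
  | zero =>
    intro last s W
    constructor
    · simp only [gameValInf]
      positivity
    · simp only [gameValInf]
      simp
  | succ t ih =>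
    intro last s W
    rw [gameValInf]
    set S := ((fun x : Fin n → ℝ =>
        sSup ((fun w : Fin n → ℝ =>
          (∑ i, w i * x i) + gameValInf n K t (some x) (s + switchIncP last x) (W + w)) ''
          {w : Fin n → ℝ | ‖w‖ ≤ 1})) ''
        {x : Fin n → ℝ | ‖x‖ ≤ 1 ∧ s + switchIncP last x < K}) with hSdef
    have hTbdd : ∀ x : Fin n → ℝ, ‖x‖ ≤ 1 → ∀ s', BddAbove ((fun w : Fin n → ℝ =>
        (∑ i, w i * x i) + gameValInf n K t (some x) s' (W + w)) ''
          {w : Fin n → ℝ | ‖w‖ ≤ 1}) := by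
      intro x hx s'
      refine ⟨(n : ℝ) + ((∑ i, |W i|) + n + 2*n*t), ?_⟩
      rintro z ⟨w, hw, rfl⟩
      have h1 := sum_mul_le hw hx
      have h2 := (ih (some x) s' (W + w)).2
      have h3 := sum_abs_add_le W hw
      simp only [Set.mem_setOf_eq] at hw
      dsimp only
      linarith
    have hSnn : ∀ y ∈ S, 0 ≤ y := by
      rintro y ⟨x, hx, rfl⟩
      simp only [Set.mem_setOf_eq] at hx
      have h0 : (0 : Fin n → ℝ) ∈ {w : Fin n → ℝ | ‖w‖ ≤ 1} := by
        simp [Set.mem_setOf_eq]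
      have hmem := Set.mem_image_of_mem (fun w : Fin n → ℝ =>
        (∑ i, w i * x i) + gameValInf n K t (some x) (s + switchIncP last x) (W + w)) h0
      have := le_csSup (hTbdd x hx.1 _) hmem
      have hnn := (ih (some x) (s + switchIncP last x) (W + 0)).1
      simp only [Pi.zero_apply, zero_mul, Finset.sum_const_zero, zero_add] at this
      dsimp only
      linarith
    constructor
    · rcases Set.eq_empty_or_nonempty S with hS | hS
      · simp [hS]
      · exact le_csInf hS (fun y hy => hSnn y hy)
    · rcases Set.eq_empty_or_nonempty S with hS | hS
      · simp [hS]; positivity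
      · obtain ⟨y, hy⟩ := hS
        obtain ⟨x, hx, rfl⟩ := hy
        simp only [Set.mem_setOf_eq] at hx
        have hle : sSup ((fun w : Fin n → ℝ =>
            (∑ i, w i * x i) + gameValInf n K t (some x) (s + switchIncP last x) (W + w)) ''
            {w : Fin n → ℝ | ‖w‖ ≤ 1}) ≤ (n : ℝ) + ((∑ i, |W i|) + n + 2*n*t) := by
          apply csSup_le
          · exact ⟨_, Set.mem_image_of_mem _ (by simp [Set.mem_setOf_eq] :
              (0 : Fin n → ℝ) ∈ {w : Fin n → ℝ | ‖w‖ ≤ 1})⟩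
          · rintro z ⟨w, hw, rfl⟩
            have h1 := sum_mul_le hw hx.1
            have h2 := (ih (some x) (s + switchIncP last x) (W + w)).2
            have h3 := sum_abs_add_le W hw
            simp only [Set.mem_setOf_eq] at hw
            dsimp only
            linarith
        have := csInf_le ⟨0, fun y hy => hSnn y hy⟩ (Set.mem_image_of_mem _
          (show x ∈ {x : Fin n → ℝ | ‖x‖ ≤ 1 ∧ s + switchIncP last x < K} from hx))
        have hcast : ((t:ℝ)+1) = ((t+1 : ℕ) : ℝ) := by push_cast; ring
        calc sInf S ≤ _ := this
          _ ≤ (n : ℝ) + ((∑ i, |W i|) + n + 2*n*t) := hle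
          _ ≤ (∑ i, |W i|) + 2*n*(t+1:ℕ) := by push_cast; linarith

lemma gv_succ_le (n K t s : ℕ) (last : Option (Fin n → ℝ)) (W : Fin n → ℝ)
    (x : Fin n → ℝ) (hx : ‖x‖ ≤ 1) (hxK : s + switchIncP last x < K) (C : ℝ)
    (hC : ∀ w : Fin n → ℝ, ‖w‖ ≤ 1 →
      (∑ i, w i * x i) + gameValInf n K t (some x) (s + switchIncP last x) (W + w) ≤ C) :
    gameValInf n K (t+1) last s W ≤ C := by
  rw [gameValInf]
  set S := ((fun x : Fin n → ℝ =>
      sSup ((fun w : Fin n → ℝ =>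
        (∑ i, w i * x i) + gameValInf n K t (some x) (s + switchIncP last x) (W + w)) ''
        {w : Fin n → ℝ | ‖w‖ ≤ 1})) ''
      {x : Fin n → ℝ | ‖x‖ ≤ 1 ∧ s + switchIncP last x < K}) with hSdef
  have hTbdd : ∀ x' : Fin n → ℝ, ‖x'‖ ≤ 1 → ∀ s', BddAbove ((fun w : Fin n → ℝ =>
      (∑ i, w i * x' i) + gameValInf n K t (some x') s' (W + w)) ''
        {w : Fin n → ℝ | ‖w‖ ≤ 1}) := by
    intro x' hx' s'
    refine ⟨(n : ℝ) + ((∑ i, |W i|) + n + 2*n*t), ?_⟩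
    rintro z ⟨w, hw, rfl⟩
    have h1 := sum_mul_le hw hx'
    have h2 := (gv_bounds n K t (some x') s' (W + w)).2
    have h3 := sum_abs_add_le W hw
    simp only [Set.mem_setOf_eq] at hw
    dsimp only
    linarith
  have hSnn : ∀ y ∈ S, 0 ≤ y := by
    rintro y ⟨x', hx', rfl⟩
    simp only [Set.mem_setOf_eq] at hx'
    have h0 : (0 : Fin n → ℝ) ∈ {w : Fin n → ℝ | ‖w‖ ≤ 1} := by simp [Set.mem_setOf_eq]
    have hmem := Set.mem_image_of_mem (fun w : Fin n → ℝ =>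
      (∑ i, w i * x' i) + gameValInf n K t (some x') (s + switchIncP last x') (W + w)) h0
    have := le_csSup (hTbdd x' hx'.1 _) hmem
    have hnn := (gv_bounds n K t (some x') (s + switchIncP last x') (W + 0)).1
    simp only [Pi.zero_apply, zero_mul, Finset.sum_const_zero, zero_add] at this
    dsimp only
    linarith
  have hmem : sSup ((fun w : Fin n → ℝ =>
      (∑ i, w i * x i) + gameValInf n K t (some x) (s + switchIncP last x) (W + w)) ''
      {w : Fin n → ℝ | ‖w‖ ≤ 1}) ∈ S :=
    Set.mem_image_of_mem _ (show x ∈ {x : Fin n → ℝ | ‖x‖ ≤ 1 ∧ s + switchIncP last x < K}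
      from ⟨hx, hxK⟩)
  calc sInf S ≤ _ := csInf_le ⟨0, fun y hy => hSnn y hy⟩ hmem
    _ ≤ C := by
      apply csSup_le
      · exact ⟨_, Set.mem_image_of_mem _ (by simp [Set.mem_setOf_eq] :
          (0 : Fin n → ℝ) ∈ {w : Fin n → ℝ | ‖w‖ ≤ 1})⟩
      · rintro z ⟨w, hw, rfl⟩
        exact hC w hw


lemma sqrt_conv (a b Q θ : ℝ) (hQ : 0 ≤ Q) (h0 : 0 ≤ θ) (h1 : θ ≤ 1) :
    Real.sqrt ((θ*a + (1-θ)*b)^2 + Q) ≤ θ * Real.sqrt (a^2+Q) + (1-θ) * Real.sqrt (b^2+Q) := by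
  set A := Real.sqrt (a^2+Q) with hAdef
  set B := Real.sqrt (b^2+Q) with hBdef
  have hA0 : 0 ≤ A := Real.sqrt_nonneg _
  have hB0 : 0 ≤ B := Real.sqrt_nonneg _
  have hA : A^2 = a^2 + Q := Real.sq_sqrt (by positivity)
  have hB : B^2 = b^2 + Q := Real.sq_sqrt (by positivity)
  have hAB : a*b + Q ≤ A*B := by
    have h1 : (a*b+Q)^2 ≤ (A*B)^2 := by nlinarith [sq_nonneg (a-b)]
    calc a*b + Q ≤ |a*b+Q| := le_abs_self _
      _ = Real.sqrt ((a*b+Q)^2) := (Real.sqrt_sq_eq_abs _).symm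
      _ ≤ Real.sqrt ((A*B)^2) := Real.sqrt_le_sqrt h1
      _ = A*B := by rw [Real.sqrt_sq (mul_nonneg hA0 hB0)]
  have hD0 : 0 ≤ θ*A + (1-θ)*B := add_nonneg (mul_nonneg h0 hA0) (mul_nonneg (by linarith) hB0)
  have hsq : (θ*a + (1-θ)*b)^2 + Q ≤ (θ*A + (1-θ)*B)^2 := by
    nlinarith [mul_nonneg h0 (sub_nonneg.mpr h1)]
  calc Real.sqrt ((θ*a + (1-θ)*b)^2 + Q) ≤ Real.sqrt ((θ*A + (1-θ)*B)^2) :=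
        Real.sqrt_le_sqrt hsq
    _ = θ*A + (1-θ)*B := Real.sqrt_sq hD0

lemma key (x W u ρ Q : ℝ) (hQ : 0 ≤ Q) (hρ : 0 < ρ) (hu : |u| ≤ ρ) :
    x*u + Real.sqrt ((W+u)^2+Q) ≤
      max (x*ρ + Real.sqrt ((W+ρ)^2+Q)) (-(x*ρ) + Real.sqrt ((W-ρ)^2+Q)) := by
  set θ := (u+ρ)/(2*ρ) with hθdef
  have hu1 : -ρ ≤ u := (abs_le.mp hu).1
  have hu2 : u ≤ ρ := (abs_le.mp hu).2
  have h0 : 0 ≤ θ := div_nonneg (by linarith) (by linarith)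
  have h1 : θ ≤ 1 := by rw [hθdef, div_le_one (by linarith)]; linarith
  have hWu : W + u = θ*(W+ρ) + (1-θ)*(W-ρ) := by
    rw [hθdef]; field_simp; ring
  have hxu : x*u = θ*(x*ρ) + (1-θ)*(-(x*ρ)) := by
    rw [hθdef]; field_simp; ring
  have hc := sqrt_conv (W+ρ) (W-ρ) Q θ hQ h0 h1
  rw [← hWu] at hc
  have := le_max_left (x*ρ + Real.sqrt ((W+ρ)^2+Q)) (-(x*ρ) + Real.sqrt ((W-ρ)^2+Q))
  have := le_max_right (x*ρ + Real.sqrt ((W+ρ)^2+Q)) (-(x*ρ) + Real.sqrt ((W-ρ)^2+Q))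
  calc x*u + Real.sqrt ((W+u)^2+Q)
      ≤ x*u + (θ * Real.sqrt ((W+ρ)^2+Q) + (1-θ) * Real.sqrt ((W-ρ)^2+Q)) := by linarith
    _ = θ*(x*ρ + Real.sqrt ((W+ρ)^2+Q)) + (1-θ)*(-(x*ρ) + Real.sqrt ((W-ρ)^2+Q)) := by
        rw [hxu]; ring
    _ ≤ θ*(max (x*ρ + Real.sqrt ((W+ρ)^2+Q)) (-(x*ρ) + Real.sqrt ((W-ρ)^2+Q)))
        + (1-θ)*(max (x*ρ + Real.sqrt ((W+ρ)^2+Q)) (-(x*ρ) + Real.sqrt ((W-ρ)^2+Q))) := by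
        gcongr <;> linarith
    _ = _ := by ring


lemma step1 (W u tm Q' : ℝ) (hQ' : 0 ≤ Q') (htm : 0 < tm) (hu : u^2 ≤ tm - Q') :
    (-W/Real.sqrt (W^2+tm)) * u + Real.sqrt ((W+u)^2 + Q') ≤ Real.sqrt (W^2+tm) := by
  set R := Real.sqrt (W^2+tm) with hRdef
  have hR2 : R^2 = W^2 + tm := Real.sq_sqrt (by positivity)
  have hR0 : 0 < R := Real.sqrt_pos.mpr (by positivity)
  have h1 : 0 ≤ R^2 + W*u := by nlinarith [sq_nonneg (2*W+u)]
  have h2 : ((W+u)^2+Q') * R^2 ≤ (R^2+W*u)^2 := by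
    nlinarith [mul_nonneg (le_of_lt (show (0:ℝ) < W^2+tm by positivity))
      (show (0:ℝ) ≤ tm - u^2 - Q' by linarith), sq_nonneg (W*u)]
  have h3 : Real.sqrt ((W+u)^2+Q') ≤ (R^2+W*u)/R := by
    have h2' : (W+u)^2+Q' ≤ ((R^2+W*u)/R)^2 := by
      rw [div_pow, le_div_iff₀ (by positivity)]
      exact h2
    calc Real.sqrt ((W+u)^2+Q') ≤ Real.sqrt (((R^2+W*u)/R)^2) := Real.sqrt_le_sqrt h2'
      _ = (R^2+W*u)/R := Real.sqrt_sq (div_nonneg h1 hR0.le)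
  have : (-W/R) * u + (R^2+W*u)/R = R := by field_simp; ring
  linarith


lemma key2 (x W w r Q : ℝ) (hQ : 0 ≤ Q) (hr : 0 ≤ r) (hw : |w| ≤ 1) :
    w * x + max (x*r + Real.sqrt ((W+w+r)^2+Q)) (-(x*r) + Real.sqrt ((W+w-r)^2+Q)) ≤
    max (x*(r+1) + Real.sqrt ((W+(r+1))^2+Q)) (-(x*(r+1)) + Real.sqrt ((W-(r+1))^2+Q)) := by
  have hw1 := (abs_le.mp hw).1
  have hw2 := (abs_le.mp hw).2
  rw [← max_add_add_left]
  apply max_le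
  · have h1 : w*x + (x*r + Real.sqrt ((W+w+r)^2+Q))
        = x*(w+r) + Real.sqrt ((W+(w+r))^2+Q) := by ring_nf
    rw [h1]
    exact key x W (w+r) (r+1) Q hQ (by linarith)
      (by rw [abs_le]; constructor <;> linarith)
  · have h1 : w*x + (-(x*r) + Real.sqrt ((W+w-r)^2+Q))
        = x*(w-r) + Real.sqrt ((W+(w-r))^2+Q) := by ring_nf
    rw [h1]
    exact key x W (w-r) (r+1) Q hQ (by linarith)
      (by rw [abs_le]; constructor <;> linarith)

lemma blockLemma (n K t s : ℕ) (Q : ℝ) (hQ : 0 ≤ Q) (x : Fin n → ℝ) (hx : ‖x‖ ≤ 1)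
    (hs : s < K)
    (hend : ∀ W : Fin n → ℝ, gameValInf n K t (some x) s W ≤ ∑ j, Real.sqrt ((W j)^2 + Q)) :
    ∀ r (W : Fin n → ℝ), gameValInf n K (t + r) (some x) s W ≤
      ∑ j, max (x j * r + Real.sqrt ((W j + r)^2 + Q))
               (-(x j * r) + Real.sqrt ((W j - r)^2 + Q)) := by
  intro r
  induction r with
  | zero =>
    intro W
    simpa using hend W
  | succ r ih =>
    intro W
    have heq : t + (r+1) = (t + r) + 1 := by omega
    rw [heq]
    have hswitch : s + switchIncP (some x) x = s := by simp [switchIncP]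
    apply gv_succ_le n K (t+r) s (some x) W x hx (by rw [hswitch]; exact hs)
    intro w hw
    rw [hswitch]
    have hih := ih (W + w)
    calc (∑ i, w i * x i) + gameValInf n K (t + r) (some x) s (W + w)
        ≤ (∑ i, w i * x i) + ∑ j, max (x j * r + Real.sqrt (((W+w) j + r)^2 + Q))
            (-(x j * r) + Real.sqrt (((W+w) j - r)^2 + Q)) := by linarith
      _ ≤ ∑ j, max (x j * (r+1:ℕ) + Real.sqrt ((W j + (r+1:ℕ))^2 + Q))
            (-(x j * (r+1:ℕ)) + Real.sqrt ((W j - (r+1:ℕ))^2 + Q)) := by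
          rw [← Finset.sum_add_distrib]
          apply Finset.sum_le_sum
          intro j _
          have hwj := abs_coord_le hw j
          have := key2 (x j) (W j) (w j) (r : ℝ) Q hQ (by positivity) hwj
          simp only [Pi.add_apply]
          push_cast
          convert this using 3

lemma key3 (Wj w r Q tm : ℝ) (hQQ : 0 ≤ Q) (htm : 0 < tm) (hw : |w| ≤ 1)
    (hr : 0 ≤ r) (hu : (r+1)^2 ≤ tm - Q) :
    w * (-Wj/Real.sqrt (Wj^2+tm)) +
      max ((-Wj/Real.sqrt (Wj^2+tm)) * r + Real.sqrt ((Wj+w+r)^2+Q))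
          (-((-Wj/Real.sqrt (Wj^2+tm)) * r) + Real.sqrt ((Wj+w-r)^2+Q))
      ≤ Real.sqrt (Wj^2+tm) := by
  have hw1 := (abs_le.mp hw).1
  have hw2 := (abs_le.mp hw).2
  set xj := -Wj/Real.sqrt (Wj^2+tm) with hxj
  rw [← max_add_add_left]
  apply max_le
  · have h1 : w*xj + (xj*r + Real.sqrt ((Wj+w+r)^2+Q))
        = xj*(w+r) + Real.sqrt ((Wj+(w+r))^2+Q) := by ring_nf
    rw [h1, hxj]
    refine step1 Wj (w+r) tm Q hQQ htm ?_
    nlinarith [mul_nonneg (by linarith : (0:ℝ) ≤ 1-w) (by linarith : (0:ℝ) ≤ 1+w+2*r)]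
  · have h1 : w*xj + (-(xj*r) + Real.sqrt ((Wj+w-r)^2+Q))
        = xj*(w-r) + Real.sqrt ((Wj+(w-r))^2+Q) := by ring_nf
    rw [h1, hxj]
    refine step1 Wj (w-r) tm Q hQQ htm ?_
    nlinarith [mul_nonneg (by linarith : (0:ℝ) ≤ 1+w) (by linarith : (0:ℝ) ≤ 1-w+2*r)]

lemma switchIncP_le_one {n : ℕ} (last : Option (Fin n → ℝ)) (x : Fin n → ℝ) :
    switchIncP last x ≤ 1 := by
  rcases last with _ | y <;> simp [switchIncP]
  split_ifs <;> omega

lemma mainLemma (n K m : ℕ) (hm : 1 ≤ m) : ∀ k (t : ℕ) (last : Option (Fin n → ℝ))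
    (s : ℕ) (W : Fin n → ℝ), t ≤ k * m → s + k ≤ K → (last = none ∨ s + k < K) →
    gameValInf n K t last s W ≤ ∑ j, Real.sqrt ((W j)^2 + (t:ℝ) * m) := by
  intro k
  induction k with
  | zero =>
    intro t last s W ht _ _
    have ht0 : t = 0 := by omega
    subst ht0
    simp only [gameValInf, Nat.cast_zero, zero_mul, add_zero, Real.sqrt_sq_eq_abs]
    exact le_refl _
  | succ k ih =>
    intro t last s W ht hsK hlast
    by_cases hcase : t ≤ k * m
    · exact ih t last s W hcase (by omega) (Or.inr (by omega))
    · push_neg at hcase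
      have ht' : t ≤ k*m + m := by rw [add_mul, one_mul] at ht; exact ht
      have htpos : 1 ≤ t := by omega
      have htm : (0:ℝ) < (t:ℝ)*m := by
        have : (1:ℝ) ≤ (t:ℝ) := by exact_mod_cast htpos
        have : (1:ℝ) ≤ (m:ℝ) := by exact_mod_cast hm
        nlinarith
      set x : Fin n → ℝ := fun j => -(W j) / Real.sqrt ((W j)^2 + (t:ℝ)*m) with hxdef
      have hR : ∀ j, |W j| ≤ Real.sqrt ((W j)^2 + (t:ℝ)*m) := by
        intro j
        rw [← Real.sqrt_sq_eq_abs]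
        exact Real.sqrt_le_sqrt (by linarith)
      have hRpos : ∀ j, 0 < Real.sqrt ((W j)^2 + (t:ℝ)*m) := by
        intro j; exact Real.sqrt_pos.mpr (by positivity)
      have hx : ‖x‖ ≤ 1 := by
        rw [pi_norm_le_iff_of_nonneg zero_le_one]
        intro j
        rw [hxdef]
        simp only [Real.norm_eq_abs]
        rw [abs_div, abs_neg, abs_of_pos (hRpos j), div_le_one (hRpos j)]
        exact hR j
      have hinc := switchIncP_le_one last x
      have hfeas : s + switchIncP last x < K := by
        rcases hlast with h | h
        · subst h; simp [switchIncP]; omega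
        · omega
      set s' := s + switchIncP last x with hs'def
      have hsk' : s' + k < K := by
        rcases hlast with h | h
        · subst h; simp only [hs'def, switchIncP]; omega
        · omega
      set r := t - k*m - 1 with hrdef
      set Q : ℝ := ((k*m : ℕ) : ℝ) * m with hQdef
      have hQ0 : (0:ℝ) ≤ Q := by positivity
      have hend : ∀ W' : Fin n → ℝ, gameValInf n K (k*m) (some x) s' W' ≤
          ∑ j, Real.sqrt ((W' j)^2 + Q) := by
        intro W'
        exact ih (k*m) (some x) s' W' (le_refl _) (by omega) (Or.inr hsk')
      have hblock := blockLemma n K (k*m) s' Q hQ0 x hx hfeas hend r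
      have hC : ∀ w : Fin n → ℝ, ‖w‖ ≤ 1 →
          (∑ i, w i * x i) + gameValInf n K (k*m + r) (some x) s' (W + w) ≤
          ∑ j, Real.sqrt ((W j)^2 + (t:ℝ)*m) := by
        intro w hw
        have hih := hblock (W + w)
        have hsum : (∑ i, w i * x i) +
            (∑ j, max (x j * r + Real.sqrt (((W+w) j + r)^2 + Q))
              (-(x j * r) + Real.sqrt (((W+w) j - r)^2 + Q)))
            ≤ ∑ j, Real.sqrt ((W j)^2 + (t:ℝ)*m) := by
          rw [← Finset.sum_add_distrib]
          apply Finset.sum_le_sum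
          intro j _
          have hwj := abs_coord_le hw j
          have hu : (((r:ℕ):ℝ)+1)^2 ≤ (t:ℝ)*m - Q := by
            have hl1 : 1 ≤ t - k*m := by omega
            have hl2 : t - k*m ≤ m := by omega
            have hre : r + 1 = t - k*m := by omega
            have hr1 : ((r:ℕ):ℝ) + 1 = ((t - k*m : ℕ):ℝ) := by
              rw [← hre]; push_cast; ring
            have htcast : (t:ℝ) = ((k*m:ℕ):ℝ) + ((t-k*m:ℕ):ℝ) := by
              have h : k*m + (t - k*m) = t := by omega
              calc (t:ℝ) = ((k*m + (t-k*m) : ℕ):ℝ) := by rw [h]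
                _ = _ := by push_cast; ring
            have hL1 : (1:ℝ) ≤ ((t - k*m:ℕ):ℝ) := by exact_mod_cast hl1
            have hLm : ((t - k*m:ℕ):ℝ) ≤ (m:ℝ) := by exact_mod_cast hl2
            rw [hr1, hQdef, htcast]
            nlinarith [hL1, hLm]
          have hk3 := key3 (W j) (w j) (r:ℝ) Q ((t:ℝ)*m) hQ0 htm hwj
            (by positivity) hu
          simp only [Pi.add_apply, hxdef]
          convert hk3 using 3 <;> ring
        calc (∑ i, w i * x i) + gameValInf n K (k*m + r) (some x) s' (W + w)
            ≤ (∑ i, w i * x i) +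
            (∑ j, max (x j * r + Real.sqrt (((W+w) j + r)^2 + Q))
              (-(x j * r) + Real.sqrt (((W+w) j - r)^2 + Q))) := by linarith
          _ ≤ _ := hsum
      have happ := gv_succ_le n K (k*m + r) s last W x hx hfeas
        (∑ j, Real.sqrt ((W j)^2 + (t:ℝ)*m)) (by rw [← hs'def]; exact hC)
      rw [show k*m + r + 1 = t from by omega] at happ
      exact happ


/-- For every dimension `n ≥ 1` and all integers `T ≥ K ≥ 1`, the minimax regret of
switching-constrained online linear optimization over the `ℓ∞` unit ball satisfies
`R∞_n(T,K) ≤ 2√(2/π) · nT/√K`. -/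
theorem stmt7 (n T K : ℕ) (hn : 1 ≤ n) (hK : 1 ≤ K) (hTK : K ≤ T) :
    RInf n T K ≤ 2 * Real.sqrt (2 / Real.pi) * (n : ℝ) * (T : ℝ) / Real.sqrt K := by
  have hK0 : 0 < K := hK
  set m := (T + K - 1) / K with hmdef
  have hm : 1 ≤ m := (Nat.one_le_div_iff hK0).mpr (by omega)
  have hTKm : T ≤ K * m := by
    have h1 : K * m + (T+K-1) % K = T + K - 1 := by
      rw [hmdef]; exact Nat.div_add_mod _ _
    have h2 : (T+K-1) % K < K := Nat.mod_lt _ hK0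
    omega
  have hmK : m * K ≤ T + K - 1 := Nat.div_mul_le_self _ _
  have hmain := mainLemma n K m hm K T none 0 0 hTKm (by omega) (Or.inl rfl)
  have hKpos : (0:ℝ) < Real.sqrt K := Real.sqrt_pos.mpr (by exact_mod_cast hK0)
  have hstep : (∑ _j : Fin n, Real.sqrt (((0:Fin n → ℝ) _j)^2 + (T:ℝ)*m))
      = n * Real.sqrt ((T:ℝ)*m) := by
    simp [Finset.sum_const, Finset.card_univ]
  rw [RInf]
  calc gameValInf n K T none 0 0
      ≤ ∑ j : Fin n, Real.sqrt (((0:Fin n → ℝ) j)^2 + (T:ℝ)*m) := hmain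
    _ = n * Real.sqrt ((T:ℝ)*m) := hstep
    _ ≤ 2 * Real.sqrt (2 / Real.pi) * (n : ℝ) * (T : ℝ) / Real.sqrt K := by
      rw [le_div_iff₀ hKpos]
      have h1 : Real.sqrt ((T:ℝ)*m) * Real.sqrt K = Real.sqrt ((T:ℝ)*m*K) :=
        (Real.sqrt_mul (by positivity) _).symm
      have h2 : (T:ℝ)*m*K ≤ 2*(T:ℝ)^2 := by
        have hn1 : (m*K : ℕ) ≤ 2*T := by omega
        have h3 : ((m:ℕ):ℝ) * ((K:ℕ):ℝ) ≤ 2*(T:ℝ) := by exact_mod_cast hn1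
        nlinarith [show (0:ℝ) ≤ (T:ℝ) by positivity]
      have h4 : Real.sqrt ((T:ℝ)*m*K) ≤ Real.sqrt 2 * T := by
        calc Real.sqrt ((T:ℝ)*m*K) ≤ Real.sqrt (2*(T:ℝ)^2) := Real.sqrt_le_sqrt h2
          _ = Real.sqrt 2 * T := by
            rw [Real.sqrt_mul (by norm_num), Real.sqrt_sq (by positivity)]
      have h6 : Real.sqrt 2 ≤ 2 * Real.sqrt (2/Real.pi) := by
        have hπ : 0 < Real.pi := Real.pi_pos
        have he : 2 * Real.sqrt (2/Real.pi) = Real.sqrt (4*(2/Real.pi)) := by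
          rw [Real.sqrt_mul (by norm_num : (0:ℝ) ≤ 4),
            show (4:ℝ) = 2^2 by norm_num, Real.sqrt_sq (by norm_num : (0:ℝ) ≤ 2)]
        rw [he]
        apply Real.sqrt_le_sqrt
        rw [show (4:ℝ)*(2/Real.pi) = 8/Real.pi by ring, le_div_iff₀ hπ]
        nlinarith [Real.pi_le_four]
      have hsqrtnn : 0 ≤ Real.sqrt ((T:ℝ)*m) := Real.sqrt_nonneg _
      have hT0 : (0:ℝ) ≤ T := by positivity
      have hn0 : (0:ℝ) ≤ n := by positivity
      calc (n:ℝ) * Real.sqrt ((T:ℝ)*m) * Real.sqrt K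
          = (n:ℝ) * (Real.sqrt ((T:ℝ)*m) * Real.sqrt K) := by ring
        _ = (n:ℝ) * Real.sqrt ((T:ℝ)*m*K) := by rw [h1]
        _ ≤ (n:ℝ) * (Real.sqrt 2 * T) := by
            apply mul_le_mul_of_nonneg_left h4 hn0
        _ ≤ (n:ℝ) * ((2 * Real.sqrt (2/Real.pi)) * T) := by
            apply mul_le_mul_of_nonneg_left (mul_le_mul_of_nonneg_right h6 hT0) hn0
        _ = 2 * Real.sqrt (2 / Real.pi) * (n : ℝ) * (T : ℝ) := by ring
end

section
/- For every integer k ≥ 1, every real T ≥ 0 and every Z ∈ ℝ, the fugal function satisfies r_k(T,Z) ≥ |Z|; moreover, if |Z| ≥ T then r_k(T,Z) = |Z|. -/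
/-- The fugal functions `r_k(T, Z)` (for `k ≥ 1`; the value at `k = 0` is junk), defined
recursively by
`r₁(T,Z) = inf_{x∈[−1,1]} max_{w∈{−1,1}} ( T w x + |Z + T w| )` and
`r_{k+1}(T,Z) = inf_{x∈[−1,1]} max_{w∈{−1,1}} inf_{t∈[0,T]} ( t w x + r_k(T−t, Z+tw) )`,
where the maximum over `w ∈ {−1,1}` is written out explicitly with its two values. -/
noncomputable def fugal : ℕ → ℝ → ℝ → ℝ
  | 0 => fun _ Z => |Z|
  | 1 => fun T Z =>
      sInf ((fun x : ℝ => max (T * x + |Z + T|) (-(T * x) + |Z - T|)) ''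
        Set.Icc (-1 : ℝ) 1)
  | k + 2 => fun T Z =>
      sInf ((fun x : ℝ =>
        max (sInf ((fun t : ℝ => t * x + fugal (k + 1) (T - t) (Z + t)) '' Set.Icc 0 T))
            (sInf ((fun t : ℝ => -(t * x) + fugal (k + 1) (T - t) (Z - t)) ''
              Set.Icc 0 T))) '' Set.Icc (-1 : ℝ) 1)

lemma le_sInf_image' {a b c : ℝ} {f : ℝ → ℝ} (hab : a ≤ b)
    (h : ∀ y ∈ Set.Icc a b, c ≤ f y) : c ≤ sInf (f '' Set.Icc a b) :=
  le_csInf ((Set.nonempty_Icc.2 hab).image f) (by rintro _ ⟨y, hy, rfl⟩; exact h y hy)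

lemma sInf_image_le'' {a b c c' : ℝ} {f : ℝ → ℝ} {y : ℝ} (hy : y ∈ Set.Icc a b)
    (h : ∀ z ∈ Set.Icc a b, c ≤ f z) (hfy : f y = c') : sInf (f '' Set.Icc a b) ≤ c' :=
  hfy ▸ csInf_le ⟨c, by rintro _ ⟨z, hz, rfl⟩; exact h z hz⟩ ⟨y, hy, rfl⟩

/-- For every integer `k ≥ 1`, every real `T ≥ 0` and every `Z ∈ ℝ`, the fugal function
satisfies `r_k(T,Z) ≥ |Z|`; moreover, if `|Z| ≥ T` then `r_k(T,Z) = |Z|`. -/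
theorem stmt11 (k : ℕ) (hk : 1 ≤ k) (T Z : ℝ) (hT : 0 ≤ T) :
    |Z| ≤ fugal k T Z ∧ (T ≤ |Z| → fugal k T Z = |Z|) := by
  obtain ⟨n, rfl⟩ : ∃ n, k = n + 1 := ⟨k - 1, by omega⟩
  clear hk
  induction n generalizing T Z with
  | zero =>
    have key : ∀ x ∈ Set.Icc (-1 : ℝ) 1,
        |Z| ≤ max (T * x + |Z + T|) (-(T * x) + |Z - T|) := by
      intro x hx
      have h2 : 2 * |Z| ≤ |Z + T| + |Z - T| := by
        have := abs_add_le (Z + T) (Z - T)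
        have h2' : |(Z + T) + (Z - T)| = 2 * |Z| := by
          rw [show (Z + T) + (Z - T) = 2 * Z by ring, abs_mul]
          norm_num
        linarith
      have := le_max_left (T * x + |Z + T|) (-(T * x) + |Z - T|)
      have := le_max_right (T * x + |Z + T|) (-(T * x) + |Z - T|)
      linarith
    have hlow : |Z| ≤ fugal 1 T Z := by
      show |Z| ≤ sInf _
      exact le_sInf_image' (by norm_num) key
    refine ⟨hlow, fun hTZ => ?_⟩
    refine le_antisymm ?_ hlow
    show sInf _ ≤ |Z|
    rcases le_or_gt 0 Z with hZ | hZ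
    · refine sInf_image_le'' (y := -1) (by norm_num) key ?_
      rw [abs_of_nonneg hZ] at hTZ ⊢
      rw [abs_of_nonneg (by linarith), abs_of_nonneg (by linarith),
        show T * (-1) + (Z + T) = Z by ring, show -(T * (-1)) + (Z - T) = Z by ring, max_self]
    · refine sInf_image_le'' (y := 1) (by norm_num) key ?_
      rw [abs_of_neg hZ] at hTZ ⊢
      rw [abs_of_nonpos (by linarith), abs_of_nonpos (by linarith),
        show T * 1 + -(Z + T) = -Z by ring, show -(T * 1) + -(Z - T) = -Z by ring, max_self]
  | succ n ih =>
    have key : ∀ x ∈ Set.Icc (-1 : ℝ) 1,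
        |Z| ≤ max (sInf ((fun t : ℝ => t * x + fugal (n + 1) (T - t) (Z + t)) '' Set.Icc 0 T))
            (sInf ((fun t : ℝ => -(t * x) + fugal (n + 1) (T - t) (Z - t)) '' Set.Icc 0 T)) := by
      intro x hx
      rcases le_or_gt 0 Z with hZ | hZ
      · refine le_trans ?_ (le_max_left _ _)
        refine le_sInf_image' hT fun t ht => ?_
        have h1 := (ih (T - t) (Z + t) (by linarith [ht.2])).1
        rw [abs_of_nonneg (by linarith [ht.1] : (0:ℝ) ≤ Z + t)] at h1
        rw [abs_of_nonneg hZ]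
        nlinarith [mul_le_mul_of_nonneg_left hx.1 ht.1]
      · refine le_trans ?_ (le_max_right _ _)
        refine le_sInf_image' hT fun t ht => ?_
        have h1 := (ih (T - t) (Z - t) (by linarith [ht.2])).1
        rw [abs_sub_comm, abs_of_nonneg (by linarith [ht.1] : (0:ℝ) ≤ t - Z)] at h1
        rw [abs_of_neg hZ]
        nlinarith [mul_le_mul_of_nonneg_left hx.2 ht.1]
    have hlow : |Z| ≤ fugal (n + 1 + 1) T Z := by
      show |Z| ≤ sInf _
      exact le_sInf_image' (by norm_num) key
    refine ⟨hlow, fun hTZ => ?_⟩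
    refine le_antisymm ?_ hlow
    show sInf _ ≤ |Z|
    have h0T : (0:ℝ) ∈ Set.Icc (0:ℝ) T := Set.left_mem_Icc.2 hT
    rcases le_or_gt 0 Z with hZ | hZ
    · rw [abs_of_nonneg hZ] at hTZ
      have hplus : ∀ t ∈ Set.Icc (0:ℝ) T,
          (fun t : ℝ => t * (-1) + fugal (n + 1) (T - t) (Z + t)) t = Z := by
        intro t ht
        have heq := (ih (T - t) (Z + t) (by linarith [ht.2])).2
          (by rw [abs_of_nonneg (by linarith [ht.1])]; linarith [ht.1, ht.2])
        simp only
        rw [heq, abs_of_nonneg (by linarith [ht.1])]; ring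
      have hminus : ∀ t ∈ Set.Icc (0:ℝ) T,
          (fun t : ℝ => -(t * (-1)) + fugal (n + 1) (T - t) (Z - t)) t = Z := by
        intro t ht
        have heq := (ih (T - t) (Z - t) (by linarith [ht.2])).2
          (by rw [abs_of_nonneg (by linarith [ht.2])]; linarith [ht.1, ht.2])
        simp only
        rw [heq, abs_of_nonneg (by linarith [ht.2])]; ring
      have e1 := sInf_image_le'' h0T (fun z hz => (hplus z hz).ge) (hplus 0 h0T)
      have e1' := le_sInf_image' hT fun z hz => (hplus z hz).ge
      have e2 := sInf_image_le'' h0T (fun z hz => (hminus z hz).ge) (hminus 0 h0T)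
      have e2' := le_sInf_image' hT fun z hz => (hminus z hz).ge
      refine sInf_image_le'' (y := -1) (by norm_num) key ?_
      rw [le_antisymm e1 e1', le_antisymm e2 e2', max_self, abs_of_nonneg hZ]
    · rw [abs_of_neg hZ] at hTZ
      have hplus : ∀ t ∈ Set.Icc (0:ℝ) T,
          (fun t : ℝ => t * 1 + fugal (n + 1) (T - t) (Z + t)) t = -Z := by
        intro t ht
        have heq := (ih (T - t) (Z + t) (by linarith [ht.2])).2
          (by rw [abs_of_nonpos (by linarith [ht.2])]; linarith [ht.1, ht.2])
        simp only
        rw [heq, abs_of_nonpos (by linarith [ht.2])]; ring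
      have hminus : ∀ t ∈ Set.Icc (0:ℝ) T,
          (fun t : ℝ => -(t * 1) + fugal (n + 1) (T - t) (Z - t)) t = -Z := by
        intro t ht
        have heq := (ih (T - t) (Z - t) (by linarith [ht.2])).2
          (by rw [abs_of_nonpos (by linarith [ht.1])]; linarith [ht.1, ht.2])
        simp only
        rw [heq, abs_of_nonpos (by linarith [ht.1])]; ring
      have e1 := sInf_image_le'' h0T (fun z hz => (hplus z hz).ge) (hplus 0 h0T)
      have e1' := le_sInf_image' hT fun z hz => (hplus z hz).ge
      have e2 := sInf_image_le'' h0T (fun z hz => (hminus z hz).ge) (hminus 0 h0T)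
      have e2' := le_sInf_image' hT fun z hz => (hminus z hz).ge
      refine sInf_image_le'' (y := 1) (by norm_num) key ?_
      rw [le_antisymm e1 e1', le_antisymm e2 e2', max_self, abs_of_neg hZ]
end

section
/- For every integer k ≥ 1, every real T > 0, and every Z with −T < Z < T, the extraspherical minimax value satisfies inf_{x∈[−1,1]} max_{w∈{−1,1}} inf_{ t ∈ [0,T] with |Z + t w| ≥ T − t } ( t w x + r_k(T − t, Z + t w) ) = (Z² + T²)/(2T). -/
lemma half_le_max (a b : ℝ) : (a + b) / 2 ≤ max a b := by
  rcases le_total a b with h | h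
  · rw [max_eq_right h]; linarith
  · rw [max_eq_left h]; linarith

lemma fugal_big : ∀ k, 1 ≤ k → ∀ T Z : ℝ, 0 ≤ T → T ≤ |Z| → fugal k T Z = |Z| := by
  have key : ∀ k, ∀ T Z : ℝ, 0 ≤ T → T ≤ |Z| → fugal (k + 1) T Z = |Z| := by
    intro k
    induction k with
    | zero =>
      intro T Z hT hTZ
      show sInf ((fun x : ℝ => max (T * x + |Z + T|) (-(T * x) + |Z - T|)) ''
        Set.Icc (-1 : ℝ) 1) = |Z|
      rcases le_or_gt 0 Z with hZ | hZ
      · rw [abs_of_nonneg hZ] at hTZ ⊢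
        have h1 : |Z + T| = Z + T := abs_of_nonneg (by linarith)
        have h2 : |Z - T| = Z - T := abs_of_nonneg (by linarith)
        apply IsLeast.csInf_eq
        constructor
        · refine ⟨-1, by norm_num, ?_⟩
          simp only
          rw [h1, h2, show T * (-1) + (Z + T) = Z by ring,
            show -(T * (-1)) + (Z - T) = Z by ring, max_self]
        · rintro y ⟨x, hx, rfl⟩
          simp only [h1, h2]
          have := half_le_max (T * x + (Z + T)) (-(T * x) + (Z - T))
          linarith
      · rw [abs_of_neg hZ] at hTZ ⊢
        have h1 : |Z + T| = -(Z + T) := abs_of_nonpos (by linarith)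
        have h2 : |Z - T| = -(Z - T) := abs_of_nonpos (by linarith)
        apply IsLeast.csInf_eq
        constructor
        · refine ⟨1, by norm_num, ?_⟩
          simp only
          rw [h1, h2, show T * 1 + -(Z + T) = -Z by ring,
            show -(T * 1) + -(Z - T) = -Z by ring, max_self]
        · rintro y ⟨x, hx, rfl⟩
          simp only [h1, h2]
          have := half_le_max (T * x + -(Z + T)) (-(T * x) + -(Z - T))
          linarith
    | succ n ih =>
      intro T Z hT hTZ
      show sInf ((fun x : ℝ =>
        max (sInf ((fun t : ℝ => t * x + fugal (n + 1) (T - t) (Z + t)) '' Set.Icc 0 T))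
            (sInf ((fun t : ℝ => -(t * x) + fugal (n + 1) (T - t) (Z - t)) ''
              Set.Icc 0 T))) '' Set.Icc (-1 : ℝ) 1) = |Z|
      rcases le_or_gt 0 Z with hZ | hZ
      · rw [abs_of_nonneg hZ] at hTZ ⊢
        -- for t ∈ [0,T]: fugal (n+1) (T-t) (Z+t) = Z+t, fugal (n+1) (T-t) (Z-t) = Z-t
        have hfp : ∀ t ∈ Set.Icc (0:ℝ) T, fugal (n + 1) (T - t) (Z + t) = Z + t := by
          intro t ht
          rw [ih (T - t) (Z + t) (by linarith [ht.2]) (by rw [abs_of_nonneg (by linarith [ht.1])]; linarith [ht.1])]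
          exact abs_of_nonneg (by linarith [ht.1])
        have hfm : ∀ t ∈ Set.Icc (0:ℝ) T, fugal (n + 1) (T - t) (Z - t) = Z - t := by
          intro t ht
          rw [ih (T - t) (Z - t) (by linarith [ht.2]) (by rw [abs_of_nonneg (by linarith [ht.2])]; linarith)]
          exact abs_of_nonneg (by linarith [ht.2])
        have hA : ∀ x ∈ Set.Icc (-1:ℝ) 1,
            sInf ((fun t : ℝ => t * x + fugal (n + 1) (T - t) (Z + t)) '' Set.Icc 0 T) = Z := by
          intro x hx
          apply IsLeast.csInf_eq
          constructor
          · refine ⟨0, ⟨le_refl 0, hT⟩, ?_⟩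
            simp only
            rw [hfp 0 ⟨le_refl 0, hT⟩]; ring
          · rintro y ⟨t, ht, rfl⟩
            simp only
            rw [hfp t ht]
            nlinarith [ht.1, hx.1]
        have hB : ∀ x ∈ Set.Icc (-1:ℝ) 1,
            sInf ((fun t : ℝ => -(t * x) + fugal (n + 1) (T - t) (Z - t)) '' Set.Icc 0 T)
              = Z - T * (x + 1) := by
          intro x hx
          apply IsLeast.csInf_eq
          constructor
          · refine ⟨T, ⟨hT, le_refl T⟩, ?_⟩
            simp only
            rw [hfm T ⟨hT, le_refl T⟩]; ring
          · rintro y ⟨t, ht, rfl⟩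
            simp only
            rw [hfm t ht]
            nlinarith [ht.2, hx.1]
        apply IsLeast.csInf_eq
        constructor
        · refine ⟨-1, by norm_num, ?_⟩
          simp only
          rw [hA (-1) (by norm_num), hB (-1) (by norm_num)]
          norm_num
        · rintro y ⟨x, hx, rfl⟩
          simp only
          rw [hA x hx, hB x hx]
          exact le_max_left _ _
      · rw [abs_of_neg hZ] at hTZ ⊢
        have hfp : ∀ t ∈ Set.Icc (0:ℝ) T, fugal (n + 1) (T - t) (Z + t) = -(Z + t) := by
          intro t ht
          rw [ih (T - t) (Z + t) (by linarith [ht.2]) (by rw [abs_of_nonpos (by linarith [ht.2])]; linarith)]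
          exact abs_of_nonpos (by linarith [ht.2])
        have hfm : ∀ t ∈ Set.Icc (0:ℝ) T, fugal (n + 1) (T - t) (Z - t) = -(Z - t) := by
          intro t ht
          rw [ih (T - t) (Z - t) (by linarith [ht.2]) (by rw [abs_of_nonpos (by linarith [ht.1])]; linarith [ht.1])]
          exact abs_of_nonpos (by linarith [ht.1])
        have hA : ∀ x ∈ Set.Icc (-1:ℝ) 1,
            sInf ((fun t : ℝ => t * x + fugal (n + 1) (T - t) (Z + t)) '' Set.Icc 0 T)
              = -Z + T * (x - 1) := by
          intro x hx
          apply IsLeast.csInf_eq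
          constructor
          · refine ⟨T, ⟨hT, le_refl T⟩, ?_⟩
            simp only
            rw [hfp T ⟨hT, le_refl T⟩]; ring
          · rintro y ⟨t, ht, rfl⟩
            simp only
            rw [hfp t ht]
            nlinarith [ht.2, hx.2]
        have hB : ∀ x ∈ Set.Icc (-1:ℝ) 1,
            sInf ((fun t : ℝ => -(t * x) + fugal (n + 1) (T - t) (Z - t)) '' Set.Icc 0 T)
              = -Z := by
          intro x hx
          apply IsLeast.csInf_eq
          constructor
          · refine ⟨0, ⟨le_refl 0, hT⟩, ?_⟩
            simp only
            rw [hfm 0 ⟨le_refl 0, hT⟩]; ring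
          · rintro y ⟨t, ht, rfl⟩
            simp only
            rw [hfm t ht]
            nlinarith [ht.1, hx.2]
        apply IsLeast.csInf_eq
        constructor
        · refine ⟨1, by norm_num, ?_⟩
          simp only
          rw [hA 1 (by norm_num), hB 1 (by norm_num)]
          norm_num
        · rintro y ⟨x, hx, rfl⟩
          simp only
          rw [hA x hx, hB x hx]
          have : -Z + T * (x - 1) ≤ -Z := by nlinarith [hx.2]
          rw [max_eq_right this]
  intro k hk T Z hT hTZ
  obtain ⟨n, rfl⟩ := Nat.exists_eq_add_of_le hk
  rw [add_comm] at *
  exact key n T Z hT hTZ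

/-- For every integer `k ≥ 1`, every real `T > 0`, and every `Z` with `−T < Z < T`, the
extraspherical minimax value satisfies
`inf_{x∈[−1,1]} max_{w∈{−1,1}} inf_{t ∈ [0,T], |Z + tw| ≥ T − t} ( twx + r_k(T−t, Z+tw) )
 = (Z² + T²)/(2T)`, where the maximum over `w ∈ {−1,1}` is written out with its two
values. -/
theorem stmt12 (k : ℕ) (hk : 1 ≤ k) (T Z : ℝ) (hT : 0 < T) (hZ₁ : -T < Z) (hZ₂ : Z < T) :
    sInf ((fun x : ℝ =>
      max (sInf ((fun t : ℝ => t * x + fugal k (T - t) (Z + t)) ''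
            {t : ℝ | t ∈ Set.Icc 0 T ∧ T - t ≤ |Z + t|}))
          (sInf ((fun t : ℝ => -(t * x) + fugal k (T - t) (Z - t)) ''
            {t : ℝ | t ∈ Set.Icc 0 T ∧ T - t ≤ |Z - t|}))) '' Set.Icc (-1 : ℝ) 1)
      = (Z ^ 2 + T ^ 2) / (2 * T) := by
  set t₁ : ℝ := (T - Z) / 2 with ht₁
  set t₂ : ℝ := (T + Z) / 2 with ht₂
  have ht₁pos : 0 < t₁ := by rw [ht₁]; linarith
  have ht₂pos : 0 < t₂ := by rw [ht₂]; linarith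
  have hset1 : {t : ℝ | t ∈ Set.Icc 0 T ∧ T - t ≤ |Z + t|} = Set.Icc t₁ T := by
    ext t
    simp only [Set.mem_setOf_eq, Set.mem_Icc]
    constructor
    · rintro ⟨⟨h0, hTt⟩, habs⟩
      rcases le_or_gt 0 (Z + t) with h | h
      · rw [abs_of_nonneg h] at habs
        exact ⟨by rw [ht₁]; linarith, hTt⟩
      · rw [abs_of_neg h] at habs
        linarith
    · rintro ⟨h1, h2⟩
      have h0 : 0 ≤ t := le_trans ht₁pos.le h1
      refine ⟨⟨h0, h2⟩, ?_⟩
      have hZt : 0 ≤ Z + t := by rw [ht₁] at h1; linarith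
      rw [abs_of_nonneg hZt]
      rw [ht₁] at h1; linarith
  have hset2 : {t : ℝ | t ∈ Set.Icc 0 T ∧ T - t ≤ |Z - t|} = Set.Icc t₂ T := by
    ext t
    simp only [Set.mem_setOf_eq, Set.mem_Icc]
    constructor
    · rintro ⟨⟨h0, hTt⟩, habs⟩
      rcases le_or_gt 0 (Z - t) with h | h
      · rw [abs_of_nonneg h] at habs
        linarith
      · rw [abs_of_neg h] at habs
        exact ⟨by rw [ht₂]; linarith, hTt⟩
    · rintro ⟨h1, h2⟩
      have h0 : 0 ≤ t := le_trans ht₂pos.le h1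
      refine ⟨⟨h0, h2⟩, ?_⟩
      have hZt : Z - t ≤ 0 := by rw [ht₂] at h1; linarith
      rw [abs_of_nonpos hZt]
      rw [ht₂] at h1; linarith
  have hfp : ∀ t ∈ Set.Icc t₁ T, fugal k (T - t) (Z + t) = Z + t := by
    intro t ht
    have h1 := ht.1; have h2 := ht.2
    rw [ht₁] at h1
    have hZt : 0 ≤ Z + t := by linarith
    rw [fugal_big k hk (T - t) (Z + t) (by linarith) (by rw [abs_of_nonneg hZt]; linarith)]
    exact abs_of_nonneg hZt
  have hfm : ∀ t ∈ Set.Icc t₂ T, fugal k (T - t) (Z - t) = t - Z := by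
    intro t ht
    have h1 := ht.1; have h2 := ht.2
    rw [ht₂] at h1
    have hZt : Z - t ≤ 0 := by linarith
    rw [fugal_big k hk (T - t) (Z - t) (by linarith) (by rw [abs_of_nonpos hZt]; linarith)]
    rw [abs_of_nonpos hZt]; ring
  have hA : ∀ x ∈ Set.Icc (-1:ℝ) 1,
      sInf ((fun t : ℝ => t * x + fugal k (T - t) (Z + t)) '' Set.Icc t₁ T)
        = Z + t₁ * (x + 1) := by
    intro x hx
    apply IsLeast.csInf_eq
    constructor
    · refine ⟨t₁, ⟨le_refl t₁, by rw [ht₁]; linarith⟩, ?_⟩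
      simp only
      rw [hfp t₁ ⟨le_refl t₁, by rw [ht₁]; linarith⟩]; ring
    · rintro y ⟨t, ht, rfl⟩
      simp only
      rw [hfp t ht]
      nlinarith [ht.1, hx.1]
  have hB : ∀ x ∈ Set.Icc (-1:ℝ) 1,
      sInf ((fun t : ℝ => -(t * x) + fugal k (T - t) (Z - t)) '' Set.Icc t₂ T)
        = -Z + t₂ * (1 - x) := by
    intro x hx
    apply IsLeast.csInf_eq
    constructor
    · refine ⟨t₂, ⟨le_refl t₂, by rw [ht₂]; linarith⟩, ?_⟩
      simp only
      rw [hfm t₂ ⟨le_refl t₂, by rw [ht₂]; linarith⟩]; ring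
    · rintro y ⟨t, ht, rfl⟩
      simp only
      rw [hfm t ht]
      nlinarith [ht.1, hx.2]
  rw [hset1, hset2]
  apply IsLeast.csInf_eq
  constructor
  · have hxm : (-Z / T) ∈ Set.Icc (-1:ℝ) 1 := by
      constructor
      · rw [le_div_iff₀ hT]; nlinarith
      · rw [div_le_iff₀ hT]; nlinarith
    refine ⟨-Z / T, hxm, ?_⟩
    · simp only
      rw [hA _ hxm, hB _ hxm]
      have e1 : Z + t₁ * (-Z / T + 1) = (Z ^ 2 + T ^ 2) / (2 * T) := by
        rw [ht₁]; field_simp; ring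
      have e2 : -Z + t₂ * (1 - -Z / T) = (Z ^ 2 + T ^ 2) / (2 * T) := by
        rw [ht₂]; field_simp; ring
      rw [e1, e2, max_self]
  · rintro y ⟨x, hx, rfl⟩
    simp only
    rw [hA x hx, hB x hx]
    have h1 : Z + t₁ * (x + 1) ≤ max (Z + t₁ * (x + 1)) (-Z + t₂ * (1 - x)) := le_max_left _ _
    have h2 : -Z + t₂ * (1 - x) ≤ max (Z + t₁ * (x + 1)) (-Z + t₂ * (1 - x)) := le_max_right _ _
    set M := max (Z + t₁ * (x + 1)) (-Z + t₂ * (1 - x))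
    have key : (Z ^ 2 + T ^ 2) / 2 ≤ T * M := by
      have := mul_le_mul_of_nonneg_left h1 ht₂pos.le
      have := mul_le_mul_of_nonneg_left h2 ht₁pos.le
      rw [ht₁, ht₂] at *
      nlinarith
    rw [div_le_iff₀ (by linarith : (0:ℝ) < 2 * T)]
    linarith
end

section
/- Let f ≡ 1 be the constant function on [−1,1]. Then for every z with |z| < 1, the fugal operator satisfies (𝒯f)(z) = inf_{x∈[−1,1]} max_{w∈{−1,1}} inf_{ z' : |z'| < 1, w(z'−z) ≥ 0 } [ ((1 + wz) + x(z' − z)) / (1 + z'w) ] = (z² + 1)/2. -/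
/-- The fugal operator `𝒯`: for a function `f` on `[−1,1]`,
`(𝒯f)(z) = inf_{x∈[−1,1]} max_{w∈{−1,1}} inf_{z' : |z'| < 1, w(z'−z) ≥ 0}
  ((1 + wz) f(z') + x(z' − z)) / (1 + z'w)`,
where the maximum over `w ∈ {−1,1}` is written out explicitly with its two values. -/
noncomputable def fugalOp (f : ℝ → ℝ) (z : ℝ) : ℝ :=
  sInf ((fun x : ℝ =>
    max (sInf ((fun z' : ℝ => ((1 + z) * f z' + x * (z' - z)) / (1 + z')) ''
          {z' : ℝ | |z'| < 1 ∧ z ≤ z'}))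
        (sInf ((fun z' : ℝ => ((1 - z) * f z' + x * (z' - z)) / (1 - z')) ''
          {z' : ℝ | |z'| < 1 ∧ z' ≤ z}))) '' Set.Icc (-1 : ℝ) 1)

/-- The quadratic lower bound functions `a_k` on `[−1,1]`: `a₁(z) = 1` and, for `i ≥ 2`,
`a_i(z) = (√(i/2)·z² + √(2/i))/2` if `|z| < √(2/i)` and `a_i(z) = |z|` otherwise. -/
noncomputable def aQuad (i : ℕ) (z : ℝ) : ℝ :=
  if i ≤ 1 then 1
  else if |z| < Real.sqrt (2 / (i : ℝ)) then
    (Real.sqrt ((i : ℝ) / 2) * z ^ 2 + Real.sqrt (2 / (i : ℝ))) / 2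
  else |z|

lemma innerA (z x : ℝ) (hz : |z| < 1) (hx1 : -1 ≤ x) (hx2 : x ≤ 1) :
    sInf ((fun z' : ℝ => ((1 + z) * 1 + x * (z' - z)) / (1 + z')) ''
        {z' : ℝ | |z'| < 1 ∧ z ≤ z'}) = x + (1 + z) * (1 - x) / 2 := by
  obtain ⟨hz1, hz2⟩ := abs_lt.mp hz
  have hne : ((fun z' : ℝ => ((1 + z) * 1 + x * (z' - z)) / (1 + z')) ''
      {z' : ℝ | |z'| < 1 ∧ z ≤ z'}).Nonempty := ⟨_, ⟨z, ⟨hz, le_refl z⟩, rfl⟩⟩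
  have hlb : ∀ y ∈ (fun z' : ℝ => ((1 + z) * 1 + x * (z' - z)) / (1 + z')) ''
      {z' : ℝ | |z'| < 1 ∧ z ≤ z'}, x + (1 + z) * (1 - x) / 2 ≤ y := by
    rintro y ⟨z', ⟨h1, h2⟩, rfl⟩
    obtain ⟨h1a, h1b⟩ := abs_lt.mp h1
    rw [le_div_iff₀ (by linarith)]
    nlinarith [mul_nonneg (mul_nonneg (show (0:ℝ) ≤ 1 + z by linarith)
      (show (0:ℝ) ≤ 1 - x by linarith)) (show (0:ℝ) ≤ 1 - z' by linarith)]
  refine le_antisymm ?_ (le_csInf hne hlb)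
  rw [Real.sInf_le_iff ⟨_, hlb⟩ hne]
  intro ε hε
  set z' := max z (1 - ε / 2) with hz'def
  have hzz' : z ≤ z' := le_max_left _ _
  have hz'2 : 1 - ε / 2 ≤ z' := le_max_right _ _
  have hz'3 : z' < 1 := by
    exact max_lt hz2 (by linarith)
  have hz'4 : -1 < z' := lt_of_lt_of_le hz1 hzz'
  refine ⟨_, ⟨z', ⟨abs_lt.mpr ⟨hz'4, hz'3⟩, hzz'⟩, rfl⟩, ?_⟩
  rw [div_lt_iff₀ (by linarith)]
  have hC : (1 + z) * (1 - x) ≤ 2 * (1 + z') := by nlinarith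
  have hD : (1 + z) * (1 - x) * (1 - z') ≤ (2 * (1 + z')) * (ε / 2) :=
    mul_le_mul hC (by linarith) (by linarith) (by linarith)
  nlinarith [hD, mul_pos hε (show (0:ℝ) < 1 + z' by linarith)]

lemma innerB (z x : ℝ) (hz : |z| < 1) (hx1 : -1 ≤ x) (hx2 : x ≤ 1) :
    sInf ((fun z' : ℝ => ((1 - z) * 1 + x * (z' - z)) / (1 - z')) ''
        {z' : ℝ | |z'| < 1 ∧ z' ≤ z}) = -x + (1 - z) * (1 + x) / 2 := by
  obtain ⟨hz1, hz2⟩ := abs_lt.mp hz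
  have hne : ((fun z' : ℝ => ((1 - z) * 1 + x * (z' - z)) / (1 - z')) ''
      {z' : ℝ | |z'| < 1 ∧ z' ≤ z}).Nonempty := ⟨_, ⟨z, ⟨hz, le_refl z⟩, rfl⟩⟩
  have hlb : ∀ y ∈ (fun z' : ℝ => ((1 - z) * 1 + x * (z' - z)) / (1 - z')) ''
      {z' : ℝ | |z'| < 1 ∧ z' ≤ z}, -x + (1 - z) * (1 + x) / 2 ≤ y := by
    rintro y ⟨z', ⟨h1, h2⟩, rfl⟩
    obtain ⟨h1a, h1b⟩ := abs_lt.mp h1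
    rw [le_div_iff₀ (by linarith)]
    nlinarith [mul_nonneg (mul_nonneg (show (0:ℝ) ≤ 1 - z by linarith)
      (show (0:ℝ) ≤ 1 + x by linarith)) (show (0:ℝ) ≤ 1 + z' by linarith)]
  refine le_antisymm ?_ (le_csInf hne hlb)
  rw [Real.sInf_le_iff ⟨_, hlb⟩ hne]
  intro ε hε
  set z' := min z (ε / 2 - 1) with hz'def
  have hzz' : z' ≤ z := min_le_left _ _
  have hz'2 : z' ≤ ε / 2 - 1 := min_le_right _ _
  have hz'3 : -1 < z' := by
    exact lt_min hz1 (by linarith)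
  have hz'4 : z' < 1 := lt_of_le_of_lt hzz' hz2
  refine ⟨_, ⟨z', ⟨abs_lt.mpr ⟨hz'3, hz'4⟩, hzz'⟩, rfl⟩, ?_⟩
  rw [div_lt_iff₀ (by linarith)]
  have hC : (1 - z) * (1 + x) ≤ 2 * (1 - z') := by nlinarith
  have hD : (1 - z) * (1 + x) * (1 + z') ≤ (2 * (1 - z')) * (ε / 2) :=
    mul_le_mul hC (by linarith) (by linarith) (by linarith)
  nlinarith [hD, mul_pos hε (show (0:ℝ) < 1 - z' by linarith)]

/-- Let `f ≡ 1` be the constant function on `[−1,1]`. Then for every `z` with `|z| < 1`,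
the fugal operator satisfies `(𝒯f)(z) = (z² + 1)/2`. -/
theorem stmt13 (z : ℝ) (hz : |z| < 1) :
    fugalOp (fun _ => (1 : ℝ)) z = (z ^ 2 + 1) / 2 := by
  obtain ⟨hz1, hz2⟩ := abs_lt.mp hz
  have himg : ∀ x ∈ Set.Icc (-1 : ℝ) 1,
      max (sInf ((fun z' : ℝ => ((1 + z) * 1 + x * (z' - z)) / (1 + z')) ''
            {z' : ℝ | |z'| < 1 ∧ z ≤ z'}))
          (sInf ((fun z' : ℝ => ((1 - z) * 1 + x * (z' - z)) / (1 - z')) ''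
            {z' : ℝ | |z'| < 1 ∧ z' ≤ z}))
      = max (x + (1 + z) * (1 - x) / 2) (-x + (1 - z) * (1 + x) / 2) := by
    intro x hx
    rw [innerA z x hz hx.1 hx.2, innerB z x hz hx.1 hx.2]
  simp only [fugalOp]
  rw [Set.image_congr himg]
  have hlb : ∀ y ∈ (fun x : ℝ => max (x + (1 + z) * (1 - x) / 2)
      (-x + (1 - z) * (1 + x) / 2)) '' Set.Icc (-1 : ℝ) 1, (z ^ 2 + 1) / 2 ≤ y := by
    rintro y ⟨x, hx, rfl⟩
    rcases le_total (-z) x with h | h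
    · exact le_max_of_le_left (by nlinarith)
    · exact le_max_of_le_right (by nlinarith)
  refine le_antisymm ?_ (le_csInf ⟨_, ⟨0, by norm_num, rfl⟩⟩ hlb)
  have hm : max ((-z) + (1 + z) * (1 - (-z)) / 2) (-(-z) + (1 - z) * (1 + (-z)) / 2)
      = (z ^ 2 + 1) / 2 := by
    rw [show (-z) + (1 + z) * (1 - (-z)) / 2 = (z ^ 2 + 1) / 2 by ring,
        show -(-z) + (1 - z) * (1 + (-z)) / 2 = (z ^ 2 + 1) / 2 by ring, max_self]
  calc sInf _ ≤ max ((-z) + (1 + z) * (1 - (-z)) / 2) (-(-z) + (1 - z) * (1 + (-z)) / 2) :=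
        csInf_le ⟨_, hlb⟩ ⟨-z, ⟨by linarith, by linarith⟩, rfl⟩
    _ = (z ^ 2 + 1) / 2 := hm
end

section
/- Let f₁ ≡ 1 be the constant function on [−1,1], and define f₂ = 𝒯f₁, f₃ = 𝒯f₂, and f₄ = 𝒯f₃ (so f₄(0) is the normalized minimax regret u₄(0) of the fugal game with four blocks and no initial bias). Then f₄(0) = (1/3)·∛(45√2 + 3√(3(502√2 + 945)) + 145) − 5/3 − 2(3√2 + 1) / (3·∛(45√2 + 3√(3(502√2 + 945)) + 145)). -/
set_option maxHeartbeats 1000000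
section FugalProof

lemma f2_eq (z : ℝ) (hz : |z| < 1) : fugalOp (fun _ => (1:ℝ)) z = (1 + z^2)/2 := by
  obtain ⟨hz1, hz2⟩ := abs_lt.mp hz
  have hneA : Set.Nonempty {z' : ℝ | |z'| < 1 ∧ z ≤ z'} := ⟨z, hz, le_refl z⟩
  have hneB : Set.Nonempty {z' : ℝ | |z'| < 1 ∧ z' ≤ z} := ⟨z, hz, le_refl z⟩
  unfold fugalOp
  apply le_antisymm
  · apply le_of_forall_pos_le_add
    intro ε hε
    set d : ℝ := min ε 1 with hd
    have hd0 : 0 < d := lt_min hε one_pos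
    have hd1 : d ≤ 1 := min_le_right _ _
    have hdε : d ≤ ε := min_le_left _ _
    refine le_trans (csInf_le ?_ (Set.mem_image_of_mem _ (⟨by linarith, by linarith⟩ :
        -z ∈ Set.Icc (-1:ℝ) 1))) ?_
    · -- BddBelow of outer set
      refine ⟨-2/(1+z), ?_⟩
      rintro w ⟨x, hx, rfl⟩
      refine le_max_of_le_left ?_
      apply le_csInf (hneA.image _)
      rintro v ⟨u, ⟨hu1, hu2⟩, rfl⟩
      obtain ⟨hu1a, hu1b⟩ := abs_lt.mp hu1
      dsimp only
      rw [div_le_div_iff₀ (by linarith : (0:ℝ) < 1 + z) (by linarith : (0:ℝ) < 1 + u)]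
      have hnum : -2 ≤ (1+z) * 1 + x * (u - z) := by
        nlinarith [mul_le_mul_of_nonneg_right hx.1 (by linarith : (0:ℝ) ≤ u - z)]
      nlinarith [mul_nonneg (by linarith : (0:ℝ) ≤ (1+z)*1 + x*(u-z) + 2)
        (by linarith : (0:ℝ) ≤ 1 + z)]
    · dsimp only
      apply max_le
      · set u : ℝ := max z (1 - d/2) with hu
        have hu1 : u < 1 := max_lt hz2 (by linarith)
        have hu2 : -1 < u := lt_of_lt_of_le hz1 (le_max_left _ _)
        have hu3 : z ≤ u := le_max_left _ _
        have hu4 : 1 - d/2 ≤ u := le_max_right _ _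
        have hu6 : (0:ℝ) ≤ u := by linarith
        refine le_trans (csInf_le ?_ ⟨u, ⟨abs_lt.mpr ⟨hu2, hu1⟩, hu3⟩, rfl⟩) ?_
        · refine ⟨0, ?_⟩
          rintro v ⟨w, ⟨hw1, hw2⟩, rfl⟩
          obtain ⟨hw1a, hw1b⟩ := abs_lt.mp hw1
          dsimp only
          apply div_nonneg _ (by linarith)
          nlinarith
        · dsimp only
          rw [div_le_iff₀ (by linarith : (0:ℝ) < 1 + u)]
          have e1 : (1+z)^2 ≤ 4 := by nlinarith
          have e2 : (0:ℝ) ≤ 1 - u := by linarith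
          nlinarith [mul_le_mul_of_nonneg_right e1 e2, mul_nonneg hε.le hu6]
      · set u : ℝ := min z (-1 + d/2) with hu
        have hu1 : -1 < u := lt_min hz1 (by linarith)
        have hu2 : u < 1 := lt_of_le_of_lt (min_le_left _ _) hz2
        have hu3 : u ≤ z := min_le_left _ _
        have hu4 : u ≤ -1 + d/2 := min_le_right _ _
        have hu6 : u ≤ 0 := by linarith
        refine le_trans (csInf_le ?_ ⟨u, ⟨abs_lt.mpr ⟨hu1, hu2⟩, hu3⟩, rfl⟩) ?_
        · refine ⟨0, ?_⟩
          rintro v ⟨w, ⟨hw1, hw2⟩, rfl⟩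
          obtain ⟨hw1a, hw1b⟩ := abs_lt.mp hw1
          dsimp only
          apply div_nonneg _ (by linarith)
          nlinarith
        · dsimp only
          rw [div_le_iff₀ (by linarith : (0:ℝ) < 1 - u)]
          have e1 : (1-z)^2 ≤ 4 := by nlinarith
          have e2 : (0:ℝ) ≤ 1 + u := by linarith
          nlinarith [mul_le_mul_of_nonneg_right e1 e2, mul_nonneg hε.le (by linarith : (0:ℝ) ≤ -u)]
  · apply le_csInf ((Set.nonempty_Icc.mpr (by norm_num : (-1:ℝ) ≤ 1)).image _)
    rintro w ⟨x, hx, rfl⟩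
    dsimp only
    rcases le_total x (-z) with h | h
    · refine le_max_of_le_right ?_
      apply le_csInf (hneB.image _)
      rintro v ⟨u, ⟨hu1, hu2⟩, rfl⟩
      obtain ⟨hu1a, hu1b⟩ := abs_lt.mp hu1
      dsimp only
      rw [le_div_iff₀ (by linarith : (0:ℝ) < 1 - u)]
      nlinarith [mul_nonneg (by linarith : (0:ℝ) ≤ -z - x) (by linarith : (0:ℝ) ≤ z - u),
        mul_nonneg (sq_nonneg (1-z)) (by linarith : (0:ℝ) ≤ 1 + u)]
    · refine le_max_of_le_left ?_
      apply le_csInf (hneA.image _)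
      rintro v ⟨u, ⟨hu1, hu2⟩, rfl⟩
      obtain ⟨hu1a, hu1b⟩ := abs_lt.mp hu1
      dsimp only
      rw [le_div_iff₀ (by linarith : (0:ℝ) < 1 + u)]
      nlinarith [mul_nonneg (by linarith : (0:ℝ) ≤ x + z) (by linarith : (0:ℝ) ≤ u - z),
        mul_nonneg (sq_nonneg (1+z)) (by linarith : (0:ℝ) ≤ 1 - u)]


lemma fugal_congr {f g : ℝ → ℝ} (h : ∀ s, |s| < 1 → f s = g s) (z : ℝ) :
    fugalOp f z = fugalOp g z := by
  unfold fugalOp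
  congr 1
  apply Set.image_congr
  intro x _
  have h1 : ((fun z' : ℝ => ((1 + z) * f z' + x * (z' - z)) / (1 + z')) ''
      {z' : ℝ | |z'| < 1 ∧ z ≤ z'}) = ((fun z' : ℝ => ((1 + z) * g z' + x * (z' - z)) / (1 + z')) ''
      {z' : ℝ | |z'| < 1 ∧ z ≤ z'}) := by
    apply Set.image_congr
    rintro u ⟨hu1, _⟩
    rw [h u hu1]
  have h2 : ((fun z' : ℝ => ((1 - z) * f z' + x * (z' - z)) / (1 - z')) ''
      {z' : ℝ | |z'| < 1 ∧ z' ≤ z}) = ((fun z' : ℝ => ((1 - z) * g z' + x * (z' - z)) / (1 - z')) ''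
      {z' : ℝ | |z'| < 1 ∧ z' ≤ z}) := by
    apply Set.image_congr
    rintro u ⟨hu1, _⟩
    rw [h u hu1]
  rw [h1, h2]

lemma fugal_neg (f : ℝ → ℝ) (z : ℝ) :
    fugalOp f (-z) = fugalOp (fun s => f (-s)) z := by
  unfold fugalOp
  congr 1
  ext w
  constructor
  · rintro ⟨x, hx, rfl⟩
    refine ⟨-x, ⟨by linarith [hx.2], by linarith [hx.1]⟩, ?_⟩
    dsimp only
    rw [max_comm]
    congr 1
    · congr 1
      ext v
      constructor
      · rintro ⟨u, ⟨h1, h2⟩, rfl⟩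
        exact ⟨-u, ⟨by rwa [abs_neg], by linarith⟩, by simp only [neg_neg]; ring⟩
      · rintro ⟨u, ⟨h1, h2⟩, rfl⟩
        exact ⟨-u, ⟨by rwa [abs_neg], by linarith⟩, by simp only [neg_neg]; ring⟩
    · congr 1
      ext v
      constructor
      · rintro ⟨u, ⟨h1, h2⟩, rfl⟩
        exact ⟨-u, ⟨by rwa [abs_neg], by linarith⟩, by simp only [neg_neg]; ring⟩
      · rintro ⟨u, ⟨h1, h2⟩, rfl⟩
        exact ⟨-u, ⟨by rwa [abs_neg], by linarith⟩, by simp only [neg_neg]; ring⟩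
  · rintro ⟨x, hx, rfl⟩
    refine ⟨-x, ⟨by linarith [hx.2], by linarith [hx.1]⟩, ?_⟩
    dsimp only
    rw [max_comm]
    congr 1
    · congr 1
      ext v
      constructor
      · rintro ⟨u, ⟨h1, h2⟩, rfl⟩
        exact ⟨-u, ⟨by rwa [abs_neg], by linarith⟩, by simp only [neg_neg]; ring⟩
      · rintro ⟨u, ⟨h1, h2⟩, rfl⟩
        exact ⟨-u, ⟨by rwa [abs_neg], by linarith⟩, by simp only [neg_neg]; ring⟩
    · congr 1
      ext v
      constructor
      · rintro ⟨u, ⟨h1, h2⟩, rfl⟩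
        exact ⟨-u, ⟨by rwa [abs_neg], by linarith⟩, by simp only [neg_neg]; ring⟩
      · rintro ⟨u, ⟨h1, h2⟩, rfl⟩
        exact ⟨-u, ⟨by rwa [abs_neg], by linarith⟩, by simp only [neg_neg]; ring⟩

section Certs
variable (r y : ℝ)

/-- numeric atoms -/
lemma atoms (hr1 : 1.4142135 ≤ r) (hr2 : r ≤ 1.4142136)
    (hy1 : 0.36296 ≤ y) (hy2 : y ≤ 0.36299) :
    (0.131739 ≤ y^2 ∧ y^2 ≤ 0.131762) ∧ (0.513302 ≤ y*r ∧ y*r ≤ 0.513346) ∧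
      (0.186308 ≤ y^2*r ∧ y^2*r ≤ 0.186340) := by
  have h1 : 0.131739 ≤ y^2 := by nlinarith [mul_le_mul hy1 hy1 (by norm_num) (by linarith)]
  have h2 : y^2 ≤ 0.131762 := by nlinarith [mul_le_mul hy2 hy2 (by linarith) (by norm_num)]
  have h3 : 0.513302 ≤ y*r := by nlinarith [mul_le_mul hy1 hr1 (by norm_num) (by linarith)]
  have h4 : y*r ≤ 0.513346 := by nlinarith [mul_le_mul hy2 hr2 (by linarith) (by norm_num)]
  have h5 : 0.186308 ≤ y^2*r := by nlinarith [mul_le_mul h1 hr1 (by norm_num) (by nlinarith)]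
  have h6 : y^2*r ≤ 0.186340 := by nlinarith [mul_le_mul h2 hr2 (by linarith) (by norm_num)]
  exact ⟨⟨h1, h2⟩, ⟨h3, h4⟩, ⟨h5, h6⟩⟩

lemma Vpos (hr1 : 1.4142135 ≤ r) (hr2 : r ≤ 1.4142136)
    (hy1 : 0.36296 ≤ y) (hy2 : y ≤ 0.36299) (t : ℝ) (ht0 : 0 ≤ t) (ht1 : t ≤ 1/2) :
    0 ≤ ((-113/73)*y^2*r + (-331/73)*y^2 + (-237/73)*y*r + (-941/73)*y + (60/73)*r + (460/73)) + ((-187/73)*y^2*r + (-1166/73)*y^2 + (-482/73)*y*r + (-3014/73)*y + (25/73)*r + (1530/73))*t + ((-46/73)*y^2*r + (-1399/73)*y^2 + (-320/73)*y*r + (-3232/73)*y + (-150/73)*r + (1624/73))*t^2 + ((26/73)*y^2*r + (-628/73)*y^2 + (-54/73)*y*r + (-1144/73)*y + (-112/73)*r + (650/73))*t^3 + (-y^2 + 1)*t^4 := by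
  obtain ⟨⟨h2a, h2b⟩, ⟨h3a, h3b⟩, ⟨h4a, h4b⟩⟩ := atoms r y hr1 hr2 hy1 hy2
  have hV0 : (0.2321:ℝ) ≤ ((-113/73)*y^2*r + (-331/73)*y^2 + (-237/73)*y*r + (-941/73)*y + (60/73)*r + (460/73)) := by linarith
  have hV1 : (0.4848:ℝ) ≤ ((-187/73)*y^2*r + (-1166/73)*y^2 + (-482/73)*y*r + (-3014/73)*y + (25/73)*r + (1530/73)) := by linarith
  have hV2 : (-1.6232:ℝ) ≤ ((-46/73)*y^2*r + (-1399/73)*y^2 + (-320/73)*y*r + (-3232/73)*y + (-150/73)*r + (1624/73)) := by linarith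
  have hV3 : (-0.4011:ℝ) ≤ ((26/73)*y^2*r + (-628/73)*y^2 + (-54/73)*y*r + (-1144/73)*y + (-112/73)*r + (650/73)) := by linarith
  have hV4 : (0:ℝ) ≤ (-y^2 + 1) := by nlinarith
  nlinarith [mul_le_mul_of_nonneg_right hV1 ht0, mul_le_mul_of_nonneg_right hV2 (sq_nonneg t),
    mul_le_mul_of_nonneg_right hV3 (pow_nonneg ht0 3),
    mul_le_mul_of_nonneg_right hV4 (pow_nonneg ht0 4),
    mul_nonneg ht0 (by linarith : (0:ℝ) ≤ 1/2 - t),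
    mul_nonneg (mul_nonneg ht0 ht0) (by linarith : (0:ℝ) ≤ 1/2 - t),
    pow_nonneg ht0 3, pow_nonneg ht0 4]

lemma Wfact (hr2 : r^2 = 2) (hcub : y^3 + 5*y^2 + (9+2*r)*y - 5 = 0) (t : ℝ) :
    (t^6*y^2 - t^6 - 2*t^5*y^3 + 2*t^5*y^2 + 2*t^5*y + t^4*y^4 - 6*t^4*y^3 - t^4*y^2 + 2*t^4*y + t^4 + 4*t^3*y^4 - 4*t^3*y^3 - 4*t^3*y^2 - 2*t^3*y + 6*t^2*y^4 + 4*t^2*y^3 - 3*t^2*y^2 - 2*t^2*y + t^2 + 4*t*y^4 + 6*t*y^3 - 2*t*y^2 + y^4 + 2*y^3 - y^2) =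
      -(t - ((-13/146)*y^2*r + (11/73)*y^2 + (-23/73)*y*r + (67/73)*y + (-17/146)*r + (20/73)))^2 * (((-113/73)*y^2*r + (-331/73)*y^2 + (-237/73)*y*r + (-941/73)*y + (60/73)*r + (460/73)) + ((-187/73)*y^2*r + (-1166/73)*y^2 + (-482/73)*y*r + (-3014/73)*y + (25/73)*r + (1530/73))*t + ((-46/73)*y^2*r + (-1399/73)*y^2 + (-320/73)*y*r + (-3232/73)*y + (-150/73)*r + (1624/73))*t^2 + ((26/73)*y^2*r + (-628/73)*y^2 + (-54/73)*y*r + (-1144/73)*y + (-112/73)*r + (650/73))*t^3 + (-y^2 + 1)*t^4) := by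
  linear_combination (((-13/73)*t^5*y*r + (22/73)*t^5*y + (19/73)*t^5*r + (-122/73)*t^5 + (143/5329)*t^4*y^3*r + (-411/10658)*t^4*y^3 + (662/5329)*t^4*y^2*r + (-2089/10658)*t^4*y^2 + (-9536/5329)*t^4*y*r + (40637/10658)*t^4*y + (-848/5329)*t^4*r + (-37847/10658)*t^4 + (95147/389017)*t^3*y^3*r + (-136490/389017)*t^3*y^3 + (8156/5329)*t^3*y^2*r + (-12466/5329)*t^3*y^2 + (-1089004/389017)*t^3*y*r + (2975289/389017)*t^3*y + (-460925/389017)*t^3*r + (-693815/389017)*t^3 + (190604/389017)*t^2*y^3*r + (-548677/778034)*t^2*y^3 + (17459/5329)*t^2*y^2*r + (-54055/10658)*t^2*y^2 + (-169636/389017)*t^2*y*r + (1624324/389017)*t^2*y + (-302327/389017)*t^2*r + (115785/389017)*t^2 + (256619/778034)*t*y^3*r + (-186131/389017)*t*y^3 + (24891/10658)*t*y^2*r + (-19888/5329)*t*y^2 + (868135/778034)*t*y*r + (-234756/389017)*t*y + (44371/778034)*t*r + (75639/389017)*t + (48223/778034)*y^3*r + (-71405/778034)*y^3 + (2561/5329)*y^2*r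 + (-4407/5329)*y^2 + (274949/778034)*y*r + (-509059/778034)*y + (24746/389017)*r + (-41934/389017))) * hcub + (((26/73)*t^5*y^2 + (-38/73)*t^5*y + (-169/21316)*t^4*y^6 + (-299/5329)*t^4*y^5 + (-2181/21316)*t^4*y^4 + (-922/5329)*t^4*y^3 + (64565/21316)*t^4*y^2 + (-3983/5329)*t^4*y + (-7327/21316)*t^4 + (2197/778034)*t^3*y^6*r + (-30251/389017)*t^3*y^6 + (10985/778034)*t^3*y^5*r + (-264186/389017)*t^3*y^5 + (-4251/389017)*t^3*y^4*r + (-1903055/778034)*t^3*y^4 + (-57855/389017)*t^3*y^3*r + (-2140454/389017)*t^3*y^3 + (-181719/778034)*t^3*y^2*r + (1324604/389017)*t^3*y^2 + (-95387/778034)*t^3*y*r + (441494/389017)*t^3*y + (-8092/389017)*t^3*r + (-202215/778034)*t^3 + (-3887/778034)*t^2*y^6*r + (-210119/1556068)*t^2*y^6 + (-27274/389017)*t^2*y^5*r + (-445751/389017)*t^2*y^5 + (-262869/778034)*t^2*y^4*r + (-3453323/778034)*t^2*y^4 + (-267476/389017)*t^2*y^3*r + (-4332131/389017)*t^2*y^3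 + (-448737/778034)*t^2*y^2*r + (-2439991/1556068)*t^2*y^2 + (-81770/389017)*t^2*y*r + (909564/389017)*t^2*y + (-21675/778034)*t^2*r + (199359/389017)*t^2 + (-31603/1556068)*t*y^6*r + (-45045/778034)*t*y^6 + (-152555/778034)*t*y^5*r + (-299101/778034)*t*y^5 + (-1050593/1556068)*t*y^4*r + (-1251989/778034)*t*y^4 + (-373881/389017)*t*y^3*r + (-2295713/389017)*t*y^3 + (-743941/1556068)*t*y^2*r + (-2127527/778034)*t*y^2 + (-50099/778034)*t*y*r + (711731/778034)*t*y + (7225/1556068)*t*r + (353005/778034)*t + (-19097/1556068)*y^6*r + (8697/1556068)*y^6 + (-175201/1556068)*y^5*r + (203063/1556068)*y^5 + (-281183/778034)*y^4*r + (389449/778034)*y^4 + (-355609/778034)*y^3*r + (37727/778034)*y^3 + (-249845/1556068)*y^2*r + (-231847/1556068)*y^2 + (25347/1556068)*y*r + (77683/1556068)*y + (4335/389017)*r + (12835/389017))) * hr2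

lemma QAid (hr2 : r^2 = 2) (hcub : y^3 + 5*y^2 + (9+2*r)*y - 5 = 0) :
    (1 + ((-13/146)*y^2*r + (11/73)*y^2 + (-23/73)*y*r + (67/73)*y + (-17/146)*r + (20/73))) * ((1 + ((-6/73)*y^2*r + (27/73)*y^2 + (-10/73)*y*r + (118/73)*y + (9/73)*r + (-4/73))^2)/2) + ((-2/73)*y^2*r + (9/73)*y^2 + (21/73)*y*r + (15/73)*y + (3/73)*r + (-50/73)) * (((-6/73)*y^2*r + (27/73)*y^2 + (-10/73)*y*r + (118/73)*y + (9/73)*r + (-4/73)) - ((-13/146)*y^2*r + (11/73)*y^2 + (-23/73)*y*r + (67/73)*y + (-17/146)*r + (20/73)))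
      = y * (1 + ((-13/146)*y^2*r + (11/73)*y^2 + (-23/73)*y*r + (67/73)*y + (-17/146)*r + (20/73))) * (1 + ((-6/73)*y^2*r + (27/73)*y^2 + (-10/73)*y*r + (118/73)*y + (9/73)*r + (-4/73))) := by
  linear_combination (((-17541/1556068)*y^3*r + (13023/778034)*y^3 + (-699/21316)*y^2*r + (321/5329)*y^2 + (49377/1556068)*y*r + (-10645/389017)*y + (76707/1556068)*r + (-140781/778034))) * hcub + (((-117/389017)*y^6*r + (1251/389017)*y^6 + (-804/389017)*y^5*r + (9102/389017)*y^5 + (-1507/389017)*y^4*r + (29334/389017)*y^4 + (167/389017)*y^3*r + (69221/778034)*y^3 + (7363/1556068)*y^2*r + (-21607/389017)*y^2 + (-333/778034)*y*r + (-17290/389017)*y + (-1377/1556068)*r + (7905/389017))) * hr2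

lemma QBid (hr2 : r^2 = 2) (hcub : y^3 + 5*y^2 + (9+2*r)*y - 5 = 0) :
    (1 - ((-13/146)*y^2*r + (11/73)*y^2 + (-23/73)*y*r + (67/73)*y + (-17/146)*r + (20/73))) * ((1 + ((-7/73)*y^2*r + (-5/73)*y^2 + (-36/73)*y*r + (16/73)*y + (-26/73)*r + (44/73))^2)/2) + ((-2/73)*y^2*r + (9/73)*y^2 + (21/73)*y*r + (15/73)*y + (3/73)*r + (-50/73)) * (((-7/73)*y^2*r + (-5/73)*y^2 + (-36/73)*y*r + (16/73)*y + (-26/73)*r + (44/73)) - ((-13/146)*y^2*r + (11/73)*y^2 + (-23/73)*y*r + (67/73)*y + (-17/146)*r + (20/73)))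
      = y * (1 + ((-13/146)*y^2*r + (11/73)*y^2 + (-23/73)*y*r + (67/73)*y + (-17/146)*r + (20/73))) * (1 - ((-7/73)*y^2*r + (-5/73)*y^2 + (-36/73)*y*r + (16/73)*y + (-26/73)*r + (44/73))) := by
  linear_combination (((59/1556068)*y^3*r + (-443/778034)*y^3 + (-123/21316)*y^2*r + (-35/5329)*y^2 + (-90963/1556068)*y*r + (1931/389017)*y + (-36097/1556068)*r + (-45455/778034))) * hcub + (((637/1556068)*y^6*r + (-42/389017)*y^6 + (4403/778034)*y^5*r + (155/389017)*y^5 + (45597/1556068)*y^4*r + (2247/778034)*y^4 + (27316/389017)*y^3*r + (863/778034)*y^3 + (30780/389017)*y^2*r + (11705/389017)*y^2 + (15730/389017)*y*r + (-11843/389017)*y + (2873/389017)*r + (8715/778034))) * hr2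

end Certs


lemma key_lb (r y : ℝ) (hr2 : r^2 = 2) (hr1 : 1.4142135 ≤ r) (hrU : r ≤ 1.4142136)
    (hy1 : 0.36296 ≤ y) (hy2 : y ≤ 0.36299)
    (hcub : y^3 + 5*y^2 + (9+2*r)*y - 5 = 0) (t : ℝ) (ht0 : 0 ≤ t) (ht1 : t < 1) :
    ∃ x0 : ℝ, -1 ≤ x0 ∧ x0 ≤ 1 ∧
      (∀ s : ℝ, |s| < 1 → t ≤ s → y*(1+t)*(1+s) ≤ (1+t)*((1+s^2)/2) + x0*(s-t)) ∧
      (∀ s : ℝ, |s| < 1 → s ≤ t → y*(1+t)*(1-s) ≤ (1-t)*((1+s^2)/2) + x0*(s-t)) := by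
  rcases le_total t (1/2) with hth | hth
  · -- regime A : x0 = t*(y*(1+t)-1)/(y*(1+t)-t^2)
    have hm : (0:ℝ) < y*(1+t) - t^2 := by nlinarith
    have hl1 : y*(1+t) < 1 := by nlinarith
    have hW : (t^6*y^2 - t^6 - 2*t^5*y^3 + 2*t^5*y^2 + 2*t^5*y + t^4*y^4 - 6*t^4*y^3 - t^4*y^2 + 2*t^4*y + t^4 + 4*t^3*y^4 - 4*t^3*y^3 - 4*t^3*y^2 - 2*t^3*y + 6*t^2*y^4 + 4*t^2*y^3 - 3*t^2*y^2 - 2*t^2*y + t^2 + 4*t*y^4 + 6*t*y^3 - 2*t*y^2 + y^4 + 2*y^3 - y^2) ≤ 0 := by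
      have hfact := Wfact r y hr2 hcub t
      have hV := Vpos r y hr1 hrU hy1 hy2 t ht0 hth
      rw [hfact]
      have := mul_nonneg (sq_nonneg (t - ((-13/146)*y^2*r + (11/73)*y^2 + (-23/73)*y*r + (67/73)*y + (-17/146)*r + (20/73)))) hV
      linarith
    refine ⟨t*(y*(1+t)-1)/(y*(1+t)-t^2), ?_, ?_, ?_, ?_⟩
    · rw [le_div_iff₀ hm]
      nlinarith
    · apply le_trans (div_nonpos_of_nonpos_of_nonneg ?_ hm.le) zero_le_one
      nlinarith
    · intro s _ hts
      rw [← sub_nonneg]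
      have hexp : (1+t)*((1+s^2)/2) + (t*(y*(1+t)-1)/(y*(1+t)-t^2))*(s-t) - y*(1+t)*(1+s)
          = ((1+t)*((1+s^2)/2)*(y*(1+t)-t^2) + (t*(y*(1+t)-1))*(s-t)
              - y*(1+t)*(1+s)*(y*(1+t)-t^2))/(y*(1+t)-t^2) := by
        rw [eq_div_iff hm.ne']
        have hq : t*(y*(1+t)-1)/(y*(1+t)-t^2)*(y*(1+t)-t^2) = t*(y*(1+t)-1) :=
          div_mul_cancel₀ _ hm.ne'
        linear_combination (s-t)*hq
      rw [hexp]
      apply div_nonneg _ hm.le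
      have hiden : 2*(1+t)*(y*(1+t)-t^2) * ((1+t)*((1+s^2)/2)*(y*(1+t)-t^2)
            + (t*(y*(1+t)-1))*(s-t) - y*(1+t)*(1+s)*(y*(1+t)-t^2))
          = ((1+t)*(y*(1+t)-t^2)*s + t*(y*(1+t)-1) - y*(1+t)*(y*(1+t)-t^2))^2 - ((t^6*y^2 - t^6 - 2*t^5*y^3 + 2*t^5*y^2 + 2*t^5*y + t^4*y^4 - 6*t^4*y^3 - t^4*y^2 + 2*t^4*y + t^4 + 4*t^3*y^4 - 4*t^3*y^3 - 4*t^3*y^2 - 2*t^3*y + 6*t^2*y^4 + 4*t^2*y^3 - 3*t^2*y^2 - 2*t^2*y + t^2 + 4*t*y^4 + 6*t*y^3 - 2*t*y^2 + y^4 + 2*y^3 - y^2)) := by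
        ring
      nlinarith [sq_nonneg ((1+t)*(y*(1+t)-t^2)*s + t*(y*(1+t)-1) - y*(1+t)*(y*(1+t)-t^2)),
        mul_pos (by linarith : (0:ℝ) < 2*(1+t)) hm]
    · intro s _ hts
      rw [← sub_nonneg]
      have hexp : (1-t)*((1+s^2)/2) + (t*(y*(1+t)-1)/(y*(1+t)-t^2))*(s-t) - y*(1+t)*(1-s)
          = ((1-t)*((1+s^2)/2)*(y*(1+t)-t^2) + (t*(y*(1+t)-1))*(s-t)
              - y*(1+t)*(1-s)*(y*(1+t)-t^2))/(y*(1+t)-t^2) := by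
        field_simp
      rw [hexp]
      apply div_nonneg _ hm.le
      have hiden : 2*(1-t)*(y*(1+t)-t^2) * ((1-t)*((1+s^2)/2)*(y*(1+t)-t^2)
            + (t*(y*(1+t)-1))*(s-t) - y*(1+t)*(1-s)*(y*(1+t)-t^2))
          = ((1-t)*(y*(1+t)-t^2)*s + t*(y*(1+t)-1) + y*(1+t)*(y*(1+t)-t^2))^2 - ((t^6*y^2 - t^6 - 2*t^5*y^3 + 2*t^5*y^2 + 2*t^5*y + t^4*y^4 - 6*t^4*y^3 - t^4*y^2 + 2*t^4*y + t^4 + 4*t^3*y^4 - 4*t^3*y^3 - 4*t^3*y^2 - 2*t^3*y + 6*t^2*y^4 + 4*t^2*y^3 - 3*t^2*y^2 - 2*t^2*y + t^2 + 4*t*y^4 + 6*t*y^3 - 2*t*y^2 + y^4 + 2*y^3 - y^2)) := by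
        ring
      nlinarith [sq_nonneg ((1-t)*(y*(1+t)-t^2)*s + t*(y*(1+t)-1) + y*(1+t)*(y*(1+t)-t^2)),
        mul_pos (by linarith : (0:ℝ) < 2*(1-t)) hm]
  · -- regime B : x0 = -(y*(1+t) + t*(1-t))
    have hP : 3*t^4 - 6*t^3*y - 2*t^3 + 4*t^2*y^2 - 2*t^2*y - 2*t^2 + 8*t*y^2 + 6*t*y - 2*t
        + 4*y^2 + 2*y - 1 ≤ 0 := by
      nlinarith [mul_nonneg (by linarith : (0:ℝ) ≤ t - 1/2) (by linarith : (0:ℝ) ≤ 1 - t),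
        sq_nonneg (t - 1/2), sq_nonneg (1 - t), sq_nonneg (y - 0.363),
        mul_nonneg (mul_nonneg (by linarith : (0:ℝ) ≤ t - 1/2) (by linarith : (0:ℝ) ≤ 1 - t)) ht0,
        mul_nonneg (mul_nonneg (by linarith : (0:ℝ) ≤ t - 1/2) (by linarith : (0:ℝ) ≤ t - 1/2)) ht0]
    have hB : (0:ℝ) ≤ 1 + t^2 - 2*y*(1+t) := by nlinarith [sq_nonneg (t - y)]
    refine ⟨-(y*(1+t) + t*(1-t)), ?_, ?_, ?_, ?_⟩
    · nlinarith [sq_nonneg (2*t - 1 - y)]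
    · nlinarith
    · intro s _ hts
      rw [← sub_nonneg]
      have hiden : 2*(1+t) * ((1+t)*((1+s^2)/2) + (-(y*(1+t) + t*(1-t)))*(s-t) - y*(1+t)*(1+s))
          = ((1+t)*s + (-(y*(1+t) + t*(1-t))) - y*(1+t))^2
            - (3*t^4 - 6*t^3*y - 2*t^3 + 4*t^2*y^2 - 2*t^2*y - 2*t^2 + 8*t*y^2 + 6*t*y - 2*t
              + 4*y^2 + 2*y - 1) := by
        ring
      nlinarith [sq_nonneg ((1+t)*s + (-(y*(1+t) + t*(1-t))) - y*(1+t))]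
    · intro s _ hts
      rw [← sub_nonneg]
      have hiden : 2*(1-t) * ((1-t)*((1+s^2)/2) + (-(y*(1+t) + t*(1-t)))*(s-t) - y*(1+t)*(1-s))
          = ((1-t)*s + (-(y*(1+t) + t*(1-t))) + y*(1+t))^2
            + (1-t)^2*(1 + t^2 - 2*y*(1+t)) := by
        ring
      nlinarith [sq_nonneg ((1-t)*s + (-(y*(1+t) + t*(1-t))) + y*(1+t)),
        mul_nonneg (sq_nonneg (1-t)) hB]


lemma fugal_lb_gen (f : ℝ → ℝ) (z c : ℝ) (hz : |z| < 1)
    (h : ∀ x : ℝ, -1 ≤ x → x ≤ 1 →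
      (∀ s : ℝ, |s| < 1 → z ≤ s → c ≤ ((1+z)*f s + x*(s-z))/(1+s)) ∨
      (∀ s : ℝ, |s| < 1 → s ≤ z → c ≤ ((1-z)*f s + x*(s-z))/(1-s))) :
    c ≤ fugalOp f z := by
  unfold fugalOp
  apply le_csInf ((Set.nonempty_Icc.mpr (by norm_num : (-1:ℝ) ≤ 1)).image _)
  rintro w ⟨x, hx, rfl⟩
  dsimp only
  rcases h x hx.1 hx.2 with hh | hh
  · refine le_max_of_le_left ?_
    apply le_csInf (Set.Nonempty.image _ (⟨z, hz, le_refl z⟩ : Set.Nonempty {z' : ℝ | |z'| < 1 ∧ z ≤ z'}))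
    rintro v ⟨u, ⟨hu1, hu2⟩, rfl⟩
    exact hh u hu1 hu2
  · refine le_max_of_le_right ?_
    apply le_csInf (Set.Nonempty.image _ (⟨z, hz, le_refl z⟩ : Set.Nonempty {z' : ℝ | |z'| < 1 ∧ z' ≤ z}))
    rintro v ⟨u, ⟨hu1, hu2⟩, rfl⟩
    exact hh u hu1 hu2

lemma fugal_ub_gen (f : ℝ → ℝ) (z x c B sA sB : ℝ) (hz : |z| < 1)
    (hx1 : -1 ≤ x) (hx2 : x ≤ 1)
    (hlowA : ∀ x' s : ℝ, -1 ≤ x' → x' ≤ 1 → |s| < 1 → z ≤ s →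
      B ≤ ((1+z)*f s + x'*(s-z))/(1+s))
    (hlowB : ∀ x' s : ℝ, -1 ≤ x' → x' ≤ 1 → |s| < 1 → s ≤ z →
      B ≤ ((1-z)*f s + x'*(s-z))/(1-s))
    (hsA : |sA| < 1 ∧ z ≤ sA) (hsB : |sB| < 1 ∧ sB ≤ z)
    (hvA : ((1+z)*f sA + x*(sA-z))/(1+sA) ≤ c)
    (hvB : ((1-z)*f sB + x*(sB-z))/(1-sB) ≤ c) :
    fugalOp f z ≤ c := by
  unfold fugalOp
  refine le_trans (csInf_le ?_ (Set.mem_image_of_mem _ (⟨hx1, hx2⟩ : x ∈ Set.Icc (-1:ℝ) 1))) ?_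
  · refine ⟨B, ?_⟩
    rintro w ⟨x', hx', rfl⟩
    refine le_max_of_le_left ?_
    apply le_csInf (Set.Nonempty.image _ (⟨z, hz, le_refl z⟩ : Set.Nonempty {z' : ℝ | |z'| < 1 ∧ z ≤ z'}))
    rintro v ⟨u, ⟨hu1, hu2⟩, rfl⟩
    exact hlowA x' u hx'.1 hx'.2 hu1 hu2
  · apply max_le
    · refine le_trans (csInf_le ⟨B, ?_⟩ ⟨sA, hsA, rfl⟩) hvA
      rintro v ⟨u, ⟨hu1, hu2⟩, rfl⟩
      exact hlowA x u hx1 hx2 hu1 hu2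
    · refine le_trans (csInf_le ⟨B, ?_⟩ ⟨sB, hsB, rfl⟩) hvB
      rintro v ⟨u, ⟨hu1, hu2⟩, rfl⟩
      exact hlowB x u hx1 hx2 hu1 hu2

lemma f3_even (t : ℝ) :
    fugalOp (fugalOp (fun _ => (1:ℝ))) (-t) = fugalOp (fugalOp (fun _ => (1:ℝ))) t := by
  rw [fugal_neg]
  apply fugal_congr
  intro s hs
  have hs' : |(-s)| < 1 := by rwa [abs_neg]
  rw [f2_eq (-s) hs', f2_eq s hs]
  ring

lemma f3_lb (r y : ℝ) (hr2 : r^2 = 2) (hr1 : 1.4142135 ≤ r) (hrU : r ≤ 1.4142136)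
    (hy1 : 0.36296 ≤ y) (hy2 : y ≤ 0.36299)
    (hcub : y^3 + 5*y^2 + (9+2*r)*y - 5 = 0) (t : ℝ) (ht0 : 0 ≤ t) (ht1 : t < 1) :
    y*(1+t) ≤ fugalOp (fugalOp (fun _ => (1:ℝ))) t := by
  obtain ⟨x0, hx0a, hx0b, hQA, hQB⟩ := key_lb r y hr2 hr1 hrU hy1 hy2 hcub t ht0 ht1
  apply fugal_lb_gen _ _ _ (by rw [abs_lt]; constructor <;> linarith)
  intro x hx1 hx2
  rcases le_total x x0 with h | h
  · right
    intro s hs1 hs2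
    obtain ⟨hs1a, hs1b⟩ := abs_lt.mp hs1
    rw [f2_eq s hs1, le_div_iff₀ (by linarith : (0:ℝ) < 1 - s)]
    nlinarith [hQB s hs1 hs2, mul_nonneg (by linarith : (0:ℝ) ≤ x0 - x)
      (by linarith : (0:ℝ) ≤ t - s)]
  · left
    intro s hs1 hs2
    obtain ⟨hs1a, hs1b⟩ := abs_lt.mp hs1
    rw [f2_eq s hs1, le_div_iff₀ (by linarith : (0:ℝ) < 1 + s)]
    nlinarith [hQA s hs1 hs2, mul_nonneg (by linarith : (0:ℝ) ≤ x - x0)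
      (by linarith : (0:ℝ) ≤ s - t)]


lemma f3_ub_gen (y T X SA SB : ℝ)
    (hT1 : (0.28:ℝ) ≤ T) (hT2 : T ≤ 0.29)
    (hX1 : (-0.4:ℝ) ≤ X) (hX2 : X ≤ 0)
    (hSA1 : (0.6:ℝ) ≤ SA) (hSA2 : SA ≤ 0.7)
    (hSB1 : (-0.2:ℝ) ≤ SB) (hSB2 : SB ≤ 0)
    (hQA : (1+T)*((1+SA^2)/2) + X*(SA-T) = y*(1+T)*(1+SA))
    (hQB : (1-T)*((1+SB^2)/2) + X*(SB-T) = y*(1+T)*(1-SB)) :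
    fugalOp (fugalOp (fun _ => (1:ℝ))) T ≤ y*(1+T) := by
  apply fugal_ub_gen _ _ X _ (-3) SA SB
    (by rw [abs_lt]; constructor <;> linarith) (by linarith) (by linarith)
  · intro x' s hx1' hx2' hs hzs
    obtain ⟨hsa, hsb⟩ := abs_lt.mp hs
    rw [f2_eq s hs, le_div_iff₀ (by linarith : (0:ℝ) < 1 + s)]
    nlinarith [mul_nonneg (by linarith : (0:ℝ) ≤ x' + 1) (by linarith : (0:ℝ) ≤ s - T),
      mul_nonneg (by linarith : (0:ℝ) ≤ 1 + T) (by nlinarith : (0:ℝ) ≤ (1+s^2)/2)]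
  · intro x' s hx1' hx2' hs hzs
    obtain ⟨hsa, hsb⟩ := abs_lt.mp hs
    rw [f2_eq s hs, le_div_iff₀ (by linarith : (0:ℝ) < 1 - s)]
    nlinarith [mul_nonneg (by linarith : (0:ℝ) ≤ 1 - x') (by linarith : (0:ℝ) ≤ T - s),
      mul_nonneg (by linarith : (0:ℝ) ≤ 1 - T) (by nlinarith : (0:ℝ) ≤ (1+s^2)/2)]
  · exact ⟨by rw [abs_lt]; constructor <;> linarith, by linarith⟩
  · exact ⟨by rw [abs_lt]; constructor <;> linarith, by linarith⟩
  · rw [f2_eq _ (by rw [abs_lt]; constructor <;> linarith),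
      div_le_iff₀ (by linarith : (0:ℝ) < 1 + SA)]
    linarith [hQA]
  · rw [f2_eq _ (by rw [abs_lt]; constructor <;> linarith),
      div_le_iff₀ (by linarith : (0:ℝ) < 1 - SB)]
    linarith [hQB]

lemma final_gen (y T : ℝ) (hy0 : (0.3:ℝ) ≤ y) (hy1 : y ≤ 0.4)
    (hT0 : (0:ℝ) ≤ T) (hT1 : T ≤ 0.29)
    (hub : fugalOp (fugalOp (fun _ => (1:ℝ))) T ≤ y*(1+T))
    (hlb : ∀ s : ℝ, 0 ≤ s → s < 1 → y*(1+s) ≤ fugalOp (fugalOp (fun _ => (1:ℝ))) s) :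
    fugalOp (fugalOp (fugalOp (fun _ => (1:ℝ)))) 0 = y := by
  have hlb' : ∀ s : ℝ, |s| < 1 → y*(1+|s|) ≤ fugalOp (fugalOp (fun _ => (1:ℝ))) s := by
    intro s hs
    obtain ⟨hsa, hsb⟩ := abs_lt.mp hs
    rcases le_total 0 s with h | h
    · rw [abs_of_nonneg h]; exact hlb s h hsb
    · rw [abs_of_nonpos h]
      calc y*(1+ -s) ≤ fugalOp (fugalOp (fun _ => (1:ℝ))) (-s) := hlb (-s) (by linarith) (by linarith)
        _ = _ := by
            rw [show s = -(-s) from (neg_neg s).symm]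
            rw [f3_even (-s), neg_neg]
  apply le_antisymm
  · apply fugal_ub_gen _ _ 0 _ (-1) T (-T)
      (by norm_num) (by norm_num) (by norm_num)
    · intro x' s hx1' hx2' hs hzs
      obtain ⟨hsa, hsb⟩ := abs_lt.mp hs
      have h2 := hlb' s hs
      rw [abs_of_nonneg hzs] at h2
      rw [le_div_iff₀ (by linarith : (0:ℝ) < 1 + s)]
      nlinarith [mul_nonneg (by linarith : (0:ℝ) ≤ x' + 1) hzs]
    · intro x' s hx1' hx2' hs hzs
      obtain ⟨hsa, hsb⟩ := abs_lt.mp hs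
      have h2 := hlb' s hs
      rw [abs_of_nonpos hzs] at h2
      rw [le_div_iff₀ (by linarith : (0:ℝ) < 1 - s)]
      nlinarith [mul_nonneg (by linarith : (0:ℝ) ≤ 1 - x') (by linarith : (0:ℝ) ≤ -s)]
    · exact ⟨by rw [abs_lt]; constructor <;> linarith, by linarith⟩
    · exact ⟨by rw [abs_lt]; constructor <;> linarith, by linarith⟩
    · rw [div_le_iff₀ (by linarith : (0:ℝ) < 1 + T)]
      nlinarith [hub]
    · have he : fugalOp (fugalOp (fun _ => (1:ℝ))) (-T) = fugalOp (fugalOp (fun _ => (1:ℝ))) T :=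
        f3_even T
      rw [he, div_le_iff₀ (by linarith : (0:ℝ) < 1 - -T)]
      nlinarith [hub]
  · apply fugal_lb_gen _ _ _ (by norm_num)
    intro x hx1 hx2
    rcases le_total 0 x with h | h
    · left
      intro s hs1 hs2
      have h2 := hlb' s hs1
      rw [abs_of_nonneg hs2] at h2
      rw [le_div_iff₀ (by linarith [(abs_lt.mp hs1).2] : (0:ℝ) < 1 + s)]
      nlinarith [mul_nonneg h hs2]
    · right
      intro s hs1 hs2
      have h2 := hlb' s hs1
      rw [abs_of_nonpos hs2] at h2
      rw [le_div_iff₀ (by linarith [(abs_lt.mp hs1).1] : (0:ℝ) < 1 - s)]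
      nlinarith [mul_nonneg (neg_nonneg.mpr h) (neg_nonneg.mpr hs2)]

lemma final_eq (r y : ℝ) (hr2 : r^2 = 2) (hr1 : 1.4142135 ≤ r) (hrU : r ≤ 1.4142136)
    (hy1 : 0.36296 ≤ y) (hy2 : y ≤ 0.36299)
    (hcub : y^3 + 5*y^2 + (9+2*r)*y - 5 = 0) :
    fugalOp (fugalOp (fugalOp (fun _ => (1:ℝ)))) 0 = y := by
  obtain ⟨⟨h2a, h2b⟩, ⟨h3a, h3b⟩, ⟨h4a, h4b⟩⟩ := atoms r y hr1 hrU hy1 hy2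
  apply final_gen y (((-13/146)*y^2*r + (11/73)*y^2 + (-23/73)*y*r + (67/73)*y + (-17/146)*r + (20/73))) (by linarith) (by linarith) (by linarith) (by linarith)
  · apply f3_ub_gen y _ (((-2/73)*y^2*r + (9/73)*y^2 + (21/73)*y*r + (15/73)*y + (3/73)*r + (-50/73))) (((-6/73)*y^2*r + (27/73)*y^2 + (-10/73)*y*r + (118/73)*y + (9/73)*r + (-4/73))) (((-7/73)*y^2*r + (-5/73)*y^2 + (-36/73)*y*r + (16/73)*y + (-26/73)*r + (44/73))) (by linarith) (by linarith) (by linarith)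
      (by linarith) (by linarith) (by linarith) (by linarith) (by linarith)
      (QAid r y hr2 hcub) (QBid r y hr2 hcub)
  · intro s hs0 hs1
    exact f3_lb r y hr2 hr1 hrU hy1 hy2 hcub s hs0 hs1

/-- Let `f₁ ≡ 1` on `[−1,1]`, `f₂ = 𝒯f₁`, `f₃ = 𝒯f₂`, `f₄ = 𝒯f₃` (so `f₄(0)` is the
normalized minimax regret `u₄(0)` of the fugal game with four blocks and no initial
bias).  Then `f₄(0) = (1/3)·∛C − 5/3 − 2(3√2 + 1)/(3·∛C)` where
`C = 45√2 + 3√(3(502√2 + 945)) + 145`. -/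
theorem stmt18 :
    fugalOp (fugalOp (fugalOp (fun _ => (1 : ℝ)))) 0 =
      1 / 3 * (45 * Real.sqrt 2 + 3 * Real.sqrt (3 * (502 * Real.sqrt 2 + 945)) + 145)
          ^ ((1 : ℝ) / 3)
        - 5 / 3
        - 2 * (3 * Real.sqrt 2 + 1) /
            (3 * (45 * Real.sqrt 2 + 3 * Real.sqrt (3 * (502 * Real.sqrt 2 + 945)) + 145)
              ^ ((1 : ℝ) / 3)) := by
  set r : ℝ := Real.sqrt 2 with hrdef
  have hr0 : 0 ≤ r := Real.sqrt_nonneg 2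
  have hr2 : r^2 = 2 := Real.sq_sqrt (by norm_num)
  have hr1 : 1.4142135 ≤ r := by nlinarith
  have hrU : r ≤ 1.4142136 := by nlinarith
  set b : ℝ := Real.sqrt (3 * (502 * r + 945)) with hbdef
  have hb0 : 0 ≤ b := Real.sqrt_nonneg _
  have hbsq : b^2 = 1506*r + 2835 := by
    rw [hbdef, Real.sq_sqrt (by nlinarith)]; ring
  have hb1 : 70.461370 ≤ b := by nlinarith
  have hb2 : b ≤ 70.461385 := by nlinarith
  have hCpos : (0:ℝ) < 45*r + 3*b + 145 := by nlinarith
  set c : ℝ := (45 * r + 3 * b + 145) ^ ((1:ℝ)/3) with hcdef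
  have hcpos : 0 < c := Real.rpow_pos_of_pos hCpos _
  have hc3 : c^3 = 45*r + 3*b + 145 := by
    rw [hcdef, ← Real.rpow_natCast ((45*r + 3*b + 145) ^ ((1:ℝ)/3)) 3,
      ← Real.rpow_mul hCpos.le]
    norm_num
  have hc1 : 7.48900 ≤ c := by
    nlinarith [hc3, hcpos, sq_nonneg (c - 7.489), sq_nonneg c]
  have hc2 : c ≤ 7.48903 := by
    nlinarith [hc3, hcpos, sq_nonneg (c - 7.489), sq_nonneg c]
  set y : ℝ := 1 / 3 * c - 5 / 3 - 2 * (3 * r + 1) / (3 * c) with hydef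
  have hy' : 3*c*y = c^2 - 5*c - (6*r + 2) := by
    rw [hydef]; field_simp; ring
  have hy1 : 0.36296 ≤ y := by
    have h3 : 3*c*0.36296 ≤ 3*c*y := by
      rw [hy']
      nlinarith [mul_nonneg (by linarith : (0:ℝ) ≤ c - 7.48900)
        (by linarith : (0:ℝ) ≤ c - 6.08888)]
    exact le_of_mul_le_mul_left h3 (by linarith)
  have hy2 : y ≤ 0.36299 := by
    have h3 : 3*c*y ≤ 3*c*0.36299 := by
      rw [hy']
      nlinarith [mul_nonneg (by linarith : (0:ℝ) ≤ 7.48903 - c)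
        (by linarith : (0:ℝ) ≤ c - 6.08897)]
    exact le_of_mul_le_mul_left h3 (by linarith)
  have hC6 : c^6 - (290+90*r)*c^3 - (504*r+440) = 0 := by
    linear_combination (c^3 + (45*r + 3*b + 145) - (290+90*r))*hc3 + 9*hbsq - 2025*hr2
  have h27 : 27*c^3*(y^3 + 5*y^2 + (9+2*r)*y - 5) = 0 := by
    linear_combination (9*y^2*c^2 - 18*y*r*c + 3*y*c^3 + 30*y*c^2 - 6*y*c + 36*r^2 + 6*r*c^2
      - 30*r*c + 24*r + c^4 + 5*c^3 + 27*c^2 - 10*c + 4)*hy' + hC6 + (-216*r - 216)*hr2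
  have hcub : y^3 + 5*y^2 + (9+2*r)*y - 5 = 0 := by
    have hne : (27:ℝ)*c^3 ≠ 0 := by positivity
    exact (mul_eq_zero.mp h27).resolve_left hne
  exact final_eq r y hr2 hr1 hrU hy1 hy2 hcub

end FugalProof
end
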